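/- arXiv:1202.5574 — 12 statements merged into one kernel-verified Lean document; each statement's English description precedes it below -/
import Mathlib

section
/- Let σ ≠ 0, β ≠ 0 and let K : [0,∞) → ℝ be measurable with K ∈ L²(0,∞) and β²∫₀^∞ K(s)² ds < 1. If m : [0,∞) → [0,∞) is a continuous function satisfying the linear Volterra integral equation m(t) = σ² + β²∫₀ᵗ K(t−s)² m(s) ds for all t ≥ 0, then lim_{t→∞} m(t) = σ²/(1 − β²∫₀^∞ K(s)² ds). -/
open MeasureTheory Filter Set

set_option maxHeartbeats 1000000 in
/-- Deterministic content of Proposition 4.2: if `m` solves the linear Volterra equation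
`m(t) = σ² + β² ∫₀ᵗ K(t−s)² m(s) ds` with `K ∈ L²(0,∞)` and `β² ∫₀^∞ K² < 1`, then
`m(t) → σ²/(1 − β² ∫₀^∞ K²)` as `t → ∞`. -/
theorem blackScholesLongMemory_msq_limit
    (σ β : ℝ) (hσ : σ ≠ 0) (hβ : β ≠ 0)
    (K : ℝ → ℝ) (hKmeas : Measurable K)
    (hKL2 : IntegrableOn (fun s => K s ^ 2) (Ioi 0))
    (hsmall : β ^ 2 * ∫ s in Ioi (0:ℝ), K s ^ 2 < 1)
    (m : ℝ → ℝ) (hmcont : ContinuousOn m (Ici 0))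
    (hmnonneg : ∀ t ≥ (0:ℝ), 0 ≤ m t)
    (heq : ∀ t ≥ (0:ℝ), m t = σ ^ 2 + β ^ 2 * ∫ s in (0:ℝ)..t, K (t - s) ^ 2 * m s) :
    Tendsto m atTop (nhds (σ ^ 2 / (1 - β ^ 2 * ∫ s in Ioi (0:ℝ), K s ^ 2))) := by
  set I : ℝ := ∫ s in Ioi (0:ℝ), K s ^ 2 with hIdef
  set ρ : ℝ := β ^ 2 * I with hρdef
  set L : ℝ := σ ^ 2 / (1 - ρ) with hLdef
  have hI0 : 0 ≤ I := setIntegral_nonneg measurableSet_Ioi fun s _ => sq_nonneg _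
  have hρ0 : 0 ≤ ρ := mul_nonneg (sq_nonneg _) hI0
  have h1ρ : 0 < 1 - ρ := by linarith [hsmall]
  have hσ2 : 0 < σ ^ 2 := by positivity
  have hL0 : 0 < L := div_pos hσ2 h1ρ
  -- interval integrability of K² on [a,b] ⊆ [0,∞)
  have hK2int : ∀ a b : ℝ, 0 ≤ a → a ≤ b →
      IntervalIntegrable (fun u => K u ^ 2) volume a b := by
    intro a b ha hab
    rw [intervalIntegrable_iff_integrableOn_Ioc_of_le hab]
    exact hKL2.mono_set fun x hx => lt_of_le_of_lt ha hx.1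
  -- ∫₀ᵗ K² ≤ I
  have hJle : ∀ t : ℝ, 0 ≤ t → (∫ u in (0:ℝ)..t, K u ^ 2) ≤ I := by
    intro t ht
    rw [intervalIntegral.integral_of_le ht]
    exact setIntegral_mono_set hKL2
      (Filter.Eventually.of_forall fun x => sq_nonneg _)
      (HasSubset.Subset.eventuallyLE fun x hx => hx.1)
  -- substitution u = t - s
  have hsub : ∀ t : ℝ, (∫ s in (0:ℝ)..t, K (t - s) ^ 2 * m s)
      = ∫ u in (0:ℝ)..t, K u ^ 2 * m (t - u) := by
    intro t
    have h := intervalIntegral.integral_comp_sub_left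
      (a := (0:ℝ)) (b := t) (fun u => K u ^ 2 * m (t - u)) t
    simpa [sub_sub_cancel] using h
  -- integrability of the substituted integrand
  have hIntOn : ∀ t : ℝ, 0 ≤ t → ∀ C : ℝ, (∀ s ∈ Icc (0:ℝ) t, m s ≤ C) →
      IntegrableOn (fun u => K u ^ 2 * m (t - u)) (Ioc (0:ℝ) t) := by
    intro t ht C hC
    have hC0 : 0 ≤ C := le_trans (hmnonneg 0 le_rfl) (hC 0 ⟨le_rfl, ht⟩)
    have hmeas : AEStronglyMeasurable (fun u => K u ^ 2 * m (t - u))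
        (volume.restrict (Ioc (0:ℝ) t)) := by
      have hcont : ContinuousOn (fun u => m (t - u)) (Ioc (0:ℝ) t) := by
        apply hmcont.comp ((continuous_const.sub continuous_id).continuousOn)
        intro u hu
        exact sub_nonneg.2 hu.2
      exact (((hKmeas.pow_const 2).aemeasurable.restrict).mul
        (hcont.aemeasurable measurableSet_Ioc)).aestronglyMeasurable
    have hbdd : IntegrableOn (fun u => C * K u ^ 2) (Ioc (0:ℝ) t) :=
      (hKL2.mono_set fun x hx => hx.1).const_mul C
    refine Integrable.mono' hbdd hmeas ?_
    filter_upwards [ae_restrict_mem measurableSet_Ioc] with u hu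
    have htu : t - u ∈ Icc (0:ℝ) t := ⟨sub_nonneg.2 hu.2, by linarith [hu.1.le]⟩
    have h1 : 0 ≤ m (t - u) := hmnonneg _ htu.1
    have h2 : m (t - u) ≤ C := hC _ htu
    rw [Real.norm_eq_abs, abs_of_nonneg (mul_nonneg (sq_nonneg _) h1)]
    calc K u ^ 2 * m (t - u) ≤ K u ^ 2 * C :=
          mul_le_mul_of_nonneg_left h2 (sq_nonneg _)
      _ = C * K u ^ 2 := mul_comm _ _
  have hIntInterval : ∀ t : ℝ, 0 ≤ t → ∀ C : ℝ, (∀ s ∈ Icc (0:ℝ) t, m s ≤ C) →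
      ∀ a b : ℝ, 0 ≤ a → a ≤ b → b ≤ t →
      IntervalIntegrable (fun u => K u ^ 2 * m (t - u)) volume a b := by
    intro t ht C hC a b ha hab hbt
    rw [intervalIntegrable_iff_integrableOn_Ioc_of_le hab]
    exact (hIntOn t ht C hC).mono_set fun x hx =>
      ⟨lt_of_le_of_lt ha hx.1, le_trans hx.2 hbt⟩
  -- Step 1: m is bounded above by L on [0, ∞)
  have hub : ∀ t : ℝ, 0 ≤ t → m t ≤ L := by
    intro T hT
    obtain ⟨t₀, ht₀mem, ht₀max⟩ :=
      (isCompact_Icc (a := (0:ℝ)) (b := T)).exists_isMaxOn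
        ⟨0, left_mem_Icc.2 hT⟩ (hmcont.mono Icc_subset_Ici_self)
    set M := m t₀ with hMdef
    have hM0 : 0 ≤ M := hmnonneg t₀ ht₀mem.1
    have hbound : ∀ s ∈ Icc (0:ℝ) t₀, m s ≤ M := fun s hs =>
      ht₀max ⟨hs.1, le_trans hs.2 ht₀mem.2⟩
    have hint := hIntInterval t₀ ht₀mem.1 M hbound 0 t₀ le_rfl ht₀mem.1 le_rfl
    have hintK : IntervalIntegrable (fun u => M * K u ^ 2) volume 0 t₀ :=
      (hK2int 0 t₀ le_rfl ht₀mem.1).const_mul M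
    have hmono : (∫ u in (0:ℝ)..t₀, K u ^ 2 * m (t₀ - u))
        ≤ ∫ u in (0:ℝ)..t₀, M * K u ^ 2 := by
      apply intervalIntegral.integral_mono_on ht₀mem.1 hint hintK
      intro u hu
      have htu : t₀ - u ∈ Icc (0:ℝ) t₀ := ⟨sub_nonneg.2 hu.2, by linarith [hu.1]⟩
      calc K u ^ 2 * m (t₀ - u) ≤ K u ^ 2 * M :=
            mul_le_mul_of_nonneg_left (hbound _ htu) (sq_nonneg _)
        _ = M * K u ^ 2 := mul_comm _ _
    have hJ : (∫ u in (0:ℝ)..t₀, M * K u ^ 2) = M * ∫ u in (0:ℝ)..t₀, K u ^ 2 :=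
      intervalIntegral.integral_const_mul M _
    have hMI : (∫ u in (0:ℝ)..t₀, M * K u ^ 2) ≤ M * I := by
      rw [hJ]
      exact mul_le_mul_of_nonneg_left (hJle t₀ ht₀mem.1) hM0
    have hkey : M ≤ σ ^ 2 + ρ * M := by
      have e := heq t₀ ht₀mem.1
      rw [hsub t₀] at e
      have : m t₀ ≤ σ ^ 2 + β ^ 2 * (M * I) := by
        rw [e]
        have hmul := mul_le_mul_of_nonneg_left (le_trans hmono hMI) (sq_nonneg β)
        linarith
      calc M = m t₀ := rfl
        _ ≤ σ ^ 2 + β ^ 2 * (M * I) := this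
        _ = σ ^ 2 + ρ * M := by ring
    have hML : M ≤ L := by
      rw [hLdef, le_div_iff₀ h1ρ]
      nlinarith
    exact le_trans (ht₀max (right_mem_Icc.2 hT)) hML
  -- eventual bounds
  have hev0 : ∀ᶠ t in atTop, 0 ≤ m t :=
    (eventually_ge_atTop (0:ℝ)).mono fun t ht => hmnonneg t ht
  have hevL : ∀ᶠ t in atTop, m t ≤ L :=
    (eventually_ge_atTop (0:ℝ)).mono fun t ht => hub t ht
  have hbdd_le : IsBoundedUnder (· ≤ ·) atTop m := ⟨L, by simpa using hevL⟩
  have hbdd_ge : IsBoundedUnder (· ≥ ·) atTop m := ⟨0, by simpa using hev0⟩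
  have hcob_le : IsCoboundedUnder (· ≤ ·) atTop m := hbdd_ge.isCoboundedUnder_le
  have hcob_ge : IsCoboundedUnder (· ≥ ·) atTop m := hbdd_le.isCoboundedUnder_ge
  -- limsup ≤ L
  have hlimsup : limsup m atTop ≤ L := limsup_le_of_le hcob_le hevL
  -- L ≤ liminf
  have hliminf : L ≤ liminf m atTop := by
    by_contra hcon
    push_neg at hcon
    set ℓ := liminf m atTop with hℓdef
    have hℓ0 : 0 ≤ ℓ := le_liminf_of_le hcob_ge hev0
    have hℓσ : ℓ * (1 - ρ) < σ ^ 2 := by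
      have := (lt_div_iff₀ h1ρ).mp hcon
      linarith
    set δ : ℝ := σ ^ 2 + ρ * ℓ - ℓ with hδdef
    have hδ : 0 < δ := by nlinarith
    have hden : 0 < 2 * (1 + ρ + β ^ 2 * ℓ) := by nlinarith [sq_nonneg β]
    set ε : ℝ := δ / (2 * (1 + ρ + β ^ 2 * ℓ)) with hεdef
    have hε : 0 < ε := div_pos hδ hden
    set c : ℝ := max (ℓ - ε) 0 with hcdef
    have hc0 : 0 ≤ c := le_max_right _ _
    have hcℓ : c ≤ ℓ := max_le (by linarith) hℓ0
    have hcge : ℓ - ε ≤ c := le_max_left _ _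
    have hεsmall : ε * (ρ + β ^ 2 * ℓ) ≤ δ / 2 := by
      rw [hεdef]
      rw [div_mul_eq_mul_div, div_le_div_iff₀ hden (by norm_num : (0:ℝ) < 2)]
      nlinarith [sq_nonneg β]
    have hfinal : ℓ + δ / 2 ≤ σ ^ 2 + (ρ - β ^ 2 * ε) * c := by
      have h1 : ρ * (ℓ - ε) ≤ ρ * c := mul_le_mul_of_nonneg_left hcge hρ0
      have h2 : β ^ 2 * ε * c ≤ β ^ 2 * ε * ℓ :=
        mul_le_mul_of_nonneg_left hcℓ (by positivity)
      nlinarith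
    -- choose A
    have htendJ : Tendsto (fun b => ∫ u in (0:ℝ)..b, K u ^ 2) atTop (nhds I) :=
      intervalIntegral_tendsto_integral_Ioi 0 hKL2 tendsto_id
    have hevJ : ∀ᶠ b in atTop, I - ε ≤ ∫ u in (0:ℝ)..b, K u ^ 2 :=
      htendJ.eventually (eventually_ge_nhds (by linarith))
    obtain ⟨A, hJA, hA0⟩ := ((hevJ.and (eventually_ge_atTop (0:ℝ))).exists)
    -- choose T
    have hevc : ∀ᶠ s in atTop, c ≤ m s := by
      rcases lt_or_ge 0 ℓ with hℓpos | hℓle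
      · have hlt : ℓ - ε < ℓ := by linarith
        filter_upwards [eventually_lt_of_lt_liminf hlt hbdd_ge, hev0] with s h1 h2
        exact max_le h1.le h2
      · have hℓeq : ℓ = 0 := le_antisymm hℓle hℓ0
        filter_upwards [hev0] with s h2
        refine max_le ?_ h2
        rw [hℓeq]; linarith
    obtain ⟨T₀, hT₀⟩ := eventually_atTop.mp hevc
    set T := max T₀ 0 with hTdef
    have hT0 : 0 ≤ T := le_max_right _ _
    have hTc : ∀ s : ℝ, T ≤ s → c ≤ m s := fun s hs =>
      hT₀ s (le_trans (le_max_left _ _) hs)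
    -- eventually m t ≥ ℓ + δ/2
    have hevbig : ∀ᶠ t in atTop, ℓ + δ / 2 ≤ m t := by
      filter_upwards [eventually_ge_atTop (T + A)] with t ht
      have htA : A ≤ t := by linarith
      have ht0 : 0 ≤ t := le_trans hA0 htA
      have hCbd : ∀ s ∈ Icc (0:ℝ) t, m s ≤ L := fun s hs => hub s hs.1
      have hint1 := hIntInterval t ht0 L hCbd 0 A le_rfl hA0 htA
      have hint2 := hIntInterval t ht0 L hCbd A t hA0 htA le_rfl
      have hsplit : (∫ u in (0:ℝ)..A, K u ^ 2 * m (t - u))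
          + (∫ u in A..t, K u ^ 2 * m (t - u))
          = ∫ u in (0:ℝ)..t, K u ^ 2 * m (t - u) :=
        intervalIntegral.integral_add_adjacent_intervals hint1 hint2
      have htail : 0 ≤ ∫ u in A..t, K u ^ 2 * m (t - u) := by
        apply intervalIntegral.integral_nonneg htA
        intro u hu
        exact mul_nonneg (sq_nonneg _) (hmnonneg _ (sub_nonneg.2 hu.2))
      have hhead : c * (∫ u in (0:ℝ)..A, K u ^ 2)
          ≤ ∫ u in (0:ℝ)..A, K u ^ 2 * m (t - u) := by
        rw [← intervalIntegral.integral_const_mul]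
        apply intervalIntegral.integral_mono_on hA0
          ((hK2int 0 A le_rfl hA0).const_mul c) hint1
        intro u hu
        have hTu : T ≤ t - u := by
          have := hu.2; linarith
        calc c * K u ^ 2 = K u ^ 2 * c := mul_comm _ _
          _ ≤ K u ^ 2 * m (t - u) :=
            mul_le_mul_of_nonneg_left (hTc _ hTu) (sq_nonneg _)
      have hcJ : c * (I - ε) ≤ c * (∫ u in (0:ℝ)..A, K u ^ 2) :=
        mul_le_mul_of_nonneg_left hJA hc0
      have hwhole : c * (I - ε) ≤ ∫ u in (0:ℝ)..t, K u ^ 2 * m (t - u) := by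
        rw [← hsplit]
        linarith [le_trans hcJ hhead]
      have e := heq t ht0
      rw [hsub t] at e
      have hmul := mul_le_mul_of_nonneg_left hwhole (sq_nonneg β)
      have hmt : σ ^ 2 + β ^ 2 * (c * (I - ε)) ≤ m t := by
        rw [e]; linarith
      have heqρ : σ ^ 2 + (ρ - β ^ 2 * ε) * c = σ ^ 2 + β ^ 2 * (c * (I - ε)) := by
        rw [hρdef]; ring
      linarith
    have : ℓ + δ / 2 ≤ ℓ := le_liminf_of_le hcob_ge hevbig
    linarith
  exact tendsto_of_le_liminf_of_limsup_le hliminf hlimsup hbdd_le hbdd_ge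
end

section
/- Let β ≠ 0 and K : [0,∞) → ℝ be measurable with α := β²∫₀^∞ K(s)² ds < 1. If r : [0,∞) → [0,∞) is a nonnegative locally integrable function satisfying the resolvent equation r(t) = β² K(t)² + β² ∫₀ᵗ K(t−s)² r(s) ds for almost every t ≥ 0, then r is integrable on (0,∞) and ∫₀^∞ r(s) ds = α/(1 − α). -/
/-!
Put `g = β²K²` and `α = ∫₀^∞ g < 1`, and extend `r` and `g` by zero to `ℝ≥0∞`-valued functions
`R`, `G` on `ℝ`. The resolvent equation becomes `R = G + R ⋆ G` a.e., and Tonelli gives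
`∫ (R ⋆ G) = ∫ R · ∫ G`. As `G` vanishes on `(-∞, 0]`, `(R ⋆ G)(t)` only sees `R` on `(-∞, t]`, so
the truncations of `R` to `(-∞, T)`, whose integrals `I_T` are finite by local integrability,
satisfy `I_T ≤ α + α I_T`, i.e. `I_T ≤ α / (1 - α)`. Hence `∫ R < ∞` by monotone convergence,
and integrating the equation gives `∫ R = α + α ∫ R`.
-/

open MeasureTheory Set
open scoped ENNReal

theorem lintegral_lconvolution {G : Type*} [AddGroup G] {mG : MeasurableSpace G}
    [MeasurableAdd₂ G] [MeasurableNeg G] {μ : Measure G} [SFinite μ] [μ.IsAddLeftInvariant]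
    {f g : G → ℝ≥0∞} (hf : AEMeasurable f μ) (hg : AEMeasurable g μ) :
    ∫⁻ x, (f ⋆ₗ[μ] g) x ∂μ = (∫⁻ x, f x ∂μ) * ∫⁻ x, g x ∂μ := by
  simp only [lconvolution_def]
  rw [lintegral_lintegral_swap (by fun_prop)]
  have hshift (y : G) : ∫⁻ x, f y * g (-y + x) ∂μ = f y * ∫⁻ x, g x ∂μ := by
    rw [lintegral_const_mul'' (f := fun x => g (-y + x)) _ (hg.comp_quasiMeasurePreserving
      (measurePreserving_add_left μ (-y)).quasiMeasurePreserving), lintegral_add_left_eq_self]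
  simp_rw [hshift]
  rw [lintegral_mul_const'' _ hf]

theorem lconvolution_indicator_Iio_of_le {f g : ℝ → ℝ≥0∞} (hg : ∀ x ≤ 0, g x = 0) {t T : ℝ}
    (ht : t ≤ T) : ((Iio T).indicator f ⋆ₗ g) t = (f ⋆ₗ g) t := by
  simp only [lconvolution_def]
  congr 1 with y
  by_cases hy : y < T
  · simp [hy]
  · simp [hy, hg (-y + t) (by linarith [not_lt.1 hy])]

theorem lconvolution_indicator_Ioi_apply (f g : ℝ → ℝ≥0∞) (t : ℝ) :
    ((Ioi 0).indicator f ⋆ₗ (Ioi 0).indicator g) t = ∫⁻ s in Ioo 0 t, f s * g (t - s) := by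
  rw [lconvolution_def, ← lintegral_indicator measurableSet_Ioo]
  congr 1 with s
  by_cases hs : 0 < s <;> by_cases hst : s < t <;> simp [indicator, hs, hst, neg_add_eq_sub]

theorem ENNReal.le_div_one_sub_of_le_add_mul {x a : ℝ≥0∞} (hx : x ≠ ⊤) (h : x ≤ a + x * a) :
    x ≤ a / (1 - a) := by
  rw [ENNReal.le_div_iff_mul_le (by rcases eq_or_ne a 0 with rfl | ha <;> simp [*]) (by simp),
    ENNReal.mul_sub (fun _ _ => hx), mul_one]
  exact tsub_le_iff_left.2 (by rwa [add_comm])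

theorem ENNReal.eq_div_one_sub_of_eq_add_mul {x a : ℝ≥0∞} (hx : x ≠ ⊤) (ha : a < 1)
    (h : x = a + x * a) : x = a / (1 - a) := by
  rw [ENNReal.eq_div_iff (tsub_pos_of_lt ha).ne' (by simp), mul_comm,
    ENNReal.mul_sub (fun _ _ => hx), mul_one]
  exact ENNReal.sub_eq_of_eq_add_rev (ENNReal.mul_ne_top hx (ha.trans ENNReal.one_lt_top).ne)
    (by rwa [add_comm] at h)

theorem lintegral_eq_div_of_ae_eq_add_lconvolution {R G : ℝ → ℝ≥0∞} (hR : AEMeasurable R)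
    (hG : AEMeasurable G) (hG0 : ∀ x ≤ 0, G x = 0) (hG1 : ∫⁻ x, G x < 1)
    (hRloc : ∀ T, ∫⁻ x in Iio T, R x ≠ ⊤)
    -- `ofReal ∘ toReal` sends `⊤` to `0`, matching the junk value `0` of the Bochner integral
    -- in the real equation.
    (heq : ∀ᵐ t, R t = G t + ENNReal.ofReal ((R ⋆ₗ G) t).toReal) :
    ∫⁻ x, R x = (∫⁻ x, G x) / (1 - ∫⁻ x, G x) := by
  set A := ∫⁻ x, G x
  have hA : A ≠ ⊤ := (hG1.trans ENNReal.one_lt_top).ne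
  have htrunc (T : ℝ) : ∫⁻ x in Iio T, R x ≤ A / (1 - A) := by
    refine ENNReal.le_div_one_sub_of_le_add_mul (hRloc T) ?_
    have hle : (Iio T).indicator R ≤ᵐ[volume] G + (Iio T).indicator R ⋆ₗ G := by
      filter_upwards [heq] with t ht
      by_cases htT : t < T
      · rw [indicator_of_mem (mem_Iio.2 htT), Pi.add_apply,
          lconvolution_indicator_Iio_of_le hG0 htT.le, ht]
        gcongr
        exact ENNReal.ofReal_toReal_le
      · simp [htT]
    calc ∫⁻ x in Iio T, R x = ∫⁻ x, (Iio T).indicator R x :=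
          (lintegral_indicator measurableSet_Iio R).symm
      _ ≤ ∫⁻ x, (G + (Iio T).indicator R ⋆ₗ G) x := lintegral_mono_ae hle
      _ = A + (∫⁻ x in Iio T, R x) * A := by
        rw [Pi.add_def, lintegral_add_left' hG,
          lintegral_lconvolution (hR.indicator measurableSet_Iio) hG,
          lintegral_indicator measurableSet_Iio]
  have hI : ∫⁻ x, R x ≠ ⊤ := by
    have hcover : ⋃ n : ℕ, Iio (n : ℝ) = univ :=
      eq_univ_of_forall fun x => mem_iUnion.2 (exists_nat_gt x)
    refine ne_top_of_le_ne_top (ENNReal.div_ne_top hA (tsub_pos_of_lt hG1).ne') ?_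
    rw [← setLIntegral_univ, ← hcover, setLIntegral_iUnion_of_directed _
      (Monotone.directed_le fun m n hmn => Iio_subset_Iio (Nat.cast_le.2 hmn))]
    exact iSup_le fun n => htrunc n
  have hconv : ∀ᵐ t, (R ⋆ₗ G) t ≠ ⊤ := by
    refine (ae_lt_top' (aemeasurable_lconvolution hR hG) ?_).mono fun t => ne_of_lt
    rw [lintegral_lconvolution hR hG]
    exact ENNReal.mul_ne_top hI hA
  have hRG : R =ᵐ[volume] G + R ⋆ₗ G := by
    filter_upwards [heq, hconv] with t ht hfin
    rw [ht, ENNReal.ofReal_toReal hfin, Pi.add_apply]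
  refine ENNReal.eq_div_one_sub_of_eq_add_mul hI hG1 ?_
  calc ∫⁻ x, R x = ∫⁻ x, (G + R ⋆ₗ G) x := lintegral_congr_ae hRG
    _ = A + (∫⁻ x, R x) * A := by
      rw [Pi.add_def, lintegral_add_left' hG, lintegral_lconvolution hR hG]

noncomputable def ofRealOnIoi (f : ℝ → ℝ) : ℝ → ℝ≥0∞ :=
  (Ioi 0).indicator fun x => ENNReal.ofReal (f x)

theorem ofRealOnIoi_of_pos (f : ℝ → ℝ) {x : ℝ} (hx : 0 < x) :
    ofRealOnIoi f x = ENNReal.ofReal (f x) :=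
  indicator_of_mem hx _

theorem lintegral_ofRealOnIoi (f : ℝ → ℝ) :
    ∫⁻ x, ofRealOnIoi f x = ∫⁻ x in Ioi 0, ENNReal.ofReal (f x) :=
  lintegral_indicator measurableSet_Ioi _

theorem intervalIntegral_mul_eq_toReal_lconvolution {g r : ℝ → ℝ} (hg : Measurable g)
    (hg0 : ∀ x > 0, 0 ≤ g x) (hr : AEMeasurable r (volume.restrict (Ioi 0)))
    (hr0 : ∀ x > 0, 0 ≤ r x) {t : ℝ} (ht : 0 ≤ t) :
    ∫ s in 0..t, g (t - s) * r s = ((ofRealOnIoi r ⋆ₗ ofRealOnIoi g) t).toReal := by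
  have hnonneg : 0 ≤ᵐ[volume.restrict (Ioo 0 t)] fun s => g (t - s) * r s := by
    filter_upwards [ae_restrict_mem measurableSet_Ioo] with s hs
    exact mul_nonneg (hg0 _ (sub_pos.2 hs.2)) (hr0 _ hs.1)
  have hmeas : AEStronglyMeasurable (fun s => g (t - s) * r s) (volume.restrict (Ioo 0 t)) :=
    ((hg.comp (measurable_const.sub measurable_id)).aemeasurable.mul
      (hr.mono_measure (Measure.restrict_mono Ioo_subset_Ioi_self le_rfl))).aestronglyMeasurable
  rw [intervalIntegral.integral_of_le ht, integral_Ioc_eq_integral_Ioo,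
    integral_eq_lintegral_of_nonneg_ae hnonneg hmeas, ofRealOnIoi, ofRealOnIoi,
    lconvolution_indicator_Ioi_apply]
  congr 1
  refine setLIntegral_congr_fun measurableSet_Ioo fun s hs => ?_
  rw [ENNReal.ofReal_mul (hg0 _ (sub_pos.2 hs.2)), mul_comm]

theorem integrable_and_integral_eq_toReal {X : Type*} [MeasurableSpace X] {μ : Measure X}
    {f : X → ℝ} {c : ℝ≥0∞} (hf : AEStronglyMeasurable f μ) (h0 : 0 ≤ᵐ[μ] f) (hc : c ≠ ⊤)
    (h : ∫⁻ x, ENNReal.ofReal (f x) ∂μ = c) : Integrable f μ ∧ ∫ x, f x ∂μ = c.toReal :=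
  ⟨⟨hf, (hasFiniteIntegral_iff_ofReal h0).2 (h ▸ hc.lt_top)⟩,
    by rw [integral_eq_lintegral_of_nonneg_ae h0 hf, h]⟩

theorem aemeasurable_restrict_Ioi_of_integrableOn_Icc {f : ℝ → ℝ}
    (hf : ∀ T > (0:ℝ), IntegrableOn f (Icc 0 T)) : AEMeasurable f (volume.restrict (Ioi 0)) := by
  have hcover : Ioi (0:ℝ) ⊆ ⋃ n : ℕ, Icc 0 (n + 1) := fun x hx =>
    mem_iUnion.2 ⟨⌈x⌉₊, hx.le, (Nat.le_ceil x).trans (by linarith)⟩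
  exact (aemeasurable_iUnion_iff.2 fun n => (hf _ (by positivity)).aemeasurable).mono_measure
    (Measure.restrict_mono hcover le_rfl)

theorem ae_ofRealOnIoi_eq_add_lconvolution {g r : ℝ → ℝ} (hg : Measurable g)
    (hg0 : ∀ x > 0, 0 ≤ g x) (hr : AEMeasurable r (volume.restrict (Ioi 0)))
    (hr0 : ∀ x > 0, 0 ≤ r x)
    (heq : ∀ᵐ t ∂volume.restrict (Ioi 0), r t = g t + ∫ s in 0..t, g (t - s) * r s) :
    ∀ᵐ t, ofRealOnIoi r t =
      ofRealOnIoi g t + ENNReal.ofReal ((ofRealOnIoi r ⋆ₗ ofRealOnIoi g) t).toReal := by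
  filter_upwards [(ae_restrict_iff' measurableSet_Ioi).1 heq] with t ht
  rcases le_or_gt t 0 with ht0 | ht0
  · simp [ofRealOnIoi, lconvolution_indicator_Ioi_apply, ht0]
  rw [ofRealOnIoi_of_pos r ht0, ofRealOnIoi_of_pos g ht0, ht ht0,
    intervalIntegral_mul_eq_toReal_lconvolution hg hg0 hr hr0 ht0.le,
    ENNReal.ofReal_add (hg0 t ht0) ENNReal.toReal_nonneg]

theorem integrableOn_Ioi_and_integral_eq_of_renewal {g r : ℝ → ℝ} (hg : Measurable g)
    (hg0 : ∀ x > 0, 0 ≤ g x) (hgi : IntegrableOn g (Ioi 0)) (hg1 : ∫ x in Ioi 0, g x < 1)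
    (hr0 : ∀ x > 0, 0 ≤ r x) (hrloc : ∀ T > (0:ℝ), IntegrableOn r (Icc 0 T))
    (heq : ∀ᵐ t ∂volume.restrict (Ioi 0), r t = g t + ∫ s in 0..t, g (t - s) * r s) :
    IntegrableOn r (Ioi 0) ∧
      ∫ x in Ioi 0, r x = (∫ x in Ioi 0, g x) / (1 - ∫ x in Ioi 0, g x) := by
  set α := ∫ x in Ioi 0, g x
  have hr : AEMeasurable r (volume.restrict (Ioi 0)) :=
    aemeasurable_restrict_Ioi_of_integrableOn_Icc hrloc
  have hGα : ∫⁻ x, ofRealOnIoi g x = ENNReal.ofReal α := by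
    rw [lintegral_ofRealOnIoi, ofReal_integral_eq_lintegral_ofReal hgi
      ((ae_restrict_mem measurableSet_Ioi).mono hg0)]
  have hα1 : ENNReal.ofReal α < 1 := ENNReal.ofReal_lt_one.2 hg1
  have hRloc (T : ℝ) : ∫⁻ x in Iio T, ofRealOnIoi r x ≠ ⊤ := by
    refine ne_top_of_le_ne_top (hrloc (|T| + 1) (by positivity)).lintegral_lt_top.ne ?_
    rw [ofRealOnIoi, setLIntegral_indicator measurableSet_Ioi]
    exact lintegral_mono_set fun x hx => ⟨hx.1.le, by linarith [hx.2.out, le_abs_self T]⟩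
  have hI := lintegral_eq_div_of_ae_eq_add_lconvolution (R := ofRealOnIoi r) (G := ofRealOnIoi g)
    ((aemeasurable_indicator_iff measurableSet_Ioi).2 hr.ennreal_ofReal)
    (hg.ennreal_ofReal.indicator measurableSet_Ioi).aemeasurable
    (fun x hx => indicator_of_notMem (not_lt.2 hx) _) (hGα ▸ hα1) hRloc
    (ae_ofRealOnIoi_eq_add_lconvolution hg hg0 hr hr0 heq)
  rw [hGα, lintegral_ofRealOnIoi] at hI
  obtain ⟨hint, hval⟩ := integrable_and_integral_eq_toReal hr.aestronglyMeasurable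
    ((ae_restrict_mem measurableSet_Ioi).mono hr0)
    (ENNReal.div_ne_top ENNReal.ofReal_ne_top (tsub_pos_of_lt hα1).ne') hI
  refine ⟨hint, hval.trans ?_⟩
  rw [ENNReal.toReal_div, ENNReal.toReal_sub_of_le hα1.le ENNReal.one_ne_top,
    ENNReal.toReal_ofReal (setIntegral_nonneg measurableSet_Ioi hg0), ENNReal.toReal_one]

theorem blackScholesLongMemory_resolvent_integrable_general
    (β : ℝ)
    (K : ℝ → ℝ) (hKmeas : Measurable K)
    (hKL2 : IntegrableOn (fun s => K s ^ 2) (Ioi 0))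
    (hα : β ^ 2 * ∫ s in Ioi (0:ℝ), K s ^ 2 < 1)
    (r : ℝ → ℝ) (hrnonneg : ∀ t ≥ (0:ℝ), 0 ≤ r t)
    (hrloc : ∀ T > (0:ℝ), IntegrableOn r (Icc 0 T))
    (heq : ∀ᵐ t ∂(volume.restrict (Ioi (0:ℝ))),
      r t = β ^ 2 * K t ^ 2 + β ^ 2 * ∫ s in (0:ℝ)..t, K (t - s) ^ 2 * r s) :
    IntegrableOn r (Ioi 0) ∧
      ∫ s in Ioi (0:ℝ), r s =
        (β ^ 2 * ∫ s in Ioi (0:ℝ), K s ^ 2) / (1 - β ^ 2 * ∫ s in Ioi (0:ℝ), K s ^ 2) := by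
  have hgα : ∫ s in Ioi (0:ℝ), β ^ 2 * K s ^ 2 = β ^ 2 * ∫ s in Ioi (0:ℝ), K s ^ 2 :=
    integral_const_mul _ _
  have heq' : ∀ᵐ t ∂(volume.restrict (Ioi (0:ℝ))),
      r t = β ^ 2 * K t ^ 2 + ∫ s in (0:ℝ)..t, β ^ 2 * K (t - s) ^ 2 * r s := by
    filter_upwards [heq] with t ht
    simp only [ht, mul_assoc, intervalIntegral.integral_const_mul]
  rw [← hgα]
  exact integrableOn_Ioi_and_integral_eq_of_renewal (by fun_prop) (fun x _ => by positivity)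
    (hKL2.const_mul _) (hgα ▸ hα) (fun x hx => hrnonneg x hx.le) hrloc heq'

/-- Key resolvent estimate from the proof of Proposition 4.2: if `r ≥ 0` is locally
integrable and solves `r(t) = β² K(t)² + β² ∫₀ᵗ K(t−s)² r(s) ds` a.e. on `(0,∞)`, with
`α := β² ∫₀^∞ K² < 1`, then `r ∈ L¹(0,∞)` and `∫₀^∞ r = α/(1 − α)`. -/
theorem blackScholesLongMemory_resolvent_integrable
    (β : ℝ) (hβ : β ≠ 0)
    (K : ℝ → ℝ) (hKmeas : Measurable K)
    (hKL2 : IntegrableOn (fun s => K s ^ 2) (Ioi 0))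
    (hα : β ^ 2 * ∫ s in Ioi (0:ℝ), K s ^ 2 < 1)
    (r : ℝ → ℝ) (hrnonneg : ∀ t ≥ (0:ℝ), 0 ≤ r t)
    (hrloc : ∀ T > (0:ℝ), IntegrableOn r (Icc 0 T))
    (heq : ∀ᵐ t ∂(volume.restrict (Ioi (0:ℝ))),
      r t = β ^ 2 * K t ^ 2 + β ^ 2 * ∫ s in (0:ℝ)..t, K (t - s) ^ 2 * r s) :
    IntegrableOn r (Ioi 0) ∧
      ∫ s in Ioi (0:ℝ), r s =
        (β ^ 2 * ∫ s in Ioi (0:ℝ), K s ^ 2) / (1 - β ^ 2 * ∫ s in Ioi (0:ℝ), K s ^ 2) :=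
  blackScholesLongMemory_resolvent_integrable_general β K hKmeas hKL2 hα r hrnonneg hrloc heq
end

section
/- Let σ ≠ 0, β ≠ 0 and let K : [0,∞) → ℝ be measurable and locally square integrable with ∫₀^∞ K(s)² ds = +∞. If m : [0,∞) → [0,∞) is a continuous nonnegative function satisfying m(t) = σ² + β²∫₀ᵗ K(t−s)² m(s) ds for all t ≥ 0, then m(t) ≥ σ² + σ²β²∫₀ᵗ K(s)² ds for all t ≥ 0, and consequently lim_{t→∞} m(t) = +∞. -/
open MeasureTheory Filter Set

/-!
Since `m ≥ 0`, the integral term in the equation is nonnegative, so `m ≥ σ²` on `[0, ∞)`.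
Feeding this back into the equation gives `m(t) ≥ σ² + σ²β² ∫₀ᵗ K(t−s)² ds`, and the
substitution `s ↦ t − s` turns the integral into `∫₀ᵗ K(s)² ds`. This is a nondecreasing
function of `t` which is unbounded, since otherwise `K²` would be integrable on `(0, ∞)`.
-/

lemma intervalIntegrable_zero_of_integrableOn_Icc {E : Type*} [NormedAddCommGroup E]
    {f : ℝ → E} (hf : ∀ T > (0 : ℝ), IntegrableOn f (Icc 0 T)) {t : ℝ} (ht : 0 ≤ t) :
    IntervalIntegrable f volume 0 t := by
  rcases ht.eq_or_lt with rfl | ht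
  · exact IntervalIntegrable.refl
  · exact (intervalIntegrable_iff_integrableOn_Ioc_of_le ht.le).mpr
      ((hf t ht).mono_set Ioc_subset_Icc_self)

lemma tendsto_intervalIntegral_atTop_of_not_integrableOn_Ioi {f : ℝ → ℝ} (hf : 0 ≤ f)
    (hloc : ∀ t ≥ (0 : ℝ), IntervalIntegrable f volume 0 t)
    (hnot : ¬ IntegrableOn f (Ioi 0)) :
    Tendsto (fun t => ∫ x in (0 : ℝ)..t, f x) atTop atTop := by
  have hmono : ∀ a b : ℝ, 0 ≤ a → a ≤ b → ∫ x in (0 : ℝ)..a, f x ≤ ∫ x in (0 : ℝ)..b, f x :=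
    fun a b ha hab => intervalIntegral.integral_mono_interval le_rfl ha hab
      (ae_of_all _ hf) (hloc b (ha.trans hab))
  have hunbdd : ∀ c : ℝ, ∃ T ≥ (0 : ℝ), c ≤ ∫ x in (0 : ℝ)..T, f x := by
    by_contra! ⟨c, hc⟩
    refine hnot (integrableOn_Ioi_of_intervalIntegral_norm_bounded c 0
      (fun i => (hloc (max i 0) (le_max_right _ _)).1.mono_set
        (Ioc_subset_Ioc_right (le_max_left _ _))) tendsto_id ?_)
    filter_upwards [eventually_ge_atTop 0] with i hi
    simpa only [Real.norm_of_nonneg (hf _)] using (hc i hi).le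
  rw [tendsto_atTop_atTop]
  intro c
  obtain ⟨T, hT, hcT⟩ := hunbdd c
  exact ⟨T, fun t ht => hcT.trans (hmono T t hT ht)⟩

def IsVolterraSolution (a b : ℝ) (k m : ℝ → ℝ) : Prop :=
  ∀ t ≥ (0 : ℝ), m t = a + b * ∫ s in (0 : ℝ)..t, k (t - s) * m s

namespace IsVolterraSolution

variable {a b : ℝ} {k m : ℝ → ℝ}

lemma const_le (h : IsVolterraSolution a b k m) (hb : 0 ≤ b) (hk : 0 ≤ k)
    (hm : ∀ t ≥ (0 : ℝ), 0 ≤ m t) {t : ℝ} (ht : 0 ≤ t) : a ≤ m t := by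
  have hint : 0 ≤ ∫ s in (0 : ℝ)..t, k (t - s) * m s :=
    intervalIntegral.integral_nonneg ht fun s hs => mul_nonneg (hk _) (hm s hs.1)
  rw [h t ht]
  exact le_add_of_nonneg_right (mul_nonneg hb hint)

lemma add_mul_integral_le (h : IsVolterraSolution a b k m) (hb : 0 ≤ b) (hk : 0 ≤ k)
    (hkloc : ∀ t ≥ (0 : ℝ), IntervalIntegrable k volume 0 t)
    (hmc : ContinuousOn m (Ici 0)) (hm : ∀ t ≥ (0 : ℝ), 0 ≤ m t) {t : ℝ} (ht : 0 ≤ t) :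
    a + a * b * ∫ s in (0 : ℝ)..t, k s ≤ m t := by
  have hkt : IntervalIntegrable (fun s => k (t - s)) volume 0 t := by
    simpa using ((hkloc t ht).comp_sub_left t).symm
  have hreflect : ∫ s in (0 : ℝ)..t, k (t - s) = ∫ s in (0 : ℝ)..t, k s := by
    simp [intervalIntegral.integral_comp_sub_left]
  have hmono : ∫ s in (0 : ℝ)..t, k (t - s) * a ≤ ∫ s in (0 : ℝ)..t, k (t - s) * m s :=
    intervalIntegral.integral_mono_on ht (hkt.mul_const a)
      (hkt.mul_continuousOn (hmc.mono (by simp [uIcc_of_le ht, Icc_subset_Ici_self])))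
      fun s hs => mul_le_mul_of_nonneg_left (h.const_le hb hk hm hs.1) (hk _)
  rw [intervalIntegral.integral_mul_const, hreflect] at hmono
  rw [h t ht]
  nlinarith [mul_le_mul_of_nonneg_left hmono hb]

end IsVolterraSolution

theorem blackScholesLongMemory_msq_diverges_general
    (σ β : ℝ) (hσ : σ ≠ 0) (hβ : β ≠ 0)
    (K : ℝ → ℝ)
    (hKloc : ∀ T > (0:ℝ), IntegrableOn (fun s => K s ^ 2) (Icc 0 T))
    (hKnotL2 : ¬ IntegrableOn (fun s => K s ^ 2) (Ioi 0))
    (m : ℝ → ℝ) (hmcont : ContinuousOn m (Ici 0))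
    (hmnonneg : ∀ t ≥ (0:ℝ), 0 ≤ m t)
    (heq : ∀ t ≥ (0:ℝ), m t = σ ^ 2 + β ^ 2 * ∫ s in (0:ℝ)..t, K (t - s) ^ 2 * m s) :
    (∀ t ≥ (0:ℝ), σ ^ 2 + σ ^ 2 * β ^ 2 * ∫ s in (0:ℝ)..t, K s ^ 2 ≤ m t) ∧
      Tendsto m atTop atTop := by
  have hsol : IsVolterraSolution (σ ^ 2) (β ^ 2) (fun s => K s ^ 2) m := heq
  have hK2 : 0 ≤ fun s => K s ^ 2 := fun s => sq_nonneg (K s)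
  have hKii := fun t (ht : 0 ≤ t) => intervalIntegrable_zero_of_integrableOn_Icc hKloc ht
  have hlow : ∀ t ≥ (0:ℝ), σ ^ 2 + σ ^ 2 * β ^ 2 * ∫ s in (0:ℝ)..t, K s ^ 2 ≤ m t :=
    fun t ht => hsol.add_mul_integral_le (sq_nonneg β) hK2 hKii hmcont hmnonneg ht
  have hdiv := tendsto_intervalIntegral_atTop_of_not_integrableOn_Ioi hK2 hKii hKnotL2
  refine ⟨hlow, tendsto_atTop_mono' atTop ((eventually_ge_atTop 0).mono hlow) ?_⟩
  exact tendsto_atTop_add_const_left _ _ (hdiv.const_mul_atTop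
    (mul_pos (sq_pos_of_ne_zero hσ) (sq_pos_of_ne_zero hβ)))

/-- Remark 4.3: if `K ∉ L²(0,∞)` (but is locally square integrable), then any continuous
nonnegative solution of `m(t) = σ² + β² ∫₀ᵗ K(t−s)² m(s) ds` satisfies
`m(t) ≥ σ² + σ²β² ∫₀ᵗ K(s)² ds` and hence `m(t) → +∞` as `t → ∞`. -/
theorem blackScholesLongMemory_msq_diverges
    (σ β : ℝ) (hσ : σ ≠ 0) (hβ : β ≠ 0)
    (K : ℝ → ℝ) (hKmeas : Measurable K)
    (hKloc : ∀ T > (0:ℝ), IntegrableOn (fun s => K s ^ 2) (Icc 0 T))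
    (hKnotL2 : ¬ IntegrableOn (fun s => K s ^ 2) (Ioi 0))
    (m : ℝ → ℝ) (hmcont : ContinuousOn m (Ici 0))
    (hmnonneg : ∀ t ≥ (0:ℝ), 0 ≤ m t)
    (heq : ∀ t ≥ (0:ℝ), m t = σ ^ 2 + β ^ 2 * ∫ s in (0:ℝ)..t, K (t - s) ^ 2 * m s) :
    (∀ t ≥ (0:ℝ), σ ^ 2 + σ ^ 2 * β ^ 2 * ∫ s in (0:ℝ)..t, K s ^ 2 ≤ m t) ∧
      Tendsto m atTop atTop :=
  blackScholesLongMemory_msq_diverges_general σ β hσ hβ K hKloc hKnotL2 m hmcont hmnonneg heq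
end

section
/- Let σ ≠ 0, β ≠ 0 and let K : [0,∞) → ℝ be measurable and locally square integrable. Suppose m : [0,∞) → [0,∞) is a continuous nonnegative function satisfying m(t) = σ² + β²∫₀ᵗ K(t−s)² m(s) ds for all t ≥ 0, and that a := lim_{t→∞} m(t) exists and is finite. Then ∫₀^∞ K(s)² ds < ∞, β²∫₀^∞ K(s)² ds < 1, and a = σ²/(1 − β²∫₀^∞ K(s)² ds). -/
open MeasureTheory Filter Set

/-- Deterministic content of Lemma 5.1 / Remark 5.2: if the continuous nonnegative solution of
`m(t) = σ² + β² ∫₀ᵗ K(t−s)² m(s) ds` converges to a finite limit `a`, then `K ∈ L²(0,∞)`,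
`β² ∫₀^∞ K² < 1`, and `a = σ²/(1 − β² ∫₀^∞ K²)`. -/
theorem blackScholesLongMemory_necessary_conditions
    (σ β : ℝ) (hσ : σ ≠ 0) (hβ : β ≠ 0)
    (K : ℝ → ℝ) (hKmeas : Measurable K)
    (hKloc : ∀ T > (0:ℝ), IntegrableOn (fun s => K s ^ 2) (Icc 0 T))
    (m : ℝ → ℝ) (hmcont : ContinuousOn m (Ici 0))
    (hmnonneg : ∀ t ≥ (0:ℝ), 0 ≤ m t)
    (heq : ∀ t ≥ (0:ℝ), m t = σ ^ 2 + β ^ 2 * ∫ s in (0:ℝ)..t, K (t - s) ^ 2 * m s)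
    (a : ℝ) (hlim : Tendsto m atTop (nhds a)) :
    IntegrableOn (fun s => K s ^ 2) (Ioi 0) ∧
      β ^ 2 * ∫ s in Ioi (0:ℝ), K s ^ 2 < 1 ∧
      a = σ ^ 2 / (1 - β ^ 2 * ∫ s in Ioi (0:ℝ), K s ^ 2) := by
  have hσ2 : (0:ℝ) < σ ^ 2 := by positivity
  have hβ2 : (0:ℝ) < β ^ 2 := by positivity
  -- m is bounded on [0, ∞)
  obtain ⟨M, hMσ, hM⟩ : ∃ M, σ ^ 2 ≤ M ∧ ∀ t ≥ (0:ℝ), m t ≤ M := by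
    obtain ⟨T, hT⟩ := (eventually_atTop.mp
      (hlim.eventually (eventually_le_nhds (lt_add_one a))))
    obtain ⟨C, hC⟩ := (isCompact_Icc (a := (0:ℝ)) (b := max T 0)).exists_bound_of_continuousOn
      (hmcont.mono (fun x hx => hx.1))
    refine ⟨max (max C (a + 1)) (σ ^ 2), le_max_right _ _, fun t ht => ?_⟩
    rcases le_total t (max T 0) with h | h
    · exact le_trans (le_trans (le_abs_self _) (hC t ⟨ht, h⟩))
        (le_trans (le_max_left _ _) (le_max_left _ _))
    · exact le_trans (hT t (le_trans (le_max_left T 0) h))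
        (le_trans (le_max_right _ _) (le_max_left _ _))
  -- m is bounded below by σ²
  have hml : ∀ t ≥ (0:ℝ), σ ^ 2 ≤ m t := by
    intro t ht
    have h0 : 0 ≤ ∫ s in (0:ℝ)..t, K (t - s) ^ 2 * m s :=
      intervalIntegral.integral_nonneg ht
        (fun s hs => mul_nonneg (sq_nonneg _) (hmnonneg s hs.1))
    rw [heq t ht]
    nlinarith
  have haσ : σ ^ 2 ≤ a := ge_of_tendsto hlim (eventually_atTop.mpr ⟨0, fun t ht => hml t ht⟩)
  have ha : 0 < a := lt_of_lt_of_le hσ2 haσ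
  have hM0 : 0 < M := lt_of_lt_of_le hσ2 hMσ
  -- change of variables in the convolution
  have hconv : ∀ t ≥ (0:ℝ),
      (∫ s in (0:ℝ)..t, K (t - s) ^ 2 * m s) = ∫ u in (0:ℝ)..t, K u ^ 2 * m (t - u) := by
    intro t _
    have h := intervalIntegral.integral_comp_sub_left (a := 0) (b := t)
      (fun s => K (t - s) ^ 2 * m s) t
    simp only [sub_self, sub_zero, sub_sub_cancel] at h
    exact h.symm
  -- measurability of u ↦ m (t - u) on (0, t]
  have hm_meas : ∀ t : ℝ, AEStronglyMeasurable (fun u => m (t - u))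
      (volume.restrict (Ioc 0 t)) := by
    intro t
    have hc : ContinuousOn (fun u => m (t - u)) (Iic t) :=
      hmcont.comp (Continuous.continuousOn (by continuity))
        (fun u hu => mem_Ici.mpr (sub_nonneg.mpr (mem_Iic.mp hu)))
    exact (hc.aestronglyMeasurable measurableSet_Iic).mono_measure
      (Measure.restrict_mono Ioc_subset_Iic_self le_rfl)
  -- integrability of the convolution integrand
  have hint : ∀ t > (0:ℝ), IntegrableOn (fun u => K u ^ 2 * m (t - u)) (Ioc 0 t) := by
    intro t ht
    have hKt : IntegrableOn (fun u => K u ^ 2) (Ioc 0 t) :=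
      (hKloc t ht).mono Ioc_subset_Icc_self le_rfl
    refine Integrable.mono' (hKt.const_mul M)
      (((hKmeas.pow_const 2).aestronglyMeasurable.restrict).mul (hm_meas t)) ?_
    filter_upwards [ae_restrict_mem measurableSet_Ioc] with u hu
    have h1 : 0 ≤ t - u := sub_nonneg.mpr hu.2
    have h2 : 0 ≤ m (t - u) := hmnonneg _ h1
    rw [Real.norm_eq_abs, abs_of_nonneg (mul_nonneg (sq_nonneg _) h2)]
    calc K u ^ 2 * m (t - u) ≤ K u ^ 2 * M :=
          mul_le_mul_of_nonneg_left (hM _ h1) (sq_nonneg _)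
      _ = M * K u ^ 2 := mul_comm _ _
  -- bound on ∫₀ᵗ K²
  have hbd : ∀ t > (0:ℝ), (∫ u in (0:ℝ)..t, K u ^ 2) ≤ (M - σ ^ 2) / (β ^ 2 * σ ^ 2) := by
    intro t ht
    have hKt : IntegrableOn (fun u => K u ^ 2) (Ioc 0 t) :=
      (hKloc t ht).mono Ioc_subset_Icc_self le_rfl
    have hmono : σ ^ 2 * ∫ u in (0:ℝ)..t, K u ^ 2 ≤ ∫ u in (0:ℝ)..t, K u ^ 2 * m (t - u) := by
      rw [intervalIntegral.integral_of_le ht.le, intervalIntegral.integral_of_le ht.le,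
        ← integral_const_mul]
      refine setIntegral_mono_on (hKt.const_mul _) (hint t ht) measurableSet_Ioc ?_
      intro u hu
      have h1 : 0 ≤ t - u := sub_nonneg.mpr hu.2
      calc σ ^ 2 * K u ^ 2 = K u ^ 2 * σ ^ 2 := mul_comm _ _
        _ ≤ K u ^ 2 * m (t - u) := mul_le_mul_of_nonneg_left (hml _ h1) (sq_nonneg _)
    have hmt : m t ≤ M := hM t ht.le
    have heqt := heq t ht.le
    rw [hconv t ht.le] at heqt
    have h2 : β ^ 2 * (σ ^ 2 * ∫ u in (0:ℝ)..t, K u ^ 2) ≤ M - σ ^ 2 := by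
      nlinarith
    rw [le_div_iff₀ (by positivity)]
    nlinarith
  -- K² is integrable on (0, ∞)
  have hKI : IntegrableOn (fun s => K s ^ 2) (Ioi 0) := by
    refine integrableOn_Ioi_of_intervalIntegral_norm_bounded
      ((M - σ ^ 2) / (β ^ 2 * σ ^ 2)) 0 (f := fun s => K s ^ 2) (b := fun i : ℝ => i)
      (l := atTop) ?_ tendsto_id ?_
    · intro i
      rcases le_or_gt i 0 with h | h
      · rw [Ioc_eq_empty (by simpa using h)]; exact integrableOn_empty
      · exact (hKloc i h).mono Ioc_subset_Icc_self le_rfl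
    · filter_upwards [eventually_gt_atTop 0] with i hi
      have : (∫ x in (0:ℝ)..i, ‖K x ^ 2‖) = ∫ x in (0:ℝ)..i, K x ^ 2 :=
        intervalIntegral.integral_congr fun x _ => Real.norm_of_nonneg (sq_nonneg _)
      rw [this]
      exact hbd i hi
  set I : ℝ := ∫ s in Ioi (0:ℝ), K s ^ 2 with hI
  have hInn : 0 ≤ I := setIntegral_nonneg measurableSet_Ioi (fun x _ => sq_nonneg _)
  -- dominated convergence: the convolution tends to I * a
  have hdom : Tendsto (fun t => ∫ u in Ioi (0:ℝ),
      (Ioc (0:ℝ) t).indicator (fun u => K u ^ 2 * m (t - u)) u) atTop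
      (nhds (∫ u in Ioi (0:ℝ), K u ^ 2 * a)) := by
    refine tendsto_integral_filter_of_dominated_convergence (fun u => M * K u ^ 2)
      ?_ ?_ (hKI.const_mul M) ?_
    · filter_upwards with t
      refine AEStronglyMeasurable.restrict ?_
      exact (aestronglyMeasurable_indicator_iff measurableSet_Ioc).mpr
        (((hKmeas.pow_const 2).aestronglyMeasurable.restrict).mul (hm_meas t))
    · filter_upwards with t
      filter_upwards [ae_restrict_mem measurableSet_Ioi] with u _
      rw [Real.norm_eq_abs]
      rcases em (u ∈ Ioc (0:ℝ) t) with h | h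
      · rw [indicator_of_mem h]
        have h1 : 0 ≤ t - u := sub_nonneg.mpr h.2
        have h2 : 0 ≤ m (t - u) := hmnonneg _ h1
        rw [abs_of_nonneg (mul_nonneg (sq_nonneg _) h2)]
        calc K u ^ 2 * m (t - u) ≤ K u ^ 2 * M :=
              mul_le_mul_of_nonneg_left (hM _ h1) (sq_nonneg _)
          _ = M * K u ^ 2 := mul_comm _ _
      · rw [indicator_of_notMem h]; simpa using mul_nonneg hM0.le (sq_nonneg (K u))
    · filter_upwards [ae_restrict_mem measurableSet_Ioi] with u hu
      have hmu : Tendsto (fun t => m (t - u)) atTop (nhds a) :=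
        hlim.comp (tendsto_atTop_add_const_right atTop (-u)
          tendsto_id |>.congr (fun x => by simp only [id]; ring))
      refine Tendsto.congr' ?_ (hmu.const_mul (K u ^ 2))
      filter_upwards [eventually_ge_atTop u] with t htu
      exact (indicator_of_mem (mem_Ioc.mpr ⟨mem_Ioi.mp hu, htu⟩) (fun u => K u ^ 2 * m (t - u))).symm
  -- identify the limit of m via the equation
  have hmain : Tendsto m atTop (nhds (σ ^ 2 + β ^ 2 * (I * a))) := by
    have h1 : (∫ u in Ioi (0:ℝ), K u ^ 2 * a) = I * a := by
      rw [hI, ← integral_mul_const]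
    have h2 : Tendsto (fun t => σ ^ 2 + β ^ 2 * ∫ u in Ioi (0:ℝ),
        (Ioc (0:ℝ) t).indicator (fun u => K u ^ 2 * m (t - u)) u) atTop
        (nhds (σ ^ 2 + β ^ 2 * (I * a))) := by
      rw [← h1]
      exact tendsto_const_nhds.add (hdom.const_mul _)
    refine h2.congr' ?_
    filter_upwards [eventually_gt_atTop (0:ℝ)] with t ht
    have h3 : (∫ u in Ioi (0:ℝ), (Ioc (0:ℝ) t).indicator (fun u => K u ^ 2 * m (t - u)) u)
        = ∫ u in Ioc (0:ℝ) t, K u ^ 2 * m (t - u) := by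
      rw [setIntegral_indicator measurableSet_Ioc, inter_eq_right.mpr Ioc_subset_Ioi_self]
    rw [h3, ← intervalIntegral.integral_of_le ht.le, ← hconv t ht.le, ← heq t ht.le]
  have hkey : a = σ ^ 2 + β ^ 2 * (I * a) := tendsto_nhds_unique hlim hmain
  have hpos : 0 < 1 - β ^ 2 * I := by
    have : a * (1 - β ^ 2 * I) = σ ^ 2 := by nlinarith
    nlinarith
  refine ⟨hKI, by linarith, ?_⟩
  rw [eq_div_iff (ne_of_gt hpos)]
  nlinarith
end

section
/- Let σ ≠ 0, β ≠ 0 and let K : [0,∞) → ℝ be measurable with K ∈ L²(0,∞) and β²∫₀^∞ K(s)² ds < 1. Let m : [0,∞) → [0,∞) be a continuous function satisfying m(t) = σ² + β²∫₀ᵗ K(t−s)² m(s) ds for all t ≥ 0. Then for every fixed Δ ≥ 0, β² ∫₀ᵗ K(t−s)K(t+Δ−s) m(s) ds converges as t → ∞ to γ(Δ) := β² · (σ²/(1 − β²∫₀^∞ K(s)² ds)) · ∫₀^∞ K(s)K(s+Δ) ds. -/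
open MeasureTheory Filter Set

/-- Split of an integral over `Ioi t`. -/
lemma my_integral_Ioi_split (f : ℝ → ℝ) (hf : IntegrableOn f (Ioi 0)) {t : ℝ} (ht : 0 ≤ t) :
    ∫ s in Ioi t, f s = (∫ s in Ioi (0:ℝ), f s) - ∫ s in (0:ℝ)..t, f s := by
  have hu : Ioc 0 t ∪ Ioi t = Ioi (0:ℝ) := Ioc_union_Ioi_eq_Ioi ht
  have hdisj : Disjoint (Ioc (0:ℝ) t) (Ioi t) := Set.Ioc_disjoint_Ioi le_rfl
  have h1 : IntegrableOn f (Ioc 0 t) := hf.mono_set Ioc_subset_Ioi_self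
  have h2 : IntegrableOn f (Ioi t) := hf.mono_set (Ioi_subset_Ioi ht)
  have := MeasureTheory.setIntegral_union hdisj measurableSet_Ioi h1 h2 (f := f) (μ := volume)
  rw [hu] at this
  rw [intervalIntegral.integral_of_le ht]
  linarith [this]

/-- Tail of an integrable function tends to zero. -/
lemma my_tail_tendsto (f : ℝ → ℝ) (hf : IntegrableOn f (Ioi 0)) :
    Tendsto (fun t => ∫ s in Ioi t, f s) atTop (nhds 0) := by
  have h1 : Tendsto (fun t : ℝ => ∫ s in (0:ℝ)..t, f s) atTop
      (nhds (∫ s in Ioi (0:ℝ), f s)) :=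
    MeasureTheory.intervalIntegral_tendsto_integral_Ioi 0 hf tendsto_id
  have h2 : Tendsto (fun t : ℝ => (∫ s in Ioi (0:ℝ), f s) - ∫ s in (0:ℝ)..t, f s) atTop
      (nhds 0) := by
    have := tendsto_const_nhds (x := ∫ s in Ioi (0:ℝ), f s) (f := atTop (α := ℝ)) |>.sub h1
    simpa using this
  refine h2.congr' ?_
  filter_upwards [eventually_ge_atTop (0:ℝ)] with t ht
  exact (my_integral_Ioi_split f hf ht).symm

/-- Sliding window integral tends to zero. -/
lemma my_window_tendsto (f : ℝ → ℝ) (hf : IntegrableOn f (Ioi 0)) (T : ℝ) (hT : 0 ≤ T) :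
    Tendsto (fun t => ∫ s in (t - T)..t, f s) atTop (nhds 0) := by
  have h1 : Tendsto (fun t : ℝ => ∫ s in (0:ℝ)..t, f s) atTop
      (nhds (∫ s in Ioi (0:ℝ), f s)) :=
    MeasureTheory.intervalIntegral_tendsto_integral_Ioi 0 hf tendsto_id
  have h1' : Tendsto (fun t : ℝ => ∫ s in (0:ℝ)..(t - T), f s) atTop
      (nhds (∫ s in Ioi (0:ℝ), f s)) :=
    h1.comp (tendsto_atTop_add_const_right atTop (-T) tendsto_id)
  have h2 := h1.sub h1'
  rw [sub_self] at h2
  refine h2.congr' ?_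
  filter_upwards [eventually_ge_atTop T] with t ht
  have htT : 0 ≤ t - T := by linarith
  have hi1 : IntervalIntegrable f volume 0 t := by
    rw [intervalIntegrable_iff_integrableOn_Ioc_of_le (by linarith)]
    exact hf.mono_set Ioc_subset_Ioi_self
  have hi2 : IntervalIntegrable f volume 0 (t - T) := by
    rw [intervalIntegrable_iff_integrableOn_Ioc_of_le htT]
    exact hf.mono_set Ioc_subset_Ioi_self
  exact intervalIntegral.integral_interval_sub_left hi1 hi2

/-- Convolution of an `L¹` kernel with a bounded continuous function converging at infinity. -/
lemma my_conv_tendsto (g : ℝ → ℝ) (hg : Measurable g) (hgint : IntegrableOn g (Ioi 0))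
    (h : ℝ → ℝ) (hc : Continuous h) (C : ℝ) (hbd : ∀ x, |h x| ≤ C)
    (L : ℝ) (hlim : Tendsto h atTop (nhds L)) :
    Tendsto (fun t => ∫ u in (0:ℝ)..t, g u * h (t - u)) atTop
      (nhds (L * ∫ u in Ioi (0:ℝ), g u)) := by
  set μ := volume.restrict (Ioi (0:ℝ))
  set F : ℝ → ℝ → ℝ := fun t u => (Ioc (0:ℝ) t).indicator (fun u => g u * h (t - u)) u
  have hmain : Tendsto (fun t => ∫ u, F t u ∂μ) atTop (nhds (∫ u in Ioi (0:ℝ), g u * L)) := by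
    apply MeasureTheory.tendsto_integral_filter_of_dominated_convergence
      (bound := fun u => |g u| * C)
    · filter_upwards with t
      exact (((hg.aestronglyMeasurable).mul
        ((hc.comp (continuous_const.sub continuous_id)).aestronglyMeasurable)).indicator
        measurableSet_Ioc)
    · filter_upwards with t
      filter_upwards with u
      by_cases hu : u ∈ Ioc (0:ℝ) t
      · simp only [F, indicator_of_mem hu]
        rw [Real.norm_eq_abs, abs_mul]
        exact mul_le_mul_of_nonneg_left (hbd _) (abs_nonneg _)
      · simp only [F, indicator_of_notMem hu]
        simp only [norm_zero]
        exact mul_nonneg (abs_nonneg _) ((abs_nonneg (h 0)).trans (hbd 0))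
    · exact (hgint.abs).mul_const C
    · rw [MeasureTheory.ae_restrict_iff' measurableSet_Ioi]
      filter_upwards with u hu
      have h1 : Tendsto (fun t : ℝ => g u * h (t - u)) atTop (nhds (g u * L)) :=
        tendsto_const_nhds.mul
          (hlim.comp (tendsto_atTop_add_const_right atTop (-u) tendsto_id))
      refine h1.congr' ?_
      filter_upwards [eventually_ge_atTop u] with t ht
      have : u ∈ Ioc (0:ℝ) t := ⟨hu, ht⟩
      simp [F, indicator_of_mem this]
  have heqF : ∀ t : ℝ, 0 ≤ t → ∫ u, F t u ∂μ = ∫ u in (0:ℝ)..t, g u * h (t - u) := by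
    intro t ht
    rw [MeasureTheory.integral_indicator measurableSet_Ioc]
    rw [Measure.restrict_restrict measurableSet_Ioc]
    rw [Set.inter_eq_self_of_subset_left Ioc_subset_Ioi_self]
    rw [intervalIntegral.integral_of_le ht]
  have hval : ∫ u in Ioi (0:ℝ), g u * L = L * ∫ u in Ioi (0:ℝ), g u := by
    rw [← integral_const_mul]; congr 1; ext u; ring
  rw [← hval]
  refine hmain.congr' ?_
  filter_upwards [eventually_ge_atTop (0:ℝ)] with t ht
  exact heqF t ht

lemma my_abs_mul_le (a b : ℝ) : |a * b| ≤ a ^ 2 + b ^ 2 := by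
  rw [abs_le]
  constructor
  · nlinarith [sq_nonneg (a + b)]
  · nlinarith [sq_nonneg (a - b)]

set_option maxHeartbeats 1000000 in
/-- Deterministic core of Theorem 5.3: under `K ∈ L²(0,∞)` and `β² ∫₀^∞ K² < 1`, for the
solution `m` of the Volterra equation `m(t) = σ² + β² ∫₀ᵗ K(t−s)² m(s) ds`, for each
fixed `Δ ≥ 0` the quantity `β² ∫₀ᵗ K(t−s)K(t+Δ−s) m(s) ds` converges as `t → ∞` to
`γ(Δ) = β² (σ²/(1 − β² ∫₀^∞ K²)) ∫₀^∞ K(s)K(s+Δ) ds`. -/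
theorem blackScholesLongMemory_autocovariance_limit
    (σ β : ℝ) (hσ : σ ≠ 0) (hβ : β ≠ 0)
    (K : ℝ → ℝ) (hKmeas : Measurable K)
    (hKL2 : IntegrableOn (fun s => K s ^ 2) (Ioi 0))
    (hsmall : β ^ 2 * ∫ s in Ioi (0:ℝ), K s ^ 2 < 1)
    (m : ℝ → ℝ) (hmcont : ContinuousOn m (Ici 0))
    (hmnonneg : ∀ t ≥ (0:ℝ), 0 ≤ m t)
    (heq : ∀ t ≥ (0:ℝ), m t = σ ^ 2 + β ^ 2 * ∫ s in (0:ℝ)..t, K (t - s) ^ 2 * m s)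
    (Δ : ℝ) (hΔ : 0 ≤ Δ) :
    Tendsto (fun t => β ^ 2 * ∫ s in (0:ℝ)..t, K (t - s) * K (t + Δ - s) * m s) atTop
      (nhds (β ^ 2 * (σ ^ 2 / (1 - β ^ 2 * ∫ s in Ioi (0:ℝ), K s ^ 2)) *
        ∫ s in Ioi (0:ℝ), K s * K (s + Δ))) := by
  set I : ℝ := ∫ s in Ioi (0:ℝ), K s ^ 2 with hIdef
  have hI0 : 0 ≤ I := setIntegral_nonneg measurableSet_Ioi (fun x _ => sq_nonneg _)
  have hρ0 : 0 ≤ β ^ 2 * I := mul_nonneg (sq_nonneg β) hI0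
  have hρ1 : β ^ 2 * I < 1 := hsmall
  have h1ρ : 0 < 1 - β ^ 2 * I := by linarith
  set L : ℝ := σ ^ 2 / (1 - β ^ 2 * I) with hLdef
  have hL : 0 < L := by
    apply div_pos (by positivity) h1ρ
  have hLρ : L * (1 - β ^ 2 * I) = σ ^ 2 := by
    rw [hLdef]; field_simp
  -- the extended function
  set mt : ℝ → ℝ := fun x => m (max x 0) with hmtdef
  have hmtc : Continuous mt :=
    hmcont.comp_continuous (continuous_id.max continuous_const) (fun x => le_max_right x 0)
  have hmteq : ∀ x : ℝ, 0 ≤ x → mt x = m x := by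
    intro x hx; simp only [hmtdef]; rw [max_eq_left hx]
  have hmtnn : ∀ x, 0 ≤ mt x := fun x => hmnonneg _ (le_max_right x 0)
  -- basic integrability of K² on compact intervals in [0,∞)
  have hKint : ∀ a b : ℝ, 0 ≤ a → 0 ≤ b →
      IntervalIntegrable (fun u => K u ^ 2) volume a b := by
    intro a b ha hb
    rw [intervalIntegrable_iff]
    apply hKL2.mono_set
    intro x hx
    exact lt_of_le_of_lt (le_min ha hb) hx.1
  have hIle : ∀ t : ℝ, 0 ≤ t → ∫ u in (0:ℝ)..t, K u ^ 2 ≤ I := by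
    intro t ht
    rw [intervalIntegral.integral_of_le ht, hIdef]
    refine setIntegral_mono_set hKL2 ?_ ?_
    · exact Filter.Eventually.of_forall (fun x => sq_nonneg _)
    · exact HasSubset.Subset.eventuallyLE Ioc_subset_Ioi_self
  have hInn : ∀ t : ℝ, 0 ≤ t → 0 ≤ ∫ u in (0:ℝ)..t, K u ^ 2 := by
    intro t ht
    apply intervalIntegral.integral_nonneg ht (fun u _ => sq_nonneg _)
  -- the Volterra equation for mt, in convolution form
  have heq' : ∀ t : ℝ, 0 ≤ t →
      mt t = σ ^ 2 + β ^ 2 * ∫ u in (0:ℝ)..t, K u ^ 2 * mt (t - u) := by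
    intro t ht
    rw [hmteq t ht, heq t ht]
    congr 1
    have step1 : ∫ s in (0:ℝ)..t, K (t - s) ^ 2 * m s
        = ∫ s in (0:ℝ)..t, K (t - s) ^ 2 * mt s := by
      apply intervalIntegral.integral_congr
      intro s hs
      rw [uIcc_of_le ht] at hs
      show K (t - s) ^ 2 * m s = K (t - s) ^ 2 * mt s
      rw [hmteq s hs.1]
    rw [step1]
    have step2 : (fun s => K (t - s) ^ 2 * mt s)
        = fun s => (fun u => K u ^ 2 * mt (t - u)) (t - s) := by
      funext s
      simp only [sub_sub_cancel]
    rw [step2, intervalIntegral.integral_comp_sub_left (fun u => K u ^ 2 * mt (t - u)) t]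
    simp
  -- global bound mt ≤ L
  have hboundT : ∀ T : ℝ, 0 ≤ T → ∀ y ∈ Icc (0:ℝ) T, mt y ≤ L := by
    intro T hT
    obtain ⟨c, hcmem, hcmax⟩ := isCompact_Icc.exists_isMaxOn
      (⟨0, left_mem_Icc.2 hT⟩ : (Icc (0:ℝ) T).Nonempty) hmtc.continuousOn
    have hc0 : 0 ≤ c := hcmem.1
    have hcT : c ≤ T := hcmem.2
    have key : ∫ u in (0:ℝ)..c, K u ^ 2 * mt (c - u)
        ≤ (∫ u in (0:ℝ)..c, K u ^ 2) * mt c := by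
      rw [← intervalIntegral.integral_mul_const]
      apply intervalIntegral.integral_mono_on hc0
      · exact (hKint 0 c le_rfl hc0).mul_continuousOn
          ((hmtc.comp (continuous_const.sub continuous_id)).continuousOn)
      · exact (hKint 0 c le_rfl hc0).mul_const _
      · intro u hu
        have hmem : c - u ∈ Icc (0:ℝ) T := ⟨by linarith [hu.2], by linarith [hu.1]⟩
        exact mul_le_mul_of_nonneg_left (hcmax hmem) (sq_nonneg _)
    have hmc := heq' c hc0
    have hc2 : mt c ≤ σ ^ 2 + β ^ 2 * I * mt c := by
      have h3 : β ^ 2 * ∫ u in (0:ℝ)..c, K u ^ 2 * mt (c - u)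
          ≤ β ^ 2 * I * mt c := by
        have h4 : (∫ u in (0:ℝ)..c, K u ^ 2) * mt c ≤ I * mt c :=
          mul_le_mul_of_nonneg_right (hIle c hc0) (hmtnn c)
        nlinarith [sq_nonneg β, key]
      linarith [hmc, h3]
    have hcL : mt c ≤ L := by
      rw [hLdef, le_div_iff₀ h1ρ]
      nlinarith [hc2]
    intro y hy
    exact (hcmax hy).trans hcL
  have hbound : ∀ x, mt x ≤ L := by
    intro x
    have h1 : mt (max x 0) ≤ L :=
      hboundT (max x 0) (le_max_right x 0) (max x 0) ⟨le_max_right x 0, le_rfl⟩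
    have h2 : mt (max x 0) = mt x := by
      simp only [hmtdef]
      rw [max_eq_left (le_max_right x 0)]
    linarith [h1, h2.symm.le, h2.le]
  -- the deficit function
  set e : ℝ → ℝ := fun t => L - mt t with hedef
  have he0 : ∀ t, 0 ≤ e t := fun t => sub_nonneg.2 (hbound t)
  have heL : ∀ t, e t ≤ L := fun t => by
    simp only [hedef]; linarith [hmtnn t]
  have hecont : Continuous e := continuous_const.sub hmtc
  have hInte : ∀ t a b : ℝ, 0 ≤ a → 0 ≤ b →
      IntervalIntegrable (fun u => K u ^ 2 * e (t - u)) volume a b := by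
    intro t a b ha hb
    exact (hKint a b ha hb).mul_continuousOn
      ((hecont.comp (continuous_const.sub continuous_id)).continuousOn)
  have hIntm : ∀ t a b : ℝ, 0 ≤ a → 0 ≤ b →
      IntervalIntegrable (fun u => K u ^ 2 * mt (t - u)) volume a b := by
    intro t a b ha hb
    exact (hKint a b ha hb).mul_continuousOn
      ((hmtc.comp (continuous_const.sub continuous_id)).continuousOn)
  -- the renewal identity for e
  have hid : ∀ t : ℝ, 0 ≤ t →
      e t = β ^ 2 * L * (∫ s in Ioi t, K s ^ 2)
        + β ^ 2 * ∫ u in (0:ℝ)..t, K u ^ 2 * e (t - u) := by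
    intro t ht
    have hsplit := my_integral_Ioi_split (fun s => K s ^ 2) hKL2 ht
    have hsub : ∫ u in (0:ℝ)..t, K u ^ 2 * e (t - u)
        = L * (∫ u in (0:ℝ)..t, K u ^ 2) - ∫ u in (0:ℝ)..t, K u ^ 2 * mt (t - u) := by
      have h5 : (fun u => K u ^ 2 * e (t - u))
          = fun u => K u ^ 2 * L - K u ^ 2 * mt (t - u) := by
        funext u; simp only [hedef]; ring
      rw [h5, intervalIntegral.integral_sub ((hKint 0 t le_rfl ht).mul_const L)
        (hIntm t 0 t le_rfl ht), intervalIntegral.integral_mul_const]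
      ring
    have hmtt := heq' t ht
    simp only [hedef]
    rw [hsplit, hsub, hmtt]
    rw [← hIdef]
    linear_combination hLρ
  -- iterated decay estimate
  have claim : ∀ n : ℕ, ∀ ε > (0:ℝ), ∀ᶠ t in (atTop : Filter ℝ),
      e t ≤ (β ^ 2 * I) ^ n * L + ε := by
    intro n
    induction n with
    | zero =>
      intro ε hε
      filter_upwards with t
      simp only [pow_zero, one_mul]
      linarith [heL t]
    | succ n ih =>
      intro ε hε
      obtain ⟨T₀, hT₀⟩ := (eventually_atTop).1 (ih (ε / 3) (by linarith))
      set T : ℝ := max T₀ 0 with hTdef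
      have hT0 : 0 ≤ T := le_max_right T₀ 0
      have hA : Tendsto (fun t => β ^ 2 * L * ∫ s in Ioi t, K s ^ 2) atTop (nhds 0) := by
        have := (my_tail_tendsto (fun s => K s ^ 2) hKL2).const_mul (β ^ 2 * L)
        simpa using this
      have hW : Tendsto (fun t => β ^ 2 * L * ∫ s in (t - T)..t, K s ^ 2) atTop (nhds 0) := by
        have := (my_window_tendsto (fun s => K s ^ 2) hKL2 T hT0).const_mul (β ^ 2 * L)
        simpa using this
      filter_upwards [hA.eventually (gt_mem_nhds (show (0:ℝ) < ε / 3 by linarith)),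
        hW.eventually (gt_mem_nhds (show (0:ℝ) < ε / 3 by linarith)),
        eventually_ge_atTop T] with t hA' hW' htT
      have ht0 : 0 ≤ t := le_trans hT0 htT
      have htT0 : 0 ≤ t - T := by linarith
      have hsplit : ∫ u in (0:ℝ)..t, K u ^ 2 * e (t - u)
          = (∫ u in (0:ℝ)..(t - T), K u ^ 2 * e (t - u))
            + ∫ u in (t - T)..t, K u ^ 2 * e (t - u) :=
        (intervalIntegral.integral_add_adjacent_intervals
          (hInte t 0 (t - T) le_rfl htT0) (hInte t (t - T) t htT0 ht0)).symm
      have hB1 : ∫ u in (0:ℝ)..(t - T), K u ^ 2 * e (t - u)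
          ≤ (∫ u in (0:ℝ)..(t - T), K u ^ 2) * ((β ^ 2 * I) ^ n * L + ε / 3) := by
        rw [← intervalIntegral.integral_mul_const]
        apply intervalIntegral.integral_mono_on htT0 (hInte t 0 (t - T) le_rfl htT0)
          ((hKint 0 (t - T) le_rfl htT0).mul_const _)
        intro u hu
        have : T₀ ≤ t - u := by
          have h6 : T₀ ≤ T := le_max_left T₀ 0
          linarith [hu.2]
        exact mul_le_mul_of_nonneg_left (hT₀ (t - u) this) (sq_nonneg _)
      have hB2 : ∫ u in (t - T)..t, K u ^ 2 * e (t - u)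
          ≤ (∫ u in (t - T)..t, K u ^ 2) * L := by
        rw [← intervalIntegral.integral_mul_const]
        apply intervalIntegral.integral_mono_on (by linarith) (hInte t (t - T) t htT0 ht0)
          ((hKint (t - T) t htT0 ht0).mul_const _)
        intro u hu
        exact mul_le_mul_of_nonneg_left (heL (t - u)) (sq_nonneg _)
      have hc1 : 0 ≤ (β ^ 2 * I) ^ n * L + ε / 3 := by
        have := pow_nonneg hρ0 n
        nlinarith [hL.le]
      have hJle := hIle (t - T) htT0
      have hB1' : β ^ 2 * ∫ u in (0:ℝ)..(t - T), K u ^ 2 * e (t - u)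
          ≤ (β ^ 2 * I) ^ (n + 1) * L + ε / 3 := by
        have h7 : (∫ u in (0:ℝ)..(t - T), K u ^ 2) * ((β ^ 2 * I) ^ n * L + ε / 3)
            ≤ I * ((β ^ 2 * I) ^ n * L + ε / 3) :=
          mul_le_mul_of_nonneg_right hJle hc1
        have h8 : β ^ 2 * (I * ((β ^ 2 * I) ^ n * L + ε / 3))
            = (β ^ 2 * I) ^ (n + 1) * L + (β ^ 2 * I) * (ε / 3) := by ring
        have h9 : (β ^ 2 * I) * (ε / 3) ≤ ε / 3 := by nlinarith [hρ0, hρ1]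
        have s1 := mul_le_mul_of_nonneg_left hB1 (sq_nonneg β)
        have s2 := mul_le_mul_of_nonneg_left h7 (sq_nonneg β)
        linarith [s1, s2, h9, h8.le]
      have hB2' : β ^ 2 * ∫ u in (t - T)..t, K u ^ 2 * e (t - u)
          ≤ β ^ 2 * L * ∫ s in (t - T)..t, K s ^ 2 := by
        have s1 := mul_le_mul_of_nonneg_left hB2 (sq_nonneg β)
        have s2 : β ^ 2 * ((∫ s in (t - T)..t, K s ^ 2) * L)
            = β ^ 2 * L * ∫ s in (t - T)..t, K s ^ 2 := by ring
        linarith [s1, s2.le]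
      have hidt := hid t ht0
      rw [hsplit, mul_add] at hidt
      linarith [hA', hW', hB1', hB2', hidt]
  -- e tends to 0
  have htende : Tendsto e atTop (nhds 0) := by
    rw [Metric.tendsto_atTop]
    intro ε hε
    obtain ⟨n, hn⟩ := exists_pow_lt_of_lt_one
      (show (0:ℝ) < ε / 2 / L by positivity) hρ1
    have hn' : (β ^ 2 * I) ^ n * L < ε / 2 := by
      rw [← lt_div_iff₀ hL]
      exact hn
    obtain ⟨N, hN⟩ := (eventually_atTop).1 (claim n (ε / 2) (by linarith))
    refine ⟨N, fun t ht => ?_⟩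
    rw [Real.dist_eq, sub_zero, abs_of_nonneg (he0 t)]
    have h12 := hN t ht
    have h11 : (β ^ 2 * I) ^ n * L + ε / 2 < ε := by linarith
    exact lt_of_le_of_lt h12 h11
  have htendmt : Tendsto mt atTop (nhds L) := by
    have h10 : Tendsto (fun t => L - e t) atTop (nhds (L - 0)) :=
      tendsto_const_nhds.sub htende
    rw [sub_zero] at h10
    refine h10.congr (fun t => ?_)
    simp [hedef]
  -- integrability of the shifted kernel product
  have hKshift : IntegrableOn (fun s => K (s + Δ) ^ 2) (Ioi 0) := by
    have h1 : IntegrableOn (fun s => K s ^ 2) (Ioi Δ) := hKL2.mono_set (Ioi_subset_Ioi hΔ)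
    rw [← integrable_indicator_iff measurableSet_Ioi] at h1 ⊢
    have h2 := h1.comp_add_right Δ
    have h3 : (fun x => (Ioi Δ).indicator (fun s => K s ^ 2) (x + Δ))
        = (Ioi (0:ℝ)).indicator (fun s => K (s + Δ) ^ 2) := by
      funext x
      simp only [Set.indicator_apply, mem_Ioi, lt_add_iff_pos_left]
    rwa [h3] at h2
  have hgmeas : Measurable (fun s => K s * K (s + Δ)) :=
    hKmeas.mul (hKmeas.comp (measurable_id.add_const Δ))
  have hgint : IntegrableOn (fun s => K s * K (s + Δ)) (Ioi 0) := by
    apply Integrable.mono (hKL2.add hKshift)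
      (hgmeas.aestronglyMeasurable.restrict)
    filter_upwards with s
    simp only [Pi.add_apply]
    rw [Real.norm_eq_abs, Real.norm_eq_abs,
      abs_of_nonneg (add_nonneg (sq_nonneg (K s)) (sq_nonneg (K (s + Δ))))]
    exact my_abs_mul_le (K s) (K (s + Δ))
  -- final application
  have hbd : ∀ x, |mt x| ≤ L := fun x => by
    rw [abs_of_nonneg (hmtnn x)]; exact hbound x
  have happly := my_conv_tendsto (fun s => K s * K (s + Δ)) hgmeas hgint mt hmtc L hbd L htendmt
  have hfinal := happly.const_mul (β ^ 2)
  have hval : β ^ 2 * (L * ∫ u in Ioi (0:ℝ), K u * K (u + Δ))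
      = β ^ 2 * (σ ^ 2 / (1 - β ^ 2 * I)) * ∫ s in Ioi (0:ℝ), K s * K (s + Δ) := by
    rw [hLdef]; ring
  rw [hval] at hfinal
  refine hfinal.congr' ?_
  filter_upwards [eventually_ge_atTop (0:ℝ)] with t ht
  congr 1
  have step1 : ∫ s in (0:ℝ)..t, K (t - s) * K (t + Δ - s) * m s
      = ∫ s in (0:ℝ)..t, K (t - s) * K (t + Δ - s) * mt s := by
    apply intervalIntegral.integral_congr
    intro s hs
    rw [uIcc_of_le ht] at hs
    show K (t - s) * K (t + Δ - s) * m s = K (t - s) * K (t + Δ - s) * mt s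
    rw [hmteq s hs.1]
  have step2 : (fun s => K (t - s) * K (t + Δ - s) * mt s)
      = fun s => (fun u => K u * K (u + Δ) * mt (t - u)) (t - s) := by
    funext s
    have harg : t + Δ - s = t - s + Δ := by ring
    simp only [sub_sub_cancel, harg]
  rw [step2] at step1
  rw [intervalIntegral.integral_comp_sub_left (fun u => K u * K (u + Δ) * mt (t - u)) t]
    at step1
  simp only [sub_self, sub_zero] at step1
  rw [step1]
end

section
/- Suppose ∫₀^∞ s d|κ|(s) < ∞, and suppose K ∈ L²(0,∞) with β²∫₀^∞ K(s)² ds < 1 where β ≠ 0, σ ≠ 0. Then the function γ : [0,∞) → ℝ defined by γ(Δ) = β² · (σ²/(1 − β²∫₀^∞ K(s)² ds)) · ∫₀^∞ K(s)K(s+Δ) ds is well defined and satisfies ∫₀^∞ |γ(Δ)| dΔ < ∞. -/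
open MeasureTheory Filter Set Topology
open scoped ENNReal

/-!
For `x ≥ τ` the kernel is `K(x) = -λ{-τ} + κ([x,∞))`, which tends to `-λ{-τ}`; as `K² ∈ L¹`, this
limit must vanish. Then `|K(x)| ≤ |κ|([x,∞))` for `x ≥ τ`, and `∫₀^∞ |κ|([x,∞)) dx` is the first
moment of `|κ|`, so `K ∈ L¹(0,∞)`; `K` is also bounded. Hence each `K(s)K(s+Δ)` is integrable, and
the autocorrelation `Δ ↦ ∫ K(s)K(s+Δ) ds` is integrable by Fubini after the shear
`(s, Δ) ↦ (s, s + Δ)`.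
-/

theorem eq_zero_of_tendsto_of_integrableOn_Ioi {E : Type*} [NormedAddCommGroup E] {f : ℝ → E}
    {a : ℝ} {l : E} (hf : IntegrableOn f (Ioi a)) (hl : Tendsto f atTop (𝓝 l)) : l = 0 := by
  by_contra hl0
  obtain ⟨M, hM⟩ := eventually_atTop.1
    (hl.norm.eventually (lt_mem_nhds (half_lt_self (norm_pos_iff.2 hl0))))
  have hconst : IntegrableOn (fun _ => ‖l‖ / 2) (Ioi (max a M)) :=
    (hf.mono_set (Ioi_subset_Ioi (le_max_left a M))).norm.mono' aestronglyMeasurable_const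
      ((ae_restrict_iff' measurableSet_Ioi).2 (ae_of_all _ fun x hx => by
        rw [Real.norm_of_nonneg (by positivity)]
        exact (hM x ((le_max_right a M).trans (le_of_lt hx))).le))
  simp [integrableOn_const_iff, hl0] at hconst

theorem MeasureTheory.SignedMeasure.measurable_apply_of_antitone {α : Type*} [MeasurableSpace α]
    (s : SignedMeasure α) {A : ℝ → Set α} (hA : Antitone A) (hAm : ∀ x, MeasurableSet (A x)) :
    Measurable fun x => s (A x) := by
  have hmono (μ : Measure α) [IsFiniteMeasure μ] : Antitone fun x => μ.real (A x) :=
    fun x y hxy => measureReal_mono (hA hxy)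
  simp_rw [s.apply_eq_posPart_real_sub_negPart_real (hAm _)]
  exact (hmono _).measurable.sub (hmono _).measurable

theorem MeasureTheory.SignedMeasure.tendsto_apply_Ici_atTop (s : SignedMeasure ℝ) :
    Tendsto (fun x => s (Ici x)) atTop (𝓝 0) := by
  have hempty : ⋂ x : ℝ, Ici x = ∅ :=
    eq_empty_of_forall_notMem fun x hx => by linarith [mem_Ici.1 (mem_iInter.1 hx (x + 1))]
  have hvar := tendsto_measure_iInter_atTop (μ := s.totalVariation)
    (fun _ => measurableSet_Ici.nullMeasurableSet) antitone_Ici ⟨0, measure_ne_top _ _⟩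
  rw [hempty, measure_empty] at hvar
  exact squeeze_zero_norm (fun x => s.norm_le_totalVariation _)
    ((ENNReal.tendsto_toReal ENNReal.zero_ne_top).comp hvar)

theorem MeasureTheory.setLIntegral_Ioi_measure_Ici (μ : Measure ℝ) :
    ∫⁻ t in Ioi 0, μ (Ici t) = ∫⁻ s in Ici 0, ENNReal.ofReal s ∂μ := by
  rw [lintegral_eq_lintegral_meas_le (μ.restrict (Ici 0))
    (ae_restrict_of_forall_mem measurableSet_Ici fun _ h => h) aemeasurable_id]
  refine setLIntegral_congr_fun measurableSet_Ioi fun t ht => ?_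
  change μ (Ici t) = μ.restrict (Ici 0) (Ici t)
  rw [Measure.restrict_apply measurableSet_Ici,
    inter_eq_left.2 (Ici_subset_Ici.2 (le_of_lt ht))]

theorem MeasureTheory.integrableOn_measureReal_Ici {μ : Measure ℝ}
    (hmom : ∫⁻ s in Ici 0, ENNReal.ofReal s ∂μ < ⊤) :
    IntegrableOn (fun t => μ.real (Ici t)) (Ioi 0) := by
  refine integrable_toReal_of_lintegral_ne_top ?_ ?_
  · exact (Antitone.measurable fun x y hxy => measure_mono (Ici_subset_Ici.2 hxy)).aemeasurable
  · rw [setLIntegral_Ioi_measure_Ici]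
    exact hmom.ne

theorem MeasureTheory.Integrable.integrable_integral_mul_comp_add {G 𝕜 : Type*} [MeasurableSpace G]
    [AddGroup G] [MeasurableAdd₂ G] {μ : Measure G} [SFinite μ] [μ.IsAddLeftInvariant]
    [RCLike 𝕜] {f g : G → 𝕜} (hf : Integrable f μ) (hg : Integrable g μ) :
    Integrable (fun Δ => ∫ s, f s * g (s + Δ) ∂μ) μ := by
  have hprod : Integrable (fun z : G × G => f z.1 * g (z.1 + z.2)) (μ.prod μ) :=
    (measurePreserving_prod_add μ μ).integrable_comp_of_integrable (hf.mul_prod hg)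
  exact hprod.integral_prod_right

theorem MeasureTheory.IntegrableOn.integrableOn_integral_mul_comp_add {f : ℝ → ℝ} {a : ℝ}
    (hf : IntegrableOn f (Ioi a)) :
    IntegrableOn (fun Δ => ∫ s in Ioi a, f s * f (s + Δ)) (Ioi 0) := by
  set g := (Ioi a).indicator f
  have hg : Integrable g := hf.integrable_indicator measurableSet_Ioi
  refine (hg.integrable_integral_mul_comp_add hg).integrableOn.congr_fun (fun Δ hΔ => ?_)
    measurableSet_Ioi
  rw [← integral_indicator measurableSet_Ioi]
  refine integral_congr_ae (ae_of_all _ fun s => ?_)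
  by_cases hs : a < s
  · have hsΔ : a < s + Δ := by linarith [mem_Ioi.1 hΔ]
    simp [g, hs, hsΔ]
  · simp [g, hs]

noncomputable def memoryKernel (τ : ℝ) (lam kap : SignedMeasure ℝ) (x : ℝ) : ℝ :=
  -(lam (Icc (-τ) (-(min x τ)))) + kap (Ici x)

section memoryKernel

variable {τ : ℝ} {lam kap : SignedMeasure ℝ}

theorem measurable_memoryKernel : Measurable (memoryKernel τ lam kap) :=
  (lam.measurable_apply_of_antitone
      (fun _ _ hxy => Icc_subset_Icc le_rfl (neg_le_neg (min_le_min_right τ hxy)))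
      fun _ => measurableSet_Icc).neg.add
    (kap.measurable_apply_of_antitone antitone_Ici fun _ => measurableSet_Ici)

theorem abs_memoryKernel_le (x : ℝ) :
    |memoryKernel τ lam kap x| ≤ lam.totalVariation.real univ + kap.totalVariation.real univ := by
  have hle (s : SignedMeasure ℝ) (A : Set ℝ) : |s A| ≤ s.totalVariation.real univ :=
    (s.norm_le_totalVariation A).trans (measureReal_mono (subset_univ A))
  exact (abs_add_le _ _).trans (add_le_add ((abs_neg _).trans_le (hle lam _)) (hle kap _))

theorem memoryKernel_of_le {x : ℝ} (hx : τ ≤ x) :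
    memoryKernel τ lam kap x = -lam {-τ} + kap (Ici x) := by
  rw [memoryKernel, min_eq_right hx, Icc_self]

theorem tendsto_memoryKernel_atTop :
    Tendsto (memoryKernel τ lam kap) atTop (𝓝 (-lam {-τ})) := by
  have hlim := kap.tendsto_apply_Ici_atTop.const_add (-lam {-τ})
  rw [add_zero] at hlim
  exact hlim.congr' ((eventually_ge_atTop τ).mono fun _ hx => (memoryKernel_of_le hx).symm)

theorem integrableOn_memoryKernel (hτ : 0 ≤ τ)
    (hmom : ∫⁻ s in Ici 0, ENNReal.ofReal s ∂kap.totalVariation < ⊤) (hatom : lam {-τ} = 0) :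
    IntegrableOn (memoryKernel τ lam kap) (Ioi 0) := by
  rw [← Ioc_union_Ioi_eq_Ioi hτ]
  refine IntegrableOn.union ?_ ?_
  · exact Measure.integrableOn_of_bounded measure_Ioc_lt_top.ne
      measurable_memoryKernel.aestronglyMeasurable (ae_of_all _ abs_memoryKernel_le)
  · refine ((integrableOn_measureReal_Ici hmom).mono_set (Ioi_subset_Ioi hτ)).mono'
      measurable_memoryKernel.aestronglyMeasurable
      ((ae_restrict_iff' measurableSet_Ioi).2 (ae_of_all _ fun x hx => ?_))
    rw [memoryKernel_of_le (le_of_lt hx), hatom, neg_zero, zero_add]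
    exact kap.norm_le_totalVariation _

end memoryKernel

theorem blackScholesLongMemory_short_memory_general
    (σ β τ : ℝ) (hτ : 0 < τ)
    (lam : SignedMeasure ℝ) (kap : SignedMeasure ℝ)
    (K : ℝ → ℝ)
    (hK : ∀ x ≥ (0:ℝ), K x = -(lam (Icc (-τ) (-(min x τ)))) + kap (Ici x))
    (hmom : ∫⁻ s in Ici (0:ℝ), ENNReal.ofReal s ∂kap.totalVariation < ⊤)
    (hKL2 : IntegrableOn (fun s => K s ^ 2) (Ioi 0)) :
    (∀ Δ ≥ (0:ℝ), IntegrableOn (fun s => K s * K (s + Δ)) (Ioi 0)) ∧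
      ∫⁻ Δ in Ioi (0:ℝ),
        ENNReal.ofReal |β ^ 2 * (σ ^ 2 / (1 - β ^ 2 * ∫ s in Ioi (0:ℝ), K s ^ 2)) *
          ∫ s in Ioi (0:ℝ), K s * K (s + Δ)| < ⊤ := by
  set k := memoryKernel τ lam kap
  have hKk : ∀ Δ ≥ (0:ℝ), EqOn (fun s => k s * k (s + Δ)) (fun s => K s * K (s + Δ)) (Ioi 0) :=
    fun Δ hΔ s hs => by
      simp only [k, memoryKernel, hK s (le_of_lt hs), hK (s + Δ) (by linarith [mem_Ioi.1 hs])]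
  have hatom : lam {-τ} = 0 := by
    have hsq : IntegrableOn (fun s => k s ^ 2) (Ioi 0) :=
      hKL2.congr_fun (fun s hs => by simpa [sq] using (hKk 0 le_rfl hs).symm) measurableSet_Ioi
    simpa using eq_zero_of_tendsto_of_integrableOn_Ioi hsq (tendsto_memoryKernel_atTop.pow 2)
  have hk : IntegrableOn k (Ioi 0) := integrableOn_memoryKernel hτ.le hmom hatom
  refine ⟨fun Δ hΔ => ?_, ?_⟩
  · have hbdd : IntegrableOn (fun s => k s * k (s + Δ)) (Ioi 0) :=
      hk.mul_bdd (measurable_memoryKernel.comp (measurable_add_const Δ)).aestronglyMeasurable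
        (ae_of_all _ fun s => abs_memoryKernel_le (s + Δ))
    exact hbdd.congr_fun (hKk Δ hΔ) measurableSet_Ioi
  · have hγ := (hk.integrableOn_integral_mul_comp_add.congr_fun
      (fun Δ hΔ => setIntegral_congr_fun measurableSet_Ioi (hKk Δ (le_of_lt hΔ)))
      measurableSet_Ioi).const_mul (β ^ 2 * (σ ^ 2 / (1 - β ^ 2 * ∫ s in Ioi (0:ℝ), K s ^ 2)))
    simpa only [hasFiniteIntegral_iff_norm, Real.norm_eq_abs] using hγ.2

/-- Theorem 5.3(a) (short memory): if the signed measure `κ` has finite first moment,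
`K ∈ L²(0,∞)` and `β² ∫₀^∞ K² < 1`, then the limiting autocovariance function
`γ(Δ) = β² (σ²/(1−β²∫₀^∞K²)) ∫₀^∞ K(s)K(s+Δ) ds` is well defined and
`∫₀^∞ |γ(Δ)| dΔ < ∞`. Here `K(x) = −λ([−τ, −(x∧τ)]) + κ([x,∞))`. -/
theorem blackScholesLongMemory_short_memory
    (σ β τ : ℝ) (hσ : σ ≠ 0) (hβ : β ≠ 0) (hτ : 0 < τ)
    (lam : SignedMeasure ℝ) (kap : SignedMeasure ℝ)
    (hlam_supp : lam.totalVariation (Icc (-τ) 0)ᶜ = 0)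
    (hkap_supp : kap.totalVariation (Ici 0)ᶜ = 0)
    (hbal : kap (Ici 0) = lam (Icc (-τ) 0))
    (K : ℝ → ℝ)
    (hK : ∀ x ≥ (0:ℝ), K x = -(lam (Icc (-τ) (-(min x τ)))) + kap (Ici x))
    (hmom : ∫⁻ s in Ici (0:ℝ), ENNReal.ofReal s ∂kap.totalVariation < ⊤)
    (hKL2 : IntegrableOn (fun s => K s ^ 2) (Ioi 0))
    (hsmall : β ^ 2 * ∫ s in Ioi (0:ℝ), K s ^ 2 < 1) :
    (∀ Δ ≥ (0:ℝ), IntegrableOn (fun s => K s * K (s + Δ)) (Ioi 0)) ∧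
      ∫⁻ Δ in Ioi (0:ℝ),
        ENNReal.ofReal |β ^ 2 * (σ ^ 2 / (1 - β ^ 2 * ∫ s in Ioi (0:ℝ), K s ^ 2)) *
          ∫ s in Ioi (0:ℝ), K s * K (s + Δ)| < ⊤ :=
  blackScholesLongMemory_short_memory_general σ β τ hτ lam kap K hK hmom hKL2
end

section
/- Suppose κ is a nonnegative finite Borel measure on [0,∞) with ∫₀^∞ s dκ(s) = +∞, and suppose K ∈ L²(0,∞) with β²∫₀^∞ K(s)² ds < 1 where β ≠ 0, σ ≠ 0. Then the function γ : [0,∞) → ℝ defined by γ(Δ) = β² · (σ²/(1 − β²∫₀^∞ K(s)² ds)) · ∫₀^∞ K(s)K(s+Δ) ds satisfies ∫₀^∞ |γ(Δ)| dΔ = +∞. -/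
open MeasureTheory Filter Set Topology

/-!
For `x ≥ τ` the kernel is `K x = F x - λ({-τ})` with `F x = κ([x,∞))` (`measureTail κ`).
Since `F → 0` at infinity and `K ∈ L²`, the atom `λ({-τ})` vanishes, so beyond `τ` the kernel
is the nonnegative nonincreasing tail `F`, whose integral diverges by the layer-cake formula
because `κ` has infinite first moment. Splitting `∫₀^∞ K s K (s + Δ) ds` at `τ` gives, for
`Δ ≥ τ` and any `T ≥ τ`,
`∫₀^∞ K s K (s + Δ) ds ≥ (∫_τ^T F) F (T + Δ) - (∫₀^τ |K|) F Δ`.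
Once `T` is chosen with `∫_τ^T F ≥ ∫₀^τ |K| + 1`, the integral of the right-hand side over
`Δ ∈ (τ, R)` is at least `∫_τ^R F - const`, which tends to infinity with `R`.
-/

noncomputable def measureTail (κ : Measure ℝ) (t : ℝ) : ℝ := (κ (Ici t)).toReal

section measureTail

variable (κ : Measure ℝ)

lemma measureTail_nonneg (t : ℝ) : 0 ≤ measureTail κ t := ENNReal.toReal_nonneg

variable [IsFiniteMeasure κ]

lemma antitone_measureTail : Antitone (measureTail κ) := fun _ _ hab =>
  ENNReal.toReal_mono (measure_ne_top _ _) (measure_mono (Ici_subset_Ici.2 hab))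

lemma tendsto_measureTail_atTop : Tendsto (measureTail κ) atTop (𝓝 0) := by
  have h := tendsto_measure_iInter_atTop (μ := κ) (s := Ici)
    (fun _ => measurableSet_Ici.nullMeasurableSet) (fun _ _ hab => Ici_subset_Ici.2 hab)
    ⟨0, measure_ne_top _ _⟩
  have hempty : (⋂ t : ℝ, Ici t) = ∅ :=
    eq_empty_of_forall_notMem fun x hx => not_le.2 (lt_add_one x) (mem_iInter.1 hx (x + 1))
  rw [hempty, measure_empty] at h
  exact (ENNReal.tendsto_toReal ENNReal.zero_ne_top).comp h

lemma lintegral_measureTail_eq_top (hmom : ∫⁻ s in Ici (0:ℝ), ENNReal.ofReal s ∂κ = ⊤) :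
    ∫⁻ t in Ioi 0, ENNReal.ofReal (measureTail κ t) = ⊤ := by
  have hcake := lintegral_eq_lintegral_meas_lt (κ.restrict (Ici 0))
    ((ae_restrict_iff' measurableSet_Ici).2 (ae_of_all _ fun x hx => hx)) aemeasurable_id
  rw [eq_top_iff, ← hmom]
  refine hcake.le.trans (setLIntegral_mono' measurableSet_Ioi fun t _ => ?_)
  rw [measureTail, ENNReal.ofReal_toReal (measure_ne_top _ _)]
  exact (Measure.restrict_apply_le _ _).trans
    (measure_mono fun x (hx : t < x) => mem_Ici.2 hx.le)

lemma not_integrableOn_measureTail (hmom : ∫⁻ s in Ici (0:ℝ), ENNReal.ofReal s ∂κ = ⊤)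
    (a : ℝ) : ¬ IntegrableOn (measureTail κ) (Ioi a) := by
  intro hint
  have h0 : IntegrableOn (measureTail κ) (Ioi 0) :=
    (((antitone_measureTail κ).intervalIntegrable (a := 0) (b := a)).1.union hint).mono_set
      Ioi_subset_Ioc_union_Ioi
  have hfin : ∫⁻ t in Ioi 0, ‖measureTail κ t‖ₑ < ⊤ := h0.2
  simp only [Real.enorm_of_nonneg (measureTail_nonneg κ _)] at hfin
  exact hfin.ne (lintegral_measureTail_eq_top κ hmom)

end measureTail

lemma tendsto_intervalIntegral_atTop_of_not_integrableOn {f : ℝ → ℝ} {a : ℝ}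
    (hf : ∀ b, IntervalIntegrable f volume a b) (hf0 : ∀ x, 0 ≤ f x)
    (hni : ¬ IntegrableOn f (Ioi a)) : Tendsto (fun b => ∫ x in a..b, f x) atTop atTop := by
  refine tendsto_atTop_atTop_of_monotone' (fun b c hbc => ?_) fun ⟨I, hI⟩ => hni ?_
  · rw [← sub_nonneg, intervalIntegral.integral_interval_sub_left (hf c) (hf b)]
    exact intervalIntegral.integral_nonneg hbc fun x _ => hf0 x
  · refine integrableOn_Ioi_of_intervalIntegral_norm_bounded I a (b := id)
      (fun b => (hf b).1) tendsto_id (Eventually.of_forall fun b => ?_)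
    have hnorm : ∀ x, ‖f x‖ = f x := fun x => Real.norm_of_nonneg (hf0 x)
    simpa only [id, hnorm] using hI (mem_range_self b)

lemma eq_zero_of_integrableOn_Ioi_of_tendsto {f : ℝ → ℝ} {a l : ℝ}
    (hf : IntegrableOn f (Ioi a)) (hl : Tendsto f atTop (𝓝 l)) : l = 0 := by
  by_contra hl0
  have hpos : 0 < |l| / 2 := by positivity
  obtain ⟨b, hb⟩ := eventually_atTop.1 <|
    (hl.abs.eventually (lt_mem_nhds (half_lt_self (abs_pos.2 hl0))))
  have hconst : IntegrableOn (fun _ => |l| / 2) (Ioi (max a b)) := by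
    refine Integrable.mono' (hf.mono_set (Ioi_subset_Ioi (le_max_left _ _))).norm
      aestronglyMeasurable_const
      ((ae_restrict_iff' measurableSet_Ioi).2 (ae_of_all _ fun x hx => ?_))
    rw [Real.norm_of_nonneg hpos.le, Real.norm_eq_abs]
    exact (hb x ((le_max_right _ _).trans (le_of_lt hx))).le
  rw [integrableOn_const_iff, Real.volume_Ioi] at hconst
  rcases hconst with h | h
  · exact hpos.ne' (by simpa using h)
  · exact lt_irrefl _ h

lemma lintegral_ofReal_abs_eq_top_of_le {g h : ℝ → ℝ} {a : ℝ}
    (hle : ∀ x, a < x → h x ≤ g x) (hh : ∀ b, IntervalIntegrable h volume a b)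
    (htop : Tendsto (fun b => ∫ x in a..b, h x) atTop atTop) :
    ∫⁻ x in Ioi a, ENNReal.ofReal |g x| = ⊤ := by
  refine ENNReal.eq_top_of_forall_nnreal_le fun r => ?_
  obtain ⟨b, hrb, hab⟩ :=
    ((htop.eventually (eventually_ge_atTop (r : ℝ))).and (eventually_ge_atTop a)).exists
  have hle_toReal :
      ∫ x in Ioc a b, h x ≤ (∫⁻ x in Ioc a b, ENNReal.ofReal (h x)).toReal := by
    rw [integral_eq_lintegral_pos_part_sub_lintegral_neg_part (hh b).1]
    linarith [ENNReal.toReal_nonneg (a := ∫⁻ x in Ioc a b, ENNReal.ofReal (-h x))]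
  calc (r : ENNReal) = ENNReal.ofReal r := (ENNReal.ofReal_coe_nnreal).symm
    _ ≤ ∫⁻ x in Ioc a b, ENNReal.ofReal (h x) := by
      refine ENNReal.ofReal_le_of_le_toReal (hrb.trans ?_)
      rwa [intervalIntegral.integral_of_le hab]
    _ ≤ ∫⁻ x in Ioc a b, ENNReal.ofReal |g x| :=
      setLIntegral_mono' measurableSet_Ioc fun x hx =>
        ENNReal.ofReal_le_ofReal ((hle x hx.1).trans (le_abs_self _))
    _ ≤ ∫⁻ x in Ioi a, ENNReal.ofReal |g x| := lintegral_mono_set Ioc_subset_Ioi_self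

lemma measurable_signedMeasure_Icc (s : SignedMeasure ℝ) (a : ℝ) :
    Measurable fun x => s (Icc a x) := by
  have hmono : ∀ (μ : Measure ℝ) [IsFiniteMeasure μ], Monotone fun x => (μ (Icc a x)).toReal :=
    fun _ _ _ _ hxy =>
      ENNReal.toReal_mono (measure_ne_top _ _) (measure_mono (Icc_subset_Icc_right hxy))
  have hjordan : (fun x => s (Icc a x)) = fun x =>
      (s.toJordanDecomposition.posPart (Icc a x)).toReal -
        (s.toJordanDecomposition.negPart (Icc a x)).toReal := by
    ext x
    conv_lhs => rw [← s.toSignedMeasure_toJordanDecomposition]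
    exact Measure.toSignedMeasure_sub_apply measurableSet_Icc
  rw [hjordan]
  exact (hmono _).measurable.sub (hmono _).measurable

lemma MeasureTheory.MemLp.integrableOn_mul_comp_add {f : ℝ → ℝ} {a Δ : ℝ}
    (hf : MemLp f 2 (volume.restrict (Ioi a))) (hΔ : 0 ≤ Δ) :
    IntegrableOn (fun s => f s * f (s + Δ)) (Ioi a) := by
  have hshift : MeasurePreserving (· + Δ) (volume.restrict (Ioi a))
      (volume.restrict (Ioi (a + Δ))) := by
    simpa only [preimage_add_const_Ioi, add_sub_cancel_right] using
      (measurePreserving_add_right volume Δ).restrict_preimage (measurableSet_Ioi (a := a + Δ))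
  exact hf.integrable_mul ((hf.mono_measure (Measure.restrict_mono
    (Ioi_subset_Ioi (by linarith)) le_rfl)).comp_measurePreserving hshift)

lemma MeasureTheory.MemLp.intervalIntegrable_of_Ioi {f : ℝ → ℝ} {p : ENNReal} {a b : ℝ}
    (hf : MemLp f p (volume.restrict (Ioi a))) (hp : 1 ≤ p) (hab : a ≤ b) :
    IntervalIntegrable f volume a b := by
  have : IsFiniteMeasure (volume.restrict (Ioc a b)) :=
    isFiniteMeasure_restrict.2 measure_Ioc_lt_top.ne
  exact (intervalIntegrable_iff_integrableOn_Ioc_of_le hab).2 <|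
    (hf.mono_measure (Measure.restrict_mono Ioc_subset_Ioi_self le_rfl)).integrable hp

lemma lintegral_ofReal_abs_const_mul_eq_top {α : Type*} [MeasurableSpace α] {μ : Measure α}
    {g : α → ℝ} {c : ℝ} (hc : c ≠ 0) (hg : ∫⁻ x, ENNReal.ofReal |g x| ∂μ = ⊤) :
    ∫⁻ x, ENNReal.ofReal |c * g x| ∂μ = ⊤ := by
  simp_rw [abs_mul, ENNReal.ofReal_mul (abs_nonneg c)]
  rw [lintegral_const_mul' _ _ ENNReal.ofReal_ne_top, hg]
  exact ENNReal.mul_top (by simpa using hc)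

section Autocovariance

variable {K F : ℝ → ℝ} {τ : ℝ}

lemma eq_of_eq_const_add_of_integrableOn_sq {a c : ℝ}
    (hK : IntegrableOn (fun x => K x ^ 2) (Ioi a)) (hF : Tendsto F atTop (𝓝 0))
    (hKF : ∀ x, τ ≤ x → K x = c + F x) :
    ∀ x, τ ≤ x → K x = F x := by
  have hlim : Tendsto (fun x => K x ^ 2) atTop (𝓝 ((c + 0) ^ 2)) :=
    ((tendsto_const_nhds.add hF).pow 2).congr' <|
      (eventually_ge_atTop τ).mono fun x hx => by simp only [hKF x hx]
  have hc : c = 0 := by simpa using eq_zero_of_integrableOn_Ioi_of_tendsto hK hlim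
  intro x hx
  rw [hKF x hx, hc, zero_add]

lemma abs_intervalIntegral_mul_comp_add_le (hF : Antitone F) (hF0 : ∀ x, 0 ≤ F x)
    (hKF : ∀ x, τ ≤ x → K x = F x) (hτ : 0 ≤ τ) (hK : IntervalIntegrable K volume 0 τ)
    {Δ : ℝ} (hKK : IntervalIntegrable (fun s => K s * K (s + Δ)) volume 0 τ) (hΔ : τ ≤ Δ) :
    |∫ s in 0..τ, K s * K (s + Δ)| ≤ (∫ s in 0..τ, |K s|) * F Δ := by
  calc |∫ s in 0..τ, K s * K (s + Δ)| ≤ ∫ s in 0..τ, |K s * K (s + Δ)| :=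
        intervalIntegral.abs_integral_le_integral_abs hτ
    _ ≤ ∫ s in 0..τ, |K s| * F Δ := by
        refine intervalIntegral.integral_mono_on hτ hKK.abs (hK.abs.mul_const _) fun s hs => ?_
        rw [abs_mul, hKF (s + Δ) (by linarith [hs.1]), abs_of_nonneg (hF0 _)]
        exact mul_le_mul_of_nonneg_left (hF (by linarith [hs.1])) (abs_nonneg _)
    _ = (∫ s in 0..τ, |K s|) * F Δ := intervalIntegral.integral_mul_const _ _

lemma intervalIntegral_mul_le_setIntegral_mul_comp_add (hF : Antitone F) (hF0 : ∀ x, 0 ≤ F x)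
    (hKF : ∀ x, τ ≤ x → K x = F x) {Δ T : ℝ}
    (hKK : IntegrableOn (fun s => K s * K (s + Δ)) (Ioi τ)) (hΔ : 0 ≤ Δ) (hT : τ ≤ T) :
    (∫ t in τ..T, F t) * F (T + Δ) ≤ ∫ s in Ioi τ, K s * K (s + Δ) := by
  have hKK_nonneg : ∀ s, τ ≤ s → 0 ≤ K s * K (s + Δ) := fun s hs => by
    rw [hKF s hs, hKF (s + Δ) (by linarith)]
    exact mul_nonneg (hF0 s) (hF0 _)
  calc (∫ t in τ..T, F t) * F (T + Δ) = ∫ t in τ..T, F t * F (T + Δ) :=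
        (intervalIntegral.integral_mul_const _ _).symm
    _ ≤ ∫ s in τ..T, K s * K (s + Δ) := by
        refine intervalIntegral.integral_mono_on hT (hF.intervalIntegrable.mul_const _)
          ((intervalIntegrable_iff_integrableOn_Ioc_of_le hT).2
            (hKK.mono_set Ioc_subset_Ioi_self)) fun s hs => ?_
        rw [hKF s hs.1, hKF (s + Δ) (by linarith [hs.1])]
        exact mul_le_mul_of_nonneg_left (hF (by linarith [hs.2])) (hF0 s)
    _ = ∫ s in Ioc τ T, K s * K (s + Δ) := intervalIntegral.integral_of_le hT
    _ ≤ ∫ s in Ioi τ, K s * K (s + Δ) :=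
        setIntegral_mono_set hKK
          ((ae_restrict_iff' measurableSet_Ioi).2 (ae_of_all _ fun s hs => hKK_nonneg s hs.le))
          Ioc_subset_Ioi_self.eventuallyLE

lemma sub_le_integral_mul_comp_add (hF : Antitone F) (hF0 : ∀ x, 0 ≤ F x)
    (hKF : ∀ x, τ ≤ x → K x = F x) (hτ : 0 ≤ τ) (hK : IntervalIntegrable K volume 0 τ)
    {Δ T : ℝ} (hKK : IntegrableOn (fun s => K s * K (s + Δ)) (Ioi 0)) (hΔ : τ ≤ Δ)
    (hT : τ ≤ T) :
    (∫ t in τ..T, F t) * F (T + Δ) - (∫ s in 0..τ, |K s|) * F Δ ≤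
      ∫ s in Ioi 0, K s * K (s + Δ) := by
  have hhead := abs_intervalIntegral_mul_comp_add_le hF hF0 hKF hτ hK
    ((intervalIntegrable_iff_integrableOn_Ioc_of_le hτ).2 (hKK.mono_set Ioc_subset_Ioi_self)) hΔ
  have htail := intervalIntegral_mul_le_setIntegral_mul_comp_add hF hF0 hKF
    (hKK.mono_set (Ioi_subset_Ioi hτ)) (hτ.trans hΔ) hT
  rw [← intervalIntegral.integral_interval_add_Ioi hKK (hKK.mono_set (Ioi_subset_Ioi hτ))]
  linarith [neg_abs_le (∫ s in 0..τ, K s * K (s + Δ))]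

lemma intervalIntegral_sub_le_intervalIntegral_comp_add (hF : Antitone F) (hF0 : ∀ x, 0 ≤ F x)
    {L M T R : ℝ} (hM : 0 ≤ M) (hLM : M + 1 ≤ L) (hT : 0 ≤ T) (hR : τ + T ≤ R) :
    (∫ t in τ..R, F t) - L * ∫ t in τ..τ + T, F t ≤
      ∫ Δ in τ..R, (L * F (T + Δ) - M * F Δ) := by
  have hFi : ∀ a b, IntervalIntegrable F volume a b := fun _ _ => hF.intervalIntegrable
  have hsplit : ∫ t in τ..R, F t = (∫ t in τ..τ + T, F t) + ∫ t in τ + T..R, F t :=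
    (intervalIntegral.integral_add_adjacent_intervals (hFi _ _) (hFi _ _)).symm
  have hshift : ∫ t in τ + T..R, F t ≤ ∫ Δ in τ..R, F (T + Δ) := by
    rw [intervalIntegral.integral_comp_add_left F T, add_comm T τ]
    exact intervalIntegral.integral_mono_interval le_rfl hR (by linarith)
      (ae_of_all _ fun t => hF0 t) (hFi _ _)
  have hI : 0 ≤ ∫ t in τ..R, F t :=
    intervalIntegral.integral_nonneg (by linarith) fun t _ => hF0 t
  have hFT : Antitone fun Δ => F (T + Δ) := fun x y hxy => hF (by linarith)
  rw [intervalIntegral.integral_sub (hFT.intervalIntegrable.const_mul L) ((hFi _ _).const_mul M),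
    intervalIntegral.integral_const_mul, intervalIntegral.integral_const_mul]
  nlinarith [mul_le_mul_of_nonneg_left hshift (by linarith : 0 ≤ L)]

lemma tendsto_intervalIntegral_comp_add_sub_atTop {L M T : ℝ} (hF : Antitone F)
    (hF0 : ∀ x, 0 ≤ F x) (hM : 0 ≤ M) (hLM : M + 1 ≤ L) (hT : 0 ≤ T)
    (htop : Tendsto (fun R => ∫ t in τ..R, F t) atTop atTop) :
    Tendsto (fun R => ∫ Δ in τ..R, (L * F (T + Δ) - M * F Δ)) atTop atTop := by
  refine tendsto_atTop_mono' _ ((eventually_ge_atTop (τ + T)).mono fun R hR =>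
    intervalIntegral_sub_le_intervalIntegral_comp_add hF hF0 hM hLM hT hR) ?_
  simpa only [sub_eq_add_neg] using tendsto_atTop_add_const_right _ _ htop

lemma lintegral_ofReal_abs_integral_mul_comp_add_eq_top (hτ : 0 ≤ τ)
    (hF : Antitone F) (hF0 : ∀ x, 0 ≤ F x) (hKF : ∀ x, τ ≤ x → K x = F x)
    (hK : MemLp K 2 (volume.restrict (Ioi 0)))
    (hFtop : Tendsto (fun R => ∫ t in τ..R, F t) atTop atTop) :
    ∫⁻ Δ in Ioi 0, ENNReal.ofReal |∫ s in Ioi 0, K s * K (s + Δ)| = ⊤ := by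
  set M := ∫ s in 0..τ, |K s|
  have hM : 0 ≤ M := intervalIntegral.integral_nonneg hτ fun s _ => abs_nonneg _
  obtain ⟨T, hTM, hTτ⟩ :=
    ((hFtop.eventually (eventually_ge_atTop (M + 1))).and (eventually_ge_atTop τ)).exists
  have hlower : ∀ Δ, τ < Δ → (∫ t in τ..T, F t) * F (T + Δ) - M * F Δ ≤
      ∫ s in Ioi 0, K s * K (s + Δ) := fun Δ hΔ =>
    sub_le_integral_mul_comp_add hF hF0 hKF hτ (hK.intervalIntegrable_of_Ioi one_le_two hτ)
      (hK.integrableOn_mul_comp_add (hτ.trans hΔ.le)) hΔ.le hTτ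
  have hFT : Antitone fun Δ => F (T + Δ) := fun x y hxy => hF (by linarith)
  have hlower_int : ∀ R, IntervalIntegrable
      (fun Δ => (∫ t in τ..T, F t) * F (T + Δ) - M * F Δ) volume τ R :=
    fun R => (hFT.intervalIntegrable.const_mul _).sub (hF.intervalIntegrable.const_mul _)
  exact eq_top_mono (lintegral_mono_set (Ioi_subset_Ioi hτ)) <|
    lintegral_ofReal_abs_eq_top_of_le hlower hlower_int <|
      tendsto_intervalIntegral_comp_add_sub_atTop hF hF0 hM hTM (hτ.trans hTτ) hFtop

end Autocovariance

lemma aestronglyMeasurable_of_eq_signedMeasure_add_measureTail {lam : SignedMeasure ℝ}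
    {kap : Measure ℝ} [IsFiniteMeasure kap] {K : ℝ → ℝ} {τ : ℝ}
    (hK : ∀ x ≥ (0:ℝ), K x = -(lam (Icc (-τ) (-(min x τ)))) + (kap (Ici x)).toReal) :
    AEStronglyMeasurable K (volume.restrict (Ioi 0)) := by
  have hmeas : Measurable fun x => -lam (Icc (-τ) (-min x τ)) + measureTail kap x :=
    ((measurable_signedMeasure_Icc lam (-τ)).comp
      (measurable_id.min measurable_const).neg).neg.add (antitone_measureTail kap).measurable
  exact hmeas.aestronglyMeasurable.congr <|
    (ae_restrict_iff' measurableSet_Ioi).2 (ae_of_all _ fun x hx => (hK x (le_of_lt hx)).symm)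

theorem blackScholesLongMemory_long_memory_general
    (σ β τ : ℝ) (hσ : σ ≠ 0) (hβ : β ≠ 0) (hτ : 0 < τ)
    (lam : SignedMeasure ℝ) (kap : Measure ℝ) [IsFiniteMeasure kap]
    (K : ℝ → ℝ)
    (hK : ∀ x ≥ (0:ℝ), K x = -(lam (Icc (-τ) (-(min x τ)))) + (kap (Ici x)).toReal)
    (hmom : ∫⁻ s in Ici (0:ℝ), ENNReal.ofReal s ∂kap = ⊤)
    (hKL2 : IntegrableOn (fun s => K s ^ 2) (Ioi 0))
    (hsmall : β ^ 2 * ∫ s in Ioi (0:ℝ), K s ^ 2 < 1) :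
    ∫⁻ Δ in Ioi (0:ℝ),
      ENNReal.ofReal |β ^ 2 * (σ ^ 2 / (1 - β ^ 2 * ∫ s in Ioi (0:ℝ), K s ^ 2)) *
        ∫ s in Ioi (0:ℝ), K s * K (s + Δ)| = ⊤ := by
  have hKF : ∀ x, τ ≤ x → K x = measureTail kap x :=
    eq_of_eq_const_add_of_integrableOn_sq hKL2 (tendsto_measureTail_atTop kap) fun x hx => by
      rw [hK x (hτ.le.trans hx), min_eq_right hx]; rfl
  have hKmem : MemLp K 2 (volume.restrict (Ioi 0)) := (memLp_two_iff_integrable_sq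
    (aestronglyMeasurable_of_eq_signedMeasure_add_measureTail hK)).2 hKL2
  have hFtop := tendsto_intervalIntegral_atTop_of_not_integrableOn
    (fun _ => (antitone_measureTail kap).intervalIntegrable) (measureTail_nonneg kap)
    (not_integrableOn_measureTail kap hmom τ)
  have hC : β ^ 2 * (σ ^ 2 / (1 - β ^ 2 * ∫ s in Ioi (0:ℝ), K s ^ 2)) ≠ 0 :=
    mul_ne_zero (pow_ne_zero 2 hβ) (div_ne_zero (pow_ne_zero 2 hσ) (by linarith))
  exact lintegral_ofReal_abs_const_mul_eq_top hC <|
    lintegral_ofReal_abs_integral_mul_comp_add_eq_top hτ.le (antitone_measureTail kap)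
      (measureTail_nonneg kap) hKF hKmem hFtop

/-- Theorem 5.3(b) (long memory): if `κ` is a nonnegative finite measure with infinite first
moment, `K ∈ L²(0,∞)` and `β² ∫₀^∞ K² < 1`, then the limiting autocovariance function
`γ(Δ) = β² (σ²/(1−β²∫₀^∞K²)) ∫₀^∞ K(s)K(s+Δ) ds` satisfies `∫₀^∞ |γ(Δ)| dΔ = +∞`.
Here `K(x) = −λ([−τ, −(x∧τ)]) + κ([x,∞))`. -/
theorem blackScholesLongMemory_long_memory
    (σ β τ : ℝ) (hσ : σ ≠ 0) (hβ : β ≠ 0) (hτ : 0 < τ)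
    (lam : SignedMeasure ℝ) (kap : Measure ℝ) [IsFiniteMeasure kap]
    (hlam_supp : lam.totalVariation (Icc (-τ) 0)ᶜ = 0)
    (hkap_supp : kap (Ici 0)ᶜ = 0)
    (hbal : (kap (Ici 0)).toReal = lam (Icc (-τ) 0))
    (K : ℝ → ℝ)
    (hK : ∀ x ≥ (0:ℝ), K x = -(lam (Icc (-τ) (-(min x τ)))) + (kap (Ici x)).toReal)
    (hmom : ∫⁻ s in Ici (0:ℝ), ENNReal.ofReal s ∂kap = ⊤)
    (hKL2 : IntegrableOn (fun s => K s ^ 2) (Ioi 0))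
    (hsmall : β ^ 2 * ∫ s in Ioi (0:ℝ), K s ^ 2 < 1) :
    ∫⁻ Δ in Ioi (0:ℝ),
      ENNReal.ofReal |β ^ 2 * (σ ^ 2 / (1 - β ^ 2 * ∫ s in Ioi (0:ℝ), K s ^ 2)) *
        ∫ s in Ioi (0:ℝ), K s * K (s + Δ)| = ⊤ :=
  blackScholesLongMemory_long_memory_general σ β τ hσ hβ hτ lam kap K hK hmom hKL2 hsmall
end

section
/- Let K : [0,∞) → [0,∞) be nonnegative, non-increasing, and not integrable on (0,∞), i.e. ∫₀^∞ K(s) ds = +∞. Then the function f(Δ) := ∫₀^∞ K(s)K(s+Δ) ds (with values in [0,∞]) satisfies ∫₀^∞ f(Δ) dΔ = +∞. -/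
open MeasureTheory Set

/-!
Extend `K` by `K 0` to the left to get a measurable antitone function. Since `K` is bounded on
every `(0, a]`, each tail `∫ₐ^∞ K` is infinite; in particular `K > 0`, for otherwise `K`
would vanish on a tail. By Tonelli the double integral equals
`∫₀^∞ K(s) (∫ₛ^∞ K(t) dt) ds`, whose integrand is `K(s) · ∞ = ∞`.
-/

lemma setLIntegral_Ioi_add_left (f : ℝ → ENNReal) (s : ℝ) :
    ∫⁻ Δ in Ioi 0, f (s + Δ) = ∫⁻ t in Ioi s, f t := by
  have hpre : (fun x : ℝ => s + x) ⁻¹' Ioi s = Ioi 0 := by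
    ext x
    simp
  rw [← hpre]
  exact (measurePreserving_add_left volume s).setLIntegral_comp_preimage_emb
    (measurableEmbedding_addLeft s) f (Ioi s)

section AntitoneOn

variable {K : ℝ → ℝ} (hK : AntitoneOn K (Ici 0))
  (hdiv : ∫⁻ s in Ioi 0, ENNReal.ofReal (K s) = ⊤)
include hK hdiv

lemma AntitoneOn.setLIntegral_Ioi_eq_top {a : ℝ} (ha : 0 ≤ a) :
    ∫⁻ t in Ioi a, ENNReal.ofReal (K t) = ⊤ := by
  have hhead : ∫⁻ t in Ioc 0 a, ENNReal.ofReal (K t) ≠ ⊤ := by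
    refine ne_top_of_le_ne_top ?_ (setLIntegral_mono' measurableSet_Ioc fun t ht =>
      ENNReal.ofReal_le_ofReal (hK self_mem_Ici (le_of_lt ht.1) ht.1.le))
    rw [setLIntegral_const]
    exact ENNReal.mul_ne_top ENNReal.ofReal_ne_top measure_Ioc_lt_top.ne
  have hsplit :
      ⊤ ≤ (∫⁻ t in Ioc 0 a, ENNReal.ofReal (K t)) + ∫⁻ t in Ioi a, ENNReal.ofReal (K t) :=
    calc ⊤ = ∫⁻ t in Ioc 0 a ∪ Ioi a, ENNReal.ofReal (K t) := by
          rw [Ioc_union_Ioi_eq_Ioi ha, hdiv]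
      _ ≤ _ := lintegral_union_le _ _ _
  by_contra htail
  exact ENNReal.add_ne_top.2 ⟨hhead, htail⟩ (top_le_iff.1 hsplit)

lemma AntitoneOn.pos_of_lintegral_eq_top {s : ℝ} (hs : 0 ≤ s) : 0 < K s := by
  by_contra! hKs
  have hvanish : ∫⁻ t in Ioi s, ENNReal.ofReal (K t) = 0 := by
    refine setLIntegral_eq_zero measurableSet_Ioi fun t ht => ENNReal.ofReal_eq_zero.2 ?_
    exact (hK hs (hs.trans (le_of_lt ht)) (le_of_lt ht)).trans hKs
  simp [hK.setLIntegral_Ioi_eq_top hdiv hs] at hvanish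

lemma AntitoneOn.lintegral_mul_shift_eq_top {s : ℝ} (hs : 0 ≤ s) :
    ∫⁻ Δ in Ioi 0, ENNReal.ofReal (K s * K (s + Δ)) = ⊤ := by
  have hKs := hK.pos_of_lintegral_eq_top hdiv hs
  simp_rw [ENNReal.ofReal_mul hKs.le]
  rw [lintegral_const_mul' _ _ ENNReal.ofReal_ne_top, setLIntegral_Ioi_add_left
    (fun t => ENNReal.ofReal (K t)), hK.setLIntegral_Ioi_eq_top hdiv hs]
  exact ENNReal.mul_top (ENNReal.ofReal_pos.2 hKs).ne'

end AntitoneOn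

lemma Antitone.lintegral_autocov_eq_top {g : ℝ → ℝ} (hg : Antitone g)
    (hdiv : ∫⁻ s in Ioi 0, ENNReal.ofReal (g s) = ⊤) :
    ∫⁻ Δ in Ioi 0, ∫⁻ s in Ioi 0, ENNReal.ofReal (g s * g (s + Δ)) = ⊤ := by
  have hmeas : Measurable fun p : ℝ × ℝ => ENNReal.ofReal (g p.2 * g (p.2 + p.1)) := by
    have := hg.measurable
    fun_prop
  rw [lintegral_lintegral_swap hmeas.aemeasurable, setLIntegral_congr_fun measurableSet_Ioi
    fun s hs => (hg.antitoneOn _).lintegral_mul_shift_eq_top hdiv (le_of_lt hs)]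
  simp

theorem blackScholesLongMemory_nonintegrable_autocov_general
    (K : ℝ → ℝ)
    (hKmono : AntitoneOn K (Ici 0))
    (hKdiv : ∫⁻ s in Ioi (0:ℝ), ENNReal.ofReal (K s) = ⊤) :
    ∫⁻ Δ in Ioi (0:ℝ), (∫⁻ s in Ioi (0:ℝ), ENNReal.ofReal (K s * K (s + Δ))) = ⊤ := by
  set g : ℝ → ℝ := fun x => K (max x 0)
  have hg : Antitone g := fun x y hxy =>
    hKmono (le_max_right x 0) (le_max_right y 0) (max_le_max_right 0 hxy)
  have hgK : EqOn g K (Ici 0) := fun x hx => by simp [g, max_eq_left (mem_Ici.1 hx)]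
  have hgdiv : ∫⁻ s in Ioi 0, ENNReal.ofReal (g s) = ⊤ := by
    rwa [setLIntegral_congr_fun measurableSet_Ioi fun s hs => by
      rw [hgK (Ioi_subset_Ici_self hs)]]
  convert hg.lintegral_autocov_eq_top hgdiv using 1
  refine setLIntegral_congr_fun measurableSet_Ioi fun Δ hΔ =>
    setLIntegral_congr_fun measurableSet_Ioi fun s hs => ?_
  rw [hgK (Ioi_subset_Ici_self hs), hgK (mem_Ici.2 (add_pos hs hΔ).le)]

/-- Key deterministic lemma underlying Theorem 5.3(b): if `K ≥ 0` is non-increasing on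
`[0,∞)` and `∫₀^∞ K(s) ds = +∞`, then `f(Δ) = ∫₀^∞ K(s)K(s+Δ) ds` (with values in `[0,∞]`)
satisfies `∫₀^∞ f(Δ) dΔ = +∞`. -/
theorem blackScholesLongMemory_nonintegrable_autocov
    (K : ℝ → ℝ) (hKnonneg : ∀ s ≥ (0:ℝ), 0 ≤ K s)
    (hKmono : AntitoneOn K (Ici 0))
    (hKdiv : ∫⁻ s in Ioi (0:ℝ), ENNReal.ofReal (K s) = ⊤) :
    ∫⁻ Δ in Ioi (0:ℝ), (∫⁻ s in Ioi (0:ℝ), ENNReal.ofReal (K s * K (s + Δ))) = ⊤ :=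
  blackScholesLongMemory_nonintegrable_autocov_general K hKmono hKdiv
end

section
/- Let α > 1, let L : [0,∞) → (0,∞) be slowly varying at infinity, and let k : (0,∞) → (0,∞) be a continuous integrable function with k(t) ~ L(t)t^{−α−1} as t → ∞ (i.e. k is regularly varying at infinity with index −1−α). Define K(x) = ∫ₓ^∞ k(s) ds and suppose β²∫₀^∞ K(s)² ds < 1 with β ≠ 0, σ ≠ 0. Then the function γ(Δ) = β² · (σ²/(1 − β²∫₀^∞ K(s)² ds)) · ∫₀^∞ K(s)K(s+Δ) ds is integrable on (0,∞) and satisfies γ(Δ) ~ β² · (σ²/(1 − β²∫₀^∞ K(s)² ds)) · (∫₀^∞ K(s) ds) · (1/α) L(Δ) Δ^{−α} as Δ → ∞. -/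
/-!
Karamata's theorem turns the regular variation of `k` (index `-α - 1`) into
`K(t) ~ t k(t) / α ~ L(t) t^(-α) / α`; its dominated-convergence step rests on Potter's bound,
which comes from the uniform convergence theorem for slowly varying functions. So `K` is
regularly varying of index `-α < -1`, hence integrable, and, being monotone, satisfies
`K(s + Δ) / K(Δ) → 1`. Dominated convergence then gives
`∫₀^∞ K(s) K(s + Δ) ds ~ K(Δ) ∫₀^∞ K`, while `∫₀^∞ K(s) K(s + Δ) ds ≤ K(Δ) ∫₀^∞ K` gives
integrability in `Δ`.
-/

open MeasureTheory Filter Set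

/-- `L : (0,∞) → (0,∞)` is slowly varying at infinity if `L(xt)/L(t) → 1` as `t → ∞`
for every `x > 0`. -/
def SlowlyVarying (L : ℝ → ℝ) : Prop :=
  ∀ x > (0:ℝ), Filter.Tendsto (fun t => L (x * t) / L t) Filter.atTop (nhds 1)

open Topology

theorem eventually_forall_Icc_abs_add_sub_le {ψ : ℝ → ℝ} (hψ : Continuous ψ)
    (h : ∀ a, Tendsto (fun u => ψ (u + a) - ψ u) atTop (𝓝 0)) {ε : ℝ} (hε : 0 < ε) :
    ∀ᶠ u in atTop, ∀ a ∈ Icc (0:ℝ) 1, |ψ (u + a) - ψ u| ≤ ε := by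
  set E : ℕ → Set ℝ := fun n => {x | ∀ u ≥ (n:ℝ), |ψ (u + x) - ψ u| ≤ ε / 2}
  have hE_closed (n : ℕ) : IsClosed (E n) := by
    simp only [E, ofPred_forall]
    exact isClosed_iInter fun u => isClosed_iInter fun _ =>
      isClosed_le (by fun_prop) continuous_const
  have hE_mono : Monotone E := fun m n hmn x hx u hu =>
    hx u (le_trans (Nat.cast_le.2 hmn) hu)
  have hE_union : ⋃ n, E n = univ := by
    refine eq_univ_of_forall fun x => mem_iUnion.2 ?_
    obtain ⟨N, hN⟩ := eventually_atTop.1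
      ((h x).abs.eventually_lt_const (u := ε / 2) (by simpa using hε))
    exact ⟨⌈N⌉₊, fun u hu => (hN u ((Nat.le_ceil N).trans hu)).le⟩
  have hvol (c : ℝ) : Tendsto (fun n => volume (Icc 0 c ∩ E n)) atTop
      (𝓝 (ENNReal.ofReal c)) := by
    have := tendsto_measure_iUnion_atTop (μ := volume)
      (fun m n hmn => inter_subset_inter_right (Icc 0 c) (hE_mono hmn))
    rwa [← inter_iUnion, hE_union, inter_univ, Real.volume_Icc, sub_zero] at this
  obtain ⟨n, hn3, hn2⟩ := (((hvol 3).eventually_const_lt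
    (by norm_num : ENNReal.ofReal 2 < ENNReal.ofReal 3)).and ((hvol 2).eventually_const_lt
    (by norm_num : ENNReal.ofReal 1 < ENNReal.ofReal 2))).exists
  filter_upwards [eventually_ge_atTop (n:ℝ)] with u hu a ha
  -- Two subsets of `[0, 3]` of total measure `> 3` meet: this gives `x ∈ E n` with `x - a ∈ E n`.
  obtain ⟨x, ⟨-, hx⟩, hxa, hxa'⟩ := nonempty_inter_of_measure_lt_add volume
    (s := Icc 0 3 ∩ E n) (t := (· + -a) ⁻¹' (Icc 0 2 ∩ E n)) (u := Icc 0 3)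
    (measurableSet_preimage (measurable_add_const _)
      (measurableSet_Icc.inter (hE_closed n).measurableSet))
    inter_subset_left (fun y hy => ⟨by linarith [hy.1.1, ha.1], by linarith [hy.1.2, ha.2]⟩)
    (by
      rw [measure_preimage_add_right, Real.volume_Icc]
      calc ENNReal.ofReal (3 - 0) = ENNReal.ofReal 2 + ENNReal.ofReal 1 := by
              rw [← ENNReal.ofReal_add] <;> norm_num
        _ < _ := ENNReal.add_lt_add hn3 hn2)
  have h1 := hx u hu
  have h2 := hxa' (u + a) (by linarith [ha.1])
  rw [show u + a + (x + -a) = u + x by ring] at h2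
  calc |ψ (u + a) - ψ u| ≤ |ψ (u + a) - ψ (u + x)| + |ψ (u + x) - ψ u| := abs_sub_le _ _ _
    _ ≤ ε := by rw [abs_sub_comm]; linarith

theorem add_sub_le_mul_add_one {ψ : ℝ → ℝ} {N δ : ℝ}
    (h : ∀ u ≥ N, ∀ a ∈ Icc (0:ℝ) 1, |ψ (u + a) - ψ u| ≤ δ) {u a : ℝ} (hu : N ≤ u) (ha : 0 ≤ a) :
    ψ (u + a) - ψ u ≤ δ * (a + 1) := by
  have hδ : 0 ≤ δ := (abs_nonneg _).trans (h N le_rfl 0 ⟨le_rfl, zero_le_one⟩)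
  have hnat (n : ℕ) : ∀ u ≥ N, ∀ a ∈ Icc (0:ℝ) n, ψ (u + a) - ψ u ≤ δ * n := by
    induction n with
    | zero =>
      intro u _ a ha
      obtain rfl : a = 0 := by simpa using ha
      simp
    | succ n ih =>
      intro u hu a ha
      push_cast at ha ⊢
      rcases le_or_gt a 1 with ha1 | ha1
      · have := (le_abs_self _).trans (h u hu a ⟨ha.1, ha1⟩)
        nlinarith [n.cast_nonneg (α := ℝ)]
      · have h1 := ih (u + 1) (by linarith) (a - 1) ⟨by linarith, by linarith [ha.2]⟩
        have h2 := (le_abs_self _).trans (h u hu 1 ⟨zero_le_one, le_rfl⟩)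
        rw [show u + 1 + (a - 1) = u + a by ring] at h1
        linarith
  calc ψ (u + a) - ψ u ≤ δ * ⌈a⌉₊ := hnat _ u hu a ⟨ha, Nat.le_ceil a⟩
    _ ≤ δ * (a + 1) := mul_le_mul_of_nonneg_left (Nat.ceil_lt_add_one ha).le hδ

theorem SlowlyVarying.tendsto_log_comp_exp_add_sub {h : ℝ → ℝ} (hsv : SlowlyVarying h)
    (hpos : ∀ t > 0, 0 < h t) (a : ℝ) :
    Tendsto (fun u => Real.log (h (Real.exp (u + a))) - Real.log (h (Real.exp u))) atTop
      (𝓝 0) := by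
  have := ((Real.continuousAt_log one_ne_zero).tendsto.comp
    ((hsv _ (Real.exp_pos a)).comp Real.tendsto_exp_atTop))
  rw [Real.log_one] at this
  refine this.congr fun u => ?_
  rw [Function.comp_apply, Function.comp_apply,
    Real.log_div (hpos _ (by positivity)).ne' (hpos _ (Real.exp_pos u)).ne', Real.exp_add,
    mul_comm]

theorem SlowlyVarying.exists_le_mul_rpow {h : ℝ → ℝ} (hsv : SlowlyVarying h)
    (hpos : ∀ t > 0, 0 < h t) (hcont : ContinuousOn h (Ioi 0)) {δ : ℝ} (hδ : 0 < δ) :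
    ∃ T > 0, ∀ t ≥ T, ∀ x ≥ (1:ℝ), h (x * t) ≤ Real.exp δ * x ^ δ * h t := by
  have hψ : Continuous fun u => Real.log (h (Real.exp u)) :=
    (hcont.comp_continuous Real.continuous_exp Real.exp_pos).log
      fun u => (hpos _ (Real.exp_pos u)).ne'
  obtain ⟨N, hN⟩ := eventually_atTop.1 (eventually_forall_Icc_abs_add_sub_le hψ
    (hsv.tendsto_log_comp_exp_add_sub hpos) hδ)
  refine ⟨Real.exp N, Real.exp_pos N, fun t ht x hx => ?_⟩
  have ht0 : 0 < t := (Real.exp_pos N).trans_le ht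
  have hx0 : 0 < x := one_pos.trans_le hx
  have key := add_sub_le_mul_add_one (ψ := fun u => Real.log (h (Real.exp u))) hN
    (Real.le_log_iff_exp_le ht0 |>.2 ht) (Real.log_nonneg hx)
  beta_reduce at key
  rw [← Real.log_mul ht0.ne' hx0.ne', Real.exp_log (mul_pos ht0 hx0), Real.exp_log ht0,
    sub_le_iff_le_add, mul_comm t x] at key
  calc h (x * t) = Real.exp (Real.log (h (x * t))) := (Real.exp_log (hpos _ (by positivity))).symm
    _ ≤ Real.exp (δ * (Real.log x + 1) + Real.log (h t)) := Real.exp_le_exp.2 key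
    _ = Real.exp δ * x ^ δ * h t := by
      rw [Real.exp_add, Real.exp_log (hpos t ht0), Real.rpow_def_of_pos hx0, mul_add, mul_one,
        Real.exp_add, mul_comm δ]; ring

def RegularlyVarying (f : ℝ → ℝ) (ρ : ℝ) : Prop :=
  ∀ x > (0:ℝ), Tendsto (fun t => f (x * t) / f t) atTop (𝓝 (x ^ ρ))

theorem regularlyVarying_zero_iff {f : ℝ → ℝ} : RegularlyVarying f 0 ↔ SlowlyVarying f := by
  simp only [RegularlyVarying, SlowlyVarying, Real.rpow_zero]

section RegularlyVarying

variable {f g : ℝ → ℝ} {ρ : ℝ}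

theorem RegularlyVarying.mul_rpow (hf : RegularlyVarying f ρ) (σ : ℝ) :
    RegularlyVarying (fun t => f t * t ^ σ) (ρ + σ) := by
  intro x hx
  rw [Real.rpow_add hx]
  refine ((hf x hx).mul_const (x ^ σ)).congr' ?_
  filter_upwards [eventually_gt_atTop 0] with t ht
  rw [mul_div_mul_comm, Real.mul_rpow hx.le ht.le,
    mul_div_cancel_right₀ _ (Real.rpow_pos_of_pos ht σ).ne']

theorem RegularlyVarying.of_tendsto_div (hg : RegularlyVarying g ρ) (hg0 : ∀ t > 0, g t ≠ 0)
    {c : ℝ} (hc : c ≠ 0) (hfg : Tendsto (fun t => f t / g t) atTop (𝓝 c)) :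
    RegularlyVarying f ρ := by
  intro x hx
  have := ((hfg.comp (tendsto_id.const_mul_atTop hx)).mul (hg x hx)).div hfg hc
  rw [mul_div_right_comm, div_self hc, one_mul] at this
  refine this.congr' ?_
  filter_upwards [eventually_gt_atTop 0] with t ht
  simp only [Pi.div_apply, Function.comp_apply, id]
  rw [div_mul_div_cancel₀ (hg0 _ (mul_pos hx ht)), div_div_div_cancel_right₀ (hg0 t ht)]

theorem SlowlyVarying.regularlyVarying_of_tendsto_div {L : ℝ → ℝ} (hL : SlowlyVarying L)
    (hLpos : ∀ t > 0, 0 < L t) (hfL : Tendsto (fun t => f t / (L t * t ^ ρ)) atTop (𝓝 1)) :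
    RegularlyVarying f ρ := by
  have hLt := (regularlyVarying_zero_iff.2 hL).mul_rpow ρ
  rw [zero_add] at hLt
  exact hLt.of_tendsto_div (fun t ht => (mul_pos (hLpos t ht) (Real.rpow_pos_of_pos ht _)).ne')
    one_ne_zero hfL

theorem RegularlyVarying.congr' (hf : RegularlyVarying f ρ) (hfg : f =ᶠ[atTop] g) :
    RegularlyVarying g ρ := fun x hx =>
  (hf x hx).congr' <| (hfg.comp_tendsto (tendsto_id.const_mul_atTop hx)).div hfg

theorem RegularlyVarying.exists_le_mul_rpow (hf : RegularlyVarying f ρ) (hpos : ∀ t > 0, 0 < f t)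
    (hcont : ContinuousOn f (Ioi 0)) {δ : ℝ} (hδ : 0 < δ) :
    ∃ T > 0, ∀ t ≥ T, ∀ x ≥ (1:ℝ), f (x * t) ≤ Real.exp δ * x ^ (ρ + δ) * f t := by
  have hsv : SlowlyVarying fun t => f t * t ^ (-ρ) :=
    regularlyVarying_zero_iff.1 (by simpa using hf.mul_rpow (-ρ))
  obtain ⟨T, hT, hP⟩ := hsv.exists_le_mul_rpow
    (fun t ht => mul_pos (hpos t ht) (Real.rpow_pos_of_pos ht _))
    (hcont.mul fun t ht => (Real.continuousAt_rpow_const t _ (Or.inl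
      (ne_of_gt ht))).continuousWithinAt) hδ
  refine ⟨T, hT, fun t ht x hx => ?_⟩
  have ht0 : 0 < t := hT.trans_le ht
  have hx0 : 0 < x := one_pos.trans_le hx
  have key := hP t ht x hx
  rw [Real.mul_rpow hx0.le ht0.le, ← mul_assoc, Real.rpow_neg hx0.le, Real.rpow_neg ht0.le] at key
  have := Real.rpow_pos_of_pos hx0 ρ
  have := Real.rpow_pos_of_pos ht0 ρ
  field_simp at key
  exact key.trans_eq (by rw [Real.rpow_add hx0]; ring)

theorem RegularlyVarying.exists_le_rpow (hf : RegularlyVarying f ρ) (hpos : ∀ t > 0, 0 < f t)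
    (hcont : ContinuousOn f (Ioi 0)) {δ : ℝ} (hδ : 0 < δ) :
    ∃ C, ∀ᶠ t in atTop, f t ≤ C * t ^ (ρ + δ) := by
  obtain ⟨T, hT, hP⟩ := hf.exists_le_mul_rpow hpos hcont hδ
  refine ⟨Real.exp δ * f T / T ^ (ρ + δ), ?_⟩
  filter_upwards [eventually_ge_atTop T] with t ht
  have := hP T le_rfl (t / T) ((one_le_div hT).2 ht)
  rw [div_mul_cancel₀ t hT.ne', Real.div_rpow (hT.le.trans ht) hT.le] at this
  calc f t ≤ _ := this
    _ = _ := by ring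

theorem RegularlyVarying.tendsto_add_div (hf : RegularlyVarying f ρ)
    (hanti : AntitoneOn f (Ici 0)) (hpos : ∀ t ≥ 0, 0 < f t) {s : ℝ} (hs : 0 ≤ s) :
    Tendsto (fun t => f (s + t) / f t) atTop (𝓝 1) := by
  refine tendsto_order.2 ⟨fun l hl => ?_, fun u hu => ?_⟩
  · -- `f (s + t) ≥ f (x * t)` for large `t`, and `x ^ ρ → 1` as `x → 1⁺`.
    have hcont : Tendsto (fun x : ℝ => x ^ ρ) (𝓝[>] 1) (𝓝 1) := by
      simpa using (Real.continuousAt_rpow_const 1 ρ (Or.inl one_ne_zero)).tendsto.mono_left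
        nhdsWithin_le_nhds
    obtain ⟨x, hlx, hx⟩ := ((hcont.eventually_const_lt hl).and self_mem_nhdsWithin).exists
    filter_upwards [(hf x (one_pos.trans hx)).eventually_const_lt hlx, eventually_gt_atTop 0,
      eventually_ge_atTop (s / (x - 1))] with t hlt ht hst
    rw [div_le_iff₀ (sub_pos.2 hx)] at hst
    refine hlt.trans_le (div_le_div_of_nonneg_right (hanti (mem_Ici.2 (by positivity))
      (mem_Ici.2 (by positivity)) (by linarith)) (hpos t ht.le).le)
  · filter_upwards [eventually_ge_atTop 0] with t ht
    exact ((div_le_one (hpos t ht)).2 (hanti (mem_Ici.2 ht) (mem_Ici.2 (by positivity))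
      (le_add_of_nonneg_left hs))).trans_lt hu

end RegularlyVarying

theorem integrableOn_Ioi_of_antitoneOn_of_le_rpow {f : ℝ → ℝ} (hf : AntitoneOn f (Ici 0))
    (hnn : ∀ t ≥ 0, 0 ≤ f t) {C p : ℝ} (hp : p < -1) (hC : ∀ᶠ t in atTop, f t ≤ C * t ^ p) :
    IntegrableOn f (Ioi 0) := by
  obtain ⟨M, hM⟩ := eventually_atTop.1 (hC.and (eventually_gt_atTop 0))
  have hM0 : 0 < M := (hM M le_rfl).2
  have hmeas {s : Set ℝ} (hs : MeasurableSet s) (hs0 : s ⊆ Ici 0) :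
      AEStronglyMeasurable f (volume.restrict s) :=
    (aemeasurable_restrict_of_antitoneOn hs (hf.mono hs0)).aestronglyMeasurable
  rw [← Ioc_union_Ioi_eq_Ioi hM0.le]
  refine IntegrableOn.union ?_ ?_
  · refine Integrable.mono' (integrableOn_const (C := f 0) (by simp [Real.volume_Ioc]))
      (hmeas measurableSet_Ioc (Ioc_subset_Ioi_self.trans Ioi_subset_Ici_self))
      ((ae_restrict_iff' measurableSet_Ioc).2 (ae_of_all _ fun t ht => ?_))
    rw [Real.norm_of_nonneg (hnn t ht.1.le)]
    exact hf (mem_Ici.2 le_rfl) ht.1.le ht.1.le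
  · refine Integrable.mono' ((integrableOn_Ioi_rpow_of_lt hp hM0).const_mul C)
      (hmeas measurableSet_Ioi (Ioi_subset_Ici hM0.le))
      ((ae_restrict_iff' measurableSet_Ioi).2 (ae_of_all _ fun t ht => ?_))
    rw [Real.norm_of_nonneg (hnn t (hM0.trans ht).le)]
    exact (hM t ht.le).1

section TailIntegral

variable {k : ℝ → ℝ}

theorem integral_Ioi_pos_of_pos {a : ℝ} (hk : IntegrableOn k (Ioi a))
    (hpos : ∀ t > a, 0 < k t) : 0 < ∫ s in Ioi a, k s := by
  rw [setIntegral_pos_iff_support_of_nonneg_ae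
    ((ae_restrict_iff' measurableSet_Ioi).2 (ae_of_all _ fun t ht => (hpos t ht).le)) hk,
    show Function.support k ∩ Ioi a = Ioi a from
      inter_eq_right.2 fun t ht => (hpos t ht).ne']
  simp [Real.volume_Ioi]

theorem antitoneOn_integral_Ioi {a : ℝ} (hk : IntegrableOn k (Ioi a))
    (hnn : ∀ t > a, 0 ≤ k t) : AntitoneOn (fun x => ∫ s in Ioi x, k s) (Ici a) :=
  fun _ hx _ _ hxy => setIntegral_mono_set (hk.mono_set (Ioi_subset_Ioi hx))
    ((ae_restrict_iff' measurableSet_Ioi).2 (ae_of_all _ fun t ht => hnn t (lt_of_le_of_lt hx ht)))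
    (Ioi_subset_Ioi hxy).eventuallyLE

theorem RegularlyVarying.tendsto_integral_Ioi_div_mul {α : ℝ} (hα : 0 < α)
    (hk : RegularlyVarying k (-α - 1)) (hpos : ∀ t > 0, 0 < k t)
    (hcont : ContinuousOn k (Ioi 0)) :
    Tendsto (fun t => (∫ s in Ioi t, k s) / (t * k t)) atTop (𝓝 α⁻¹) := by
  obtain ⟨T, hT, hP⟩ := hk.exists_le_mul_rpow hpos hcont (half_pos hα)
  have hlim : Tendsto (fun t => ∫ u in Ioi (1:ℝ), k (t * u) / k t) atTop
      (𝓝 (∫ u in Ioi (1:ℝ), u ^ (-α - 1))) := by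
    refine tendsto_integral_filter_of_dominated_convergence
      (fun u => Real.exp (α / 2) * u ^ (-α - 1 + α / 2)) ?_ ?_
      ((integrableOn_Ioi_rpow_of_lt (by linarith) one_pos).const_mul _) ?_
    · filter_upwards [eventually_gt_atTop 0] with t ht
      exact ((hcont.comp (continuousOn_const.mul continuousOn_id)
        fun u hu => mul_pos ht (one_pos.trans hu)).div_const _).aestronglyMeasurable
        measurableSet_Ioi
    · filter_upwards [eventually_ge_atTop T] with t ht
      refine (ae_restrict_iff' measurableSet_Ioi).2 (ae_of_all _ fun u hu => ?_)
      have ht0 : 0 < t := hT.trans_le ht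
      rw [Real.norm_of_nonneg (div_nonneg (hpos _ (mul_pos ht0 (one_pos.trans hu))).le
        (hpos t ht0).le), div_le_iff₀ (hpos t ht0), mul_comm t]
      exact hP t ht u hu.le
    · refine (ae_restrict_iff' measurableSet_Ioi).2 (ae_of_all _ fun u hu => ?_)
      simpa only [mul_comm _ u] using hk u (one_pos.trans hu)
  rw [integral_Ioi_rpow_of_lt (by linarith) one_pos, Real.one_rpow, sub_add_cancel,
    neg_div_neg_eq, one_div] at hlim
  refine hlim.congr' ?_
  filter_upwards [eventually_gt_atTop 0] with t ht
  rw [integral_div, integral_comp_mul_left_Ioi _ _ ht, mul_one, smul_eq_mul, inv_mul_eq_div,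
    div_div]

theorem RegularlyVarying.integral_Ioi {α : ℝ} (hα : 0 < α)
    (hk : RegularlyVarying k (-α - 1)) (hpos : ∀ t > 0, 0 < k t)
    (hcont : ContinuousOn k (Ioi 0)) :
    RegularlyVarying (fun x => ∫ s in Ioi x, k s) (-α) := by
  have hkt := hk.mul_rpow 1
  simp only [Real.rpow_one, sub_add_cancel] at hkt
  exact hkt.of_tendsto_div (fun t ht => (mul_pos (hpos t ht) ht).ne') (inv_ne_zero hα.ne')
    (by simpa only [mul_comm] using hk.tendsto_integral_Ioi_div_mul hα hpos hcont)

theorem RegularlyVarying.tendsto_integral_Ioi_div_mul_rpow {L : ℝ → ℝ} {α : ℝ} (hα : 0 < α)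
    (hk : RegularlyVarying k (-α - 1)) (hpos : ∀ t > 0, 0 < k t)
    (hcont : ContinuousOn k (Ioi 0)) (hLpos : ∀ t > 0, 0 < L t)
    (hkL : Tendsto (fun t => k t / (L t * t ^ (-α - 1))) atTop (𝓝 1)) :
    Tendsto (fun t => (∫ s in Ioi t, k s) / ((1 / α) * L t * t ^ (-α))) atTop (𝓝 1) := by
  have := ((hk.tendsto_integral_Ioi_div_mul hα hpos hcont).const_mul α).mul hkL
  rw [mul_inv_cancel₀ hα.ne', one_mul] at this
  refine this.congr' ?_
  filter_upwards [eventually_gt_atTop 0] with t ht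
  have := hpos t ht
  have := hLpos t ht
  rw [show t ^ (-α) = t * t ^ (-α - 1) by
    rw [← Real.rpow_one_add' ht.le (by linarith)]; ring_nf]
  field_simp

theorem RegularlyVarying.integrableOn_integral_Ioi {α : ℝ} (hα : 1 < α)
    (hk : RegularlyVarying k (-α - 1)) (hpos : ∀ t > 0, 0 < k t)
    (hcont : ContinuousOn k (Ioi 0)) (hint : IntegrableOn k (Ioi 0)) :
    IntegrableOn (fun x => ∫ s in Ioi x, k s) (Ioi 0) := by
  have hα0 : 0 < α := by linarith
  obtain ⟨C, hC⟩ := hk.exists_le_rpow hpos hcont (δ := (α - 1) / 2) (by linarith)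
  refine integrableOn_Ioi_of_antitoneOn_of_le_rpow
    (antitoneOn_integral_Ioi hint fun t ht => (hpos t ht).le)
    (fun x hx => (integral_Ioi_pos_of_pos (hint.mono_set (Ioi_subset_Ioi hx))
      fun t ht => hpos t (lt_of_le_of_lt hx ht)).le)
    (C := 2 * α⁻¹ * C) (p := -α + (α - 1) / 2) (by linarith) ?_
  filter_upwards [(hk.tendsto_integral_Ioi_div_mul hα0 hpos hcont).eventually_lt_const
    (lt_two_mul_self (inv_pos.2 hα0)), hC, eventually_gt_atTop 0] with t hKar hkC ht
  rw [div_lt_iff₀ (mul_pos ht (hpos t ht))] at hKar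
  calc ∫ s in Ioi t, k s ≤ 2 * α⁻¹ * (t * k t) := hKar.le
    _ ≤ 2 * α⁻¹ * (t * (C * t ^ (-α - 1 + (α - 1) / 2))) := by gcongr
    _ = 2 * α⁻¹ * C * t ^ (-α + (α - 1) / 2) := by
      rw [show -α + (α - 1) / 2 = 1 + (-α - 1 + (α - 1) / 2) by ring,
        Real.rpow_add ht 1, Real.rpow_one]
      ring

end TailIntegral

section Autocovariance

variable {K : ℝ → ℝ}

theorem aemeasurable_mul_add (hanti : AntitoneOn K (Ici 0)) {Δ : ℝ} (hΔ : 0 ≤ Δ) :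
    AEMeasurable (fun s => K s * K (s + Δ)) (volume.restrict (Ioi 0)) :=
  (aemeasurable_restrict_of_antitoneOn measurableSet_Ioi (hanti.mono Ioi_subset_Ici_self)).mul
    (aemeasurable_restrict_of_antitoneOn measurableSet_Ioi fun a ha b _ hab =>
      hanti (mem_Ici.2 (by linarith [mem_Ioi.1 ha])) (mem_Ici.2 (by linarith [mem_Ioi.1 ha]))
        (by linarith))

theorem integrableOn_mul_add (hanti : AntitoneOn K (Ici 0)) (hnn : ∀ x ≥ 0, 0 ≤ K x)
    (hint : IntegrableOn K (Ioi 0)) {Δ : ℝ} (hΔ : 0 ≤ Δ) :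
    IntegrableOn (fun s => K s * K (s + Δ)) (Ioi 0) := by
  refine Integrable.mono' (hint.mul_const (K Δ))
    (aemeasurable_mul_add hanti hΔ).aestronglyMeasurable
    ((ae_restrict_iff' measurableSet_Ioi).2 (ae_of_all _ fun s hs => ?_))
  have hs : 0 ≤ s := le_of_lt hs
  rw [Real.norm_of_nonneg (mul_nonneg (hnn s hs) (hnn _ (by positivity)))]
  exact mul_le_mul_of_nonneg_left (hanti (mem_Ici.2 hΔ) (mem_Ici.2 (by positivity))
    (le_add_of_nonneg_left hs)) (hnn s hs)

theorem integrableOn_integral_mul_add (hanti : AntitoneOn K (Ici 0)) (hnn : ∀ x ≥ 0, 0 ≤ K x)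
    (hint : IntegrableOn K (Ioi 0)) :
    IntegrableOn (fun Δ => ∫ s in Ioi 0, K s * K (s + Δ)) (Ioi 0) := by
  have hmono : AntitoneOn (fun Δ => ∫ s in Ioi 0, K s * K (s + Δ)) (Ici 0) :=
    fun a ha b hb hab => setIntegral_mono_on (integrableOn_mul_add hanti hnn hint hb)
      (integrableOn_mul_add hanti hnn hint ha) measurableSet_Ioi fun s hs =>
        mul_le_mul_of_nonneg_left (hanti (mem_Ici.2 (by linarith [mem_Ioi.1 hs, mem_Ici.1 ha]))
          (mem_Ici.2 (by linarith [mem_Ioi.1 hs, mem_Ici.1 hb])) (by linarith))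
          (hnn s (le_of_lt hs))
  refine Integrable.mono' (hint.const_mul (∫ s in Ioi 0, K s))
    (aemeasurable_restrict_of_antitoneOn measurableSet_Ioi
      (hmono.mono Ioi_subset_Ici_self)).aestronglyMeasurable
    ((ae_restrict_iff' measurableSet_Ioi).2 (ae_of_all _ fun Δ hΔ => ?_))
  have hΔ : 0 ≤ Δ := le_of_lt hΔ
  rw [Real.norm_of_nonneg (setIntegral_nonneg measurableSet_Ioi fun s hs =>
      mul_nonneg (hnn s (le_of_lt hs)) (hnn _ (by linarith [mem_Ioi.1 hs]))),
    ← integral_mul_const]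
  exact setIntegral_mono_on (integrableOn_mul_add hanti hnn hint hΔ) (hint.mul_const _)
    measurableSet_Ioi fun s hs => mul_le_mul_of_nonneg_left (hanti (mem_Ici.2 hΔ)
      (mem_Ici.2 (by linarith [mem_Ioi.1 hs])) (by linarith [mem_Ioi.1 hs])) (hnn s (le_of_lt hs))

theorem tendsto_integral_mul_add_div (hanti : AntitoneOn K (Ici 0)) (hpos : ∀ x ≥ 0, 0 < K x)
    (hint : IntegrableOn K (Ioi 0))
    (hshift : ∀ s ≥ 0, Tendsto (fun Δ => K (s + Δ) / K Δ) atTop (𝓝 1)) :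
    Tendsto (fun Δ => (∫ s in Ioi 0, K s * K (s + Δ)) / K Δ) atTop
      (𝓝 (∫ s in Ioi 0, K s)) := by
  simp_rw [← integral_div, mul_div_assoc]
  refine tendsto_integral_filter_of_dominated_convergence K ?_ ?_ hint
    ((ae_restrict_iff' measurableSet_Ioi).2 (ae_of_all _ fun s hs => ?_))
  · filter_upwards [eventually_ge_atTop 0] with Δ hΔ
    simpa only [mul_div_assoc] using ((aemeasurable_mul_add hanti hΔ).div_const (K Δ)).aestronglyMeasurable
  · filter_upwards [eventually_ge_atTop 0] with Δ hΔ
    refine (ae_restrict_iff' measurableSet_Ioi).2 (ae_of_all _ fun s hs => ?_)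
    have hs : 0 ≤ s := le_of_lt hs
    rw [Real.norm_of_nonneg (mul_nonneg (hpos s hs).le
      (div_nonneg (hpos _ (by positivity)).le (hpos Δ hΔ).le))]
    exact mul_le_of_le_one_right (hpos s hs).le ((div_le_one (hpos Δ hΔ)).2
      (hanti (mem_Ici.2 hΔ) (mem_Ici.2 (by positivity)) (le_add_of_nonneg_left hs)))
  · simpa using (hshift s (le_of_lt hs)).const_mul (K s)

theorem RegularlyVarying.tendsto_integral_mul_add_div_mul {ρ : ℝ} (hK : RegularlyVarying K ρ)
    (hanti : AntitoneOn K (Ici 0)) (hpos : ∀ x ≥ 0, 0 < K x) (hint : IntegrableOn K (Ioi 0)) :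
    Tendsto (fun Δ => (∫ s in Ioi 0, K s * K (s + Δ)) / ((∫ s in Ioi 0, K s) * K Δ)) atTop
      (𝓝 1) := by
  have hI := integral_Ioi_pos_of_pos hint fun x hx => hpos x (le_of_lt hx)
  have := (tendsto_integral_mul_add_div hanti hpos hint fun s hs =>
    hK.tendsto_add_div hanti hpos hs).div_const (∫ s in Ioi 0, K s)
  rw [div_self hI.ne'] at this
  exact this.congr fun Δ => by rw [div_div, mul_comm]

end Autocovariance

/-- Corollary 6.3: if `k ∈ RV_∞(−1−α)` with `α > 1`, i.e. `k(t) ~ L(t) t^{−α−1}` as `t → ∞`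
with `L` slowly varying, and `β² ∫₀^∞ K² < 1` where `K(x) = ∫ₓ^∞ k(s) ds`, then
`γ(Δ) = β² (σ²/(1−β²∫₀^∞K²)) ∫₀^∞ K(s)K(s+Δ) ds` is integrable on `(0,∞)` and
`γ(Δ) ~ β² (σ²/(1−β²∫₀^∞K²)) (∫₀^∞ K(s) ds) (1/α) L(Δ) Δ^{−α}` as `Δ → ∞`. -/
theorem blackScholesLongMemory_regvar_rate_integrable
    (σ β α : ℝ) (hσ : σ ≠ 0) (hβ : β ≠ 0) (hα : 1 < α)
    (L : ℝ → ℝ) (hLpos : ∀ t > (0:ℝ), 0 < L t) (hL : SlowlyVarying L)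
    (k : ℝ → ℝ) (hkpos : ∀ t > (0:ℝ), 0 < k t)
    (hkcont : ContinuousOn k (Ioi 0))
    (hkint : IntegrableOn k (Ioi 0))
    (hkRV : Tendsto (fun t => k t / (L t * t ^ (-α - 1))) atTop (nhds 1))
    (K : ℝ → ℝ) (hK : ∀ x ≥ (0:ℝ), K x = ∫ s in Ioi x, k s)
    (hsmall : β ^ 2 * ∫ s in Ioi (0:ℝ), K s ^ 2 < 1) :
    IntegrableOn
        (fun Δ => β ^ 2 * (σ ^ 2 / (1 - β ^ 2 * ∫ s in Ioi (0:ℝ), K s ^ 2)) *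
          ∫ s in Ioi (0:ℝ), K s * K (s + Δ)) (Ioi 0) ∧
      Tendsto (fun Δ =>
          (β ^ 2 * (σ ^ 2 / (1 - β ^ 2 * ∫ s in Ioi (0:ℝ), K s ^ 2)) *
            ∫ s in Ioi (0:ℝ), K s * K (s + Δ)) /
          (β ^ 2 * (σ ^ 2 / (1 - β ^ 2 * ∫ s in Ioi (0:ℝ), K s ^ 2)) *
            (∫ s in Ioi (0:ℝ), K s) * ((1 / α) * L Δ * Δ ^ (-α))))
        atTop (nhds 1) := by
  have hα0 : 0 < α := by linarith
  have hKeq : (fun x => ∫ s in Ioi x, k s) =ᶠ[atTop] K :=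
    eventually_atTop.2 ⟨0, fun x hx => (hK x hx).symm⟩
  have hKpos : ∀ x ≥ 0, 0 < K x := fun x hx => (hK x hx).symm ▸ integral_Ioi_pos_of_pos
    (hkint.mono_set (Ioi_subset_Ioi hx)) fun t ht => hkpos t (lt_of_le_of_lt hx ht)
  have hKanti : AntitoneOn K (Ici 0) :=
    (antitoneOn_integral_Ioi hkint fun t ht => (hkpos t ht).le).congr fun x hx => (hK x hx).symm
  have hk : RegularlyVarying k (-α - 1) := hL.regularlyVarying_of_tendsto_div hLpos hkRV
  have hKint : IntegrableOn K (Ioi 0) :=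
    (hk.integrableOn_integral_Ioi hα hkpos hkcont hkint).congr_fun
      (fun x hx => (hK x (le_of_lt hx)).symm) measurableSet_Ioi
  have hc : β ^ 2 * (σ ^ 2 / (1 - β ^ 2 * ∫ s in Ioi (0:ℝ), K s ^ 2)) ≠ 0 := by
    have : 0 < 1 - β ^ 2 * ∫ s in Ioi (0:ℝ), K s ^ 2 := by linarith
    positivity
  refine ⟨(integrableOn_integral_mul_add hKanti (fun x hx => (hKpos x hx).le) hKint).const_mul _,
    ?_⟩
  have hcov := ((hk.integral_Ioi hα0 hkpos hkcont).congr' hKeq).tendsto_integral_mul_add_div_mul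
    hKanti hKpos hKint
  have hKL : Tendsto (fun t => K t / ((1 / α) * L t * t ^ (-α))) atTop (𝓝 1) :=
    (hk.tendsto_integral_Ioi_div_mul_rpow hα0 hkpos hkcont hLpos hkRV).congr'
      (hKeq.div EventuallyEq.rfl)
  refine ((one_mul (1:ℝ)) ▸ hcov.mul hKL).congr' ?_
  filter_upwards [eventually_gt_atTop 0] with Δ hΔ
  rw [mul_assoc _ (∫ s in Ioi 0, K s), mul_div_mul_left _ _ hc, div_mul_div_comm,
    mul_right_comm, mul_div_mul_right _ _ (hKpos Δ hΔ.le).ne']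
end

section
/- Let f be a continuously differentiable function from (0,∞) to (0,∞) with f(t) → 0 as t → ∞ and such that −f′ is regularly varying at infinity with index −1. Then f is slowly varying at infinity, and there exists a function L : (0,∞) → (0,∞), slowly varying at infinity, such that ∫₁^∞ L(t)²/t dt < ∞ and ∫_Δ^∞ L(s)²/s ds ~ f(Δ) as Δ → ∞. -/
open MeasureTheory Filter Set

/-!
Write `-f'(t) = ℓ(t)/t`. For `x > 1` and each fixed `y = xᵏ`, slow variation of `ℓ` gives
`ℓ(s) ≤ 2 ℓ(ys)` for all large `s`, and comparing derivatives this yields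
`f(t) - f(xt) ≤ 2 (f(xᵏt) - f(xᵏ⁺¹t))` for large `t`. Summing over `k < N` and telescoping,
`N (f(t) - f(xt)) ≤ 2 f(t)`, so `f(xt)/f(t) → 1` without appeal to the uniform convergence
theorem.
For the second claim take `L = √ℓ`: then `L(s)²/s = -f'(s)`, whose tail integral is exactly `f(Δ)`.
-/

namespace SlowlyVarying

theorem of_one_lt {f : ℝ → ℝ} (hpos : ∀ t > (0:ℝ), 0 < f t)
    (h : ∀ x > (1:ℝ), Tendsto (fun t => f (x * t) / f t) atTop (nhds 1)) : SlowlyVarying f := by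
  intro x hx
  rcases lt_trichotomy x 1 with hx1 | rfl | hx1
  · have hinv := ((h x⁻¹ (one_lt_inv₀ hx |>.2 hx1)).comp
      (tendsto_id.const_mul_atTop hx)).inv₀ one_ne_zero
    rw [inv_one] at hinv
    refine hinv.congr fun t => ?_
    simp [inv_mul_cancel_left₀ hx.ne']
  · refine tendsto_const_nhds.congr' ?_
    filter_upwards [eventually_gt_atTop 0] with t ht
    rw [one_mul, div_self (hpos t ht).ne']
  · exact h x hx1

theorem sqrt {ℓ : ℝ → ℝ} (hℓ₀ : ∀ t > (0:ℝ), 0 ≤ ℓ t) (hℓ : SlowlyVarying ℓ) :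
    SlowlyVarying fun t => √(ℓ t) := by
  intro x hx
  have hsqrt := (Real.continuous_sqrt.tendsto 1).comp (hℓ x hx)
  rw [Real.sqrt_one] at hsqrt
  refine hsqrt.congr' ?_
  filter_upwards [eventually_gt_atTop 0] with t ht
  exact Real.sqrt_div (hℓ₀ _ (mul_pos hx ht)) _

theorem eventually_le_two_mul {ℓ : ℝ → ℝ} (hℓpos : ∀ t > (0:ℝ), 0 < ℓ t)
    (hℓ : SlowlyVarying ℓ) {y : ℝ} (hy : 0 < y) : ∀ᶠ s in atTop, ℓ s ≤ 2 * ℓ (y * s) := by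
  filter_upwards [(hℓ y hy).eventually (lt_mem_nhds one_half_lt_one), eventually_gt_atTop 0]
    with s hs hs₀
  rw [lt_div_iff₀ (hℓpos s hs₀)] at hs
  linarith

end SlowlyVarying

theorem antitoneOn_Ici_of_hasDerivAt_nonpos {F F' : ℝ → ℝ} {T : ℝ}
    (hF : ∀ s ≥ T, HasDerivAt F (F' s) s) (hF' : ∀ s ≥ T, F' s ≤ 0) : AntitoneOn F (Ici T) := by
  refine antitoneOn_of_hasDerivWithinAt_nonpos (f' := F') (convex_Ici T)
    (fun s hs => (hF s hs).continuousAt.continuousWithinAt) (fun s hs => ?_) (fun s hs => ?_)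
  · rw [interior_Ici] at hs ⊢
    exact (hF s (le_of_lt hs)).hasDerivWithinAt
  · rw [interior_Ici] at hs
    exact hF' s (le_of_lt hs)

section NegDerivRegularlyVarying

variable {f ℓ : ℝ → ℝ} (hf : ∀ t > (0:ℝ), HasDerivAt f (-(ℓ t / t)) t)
include hf

theorem sub_le_two_mul_sub_of_le_two_mul {T y x t : ℝ} (hT : 0 < T) (hy : 0 < y)
    (hℓ : ∀ s ≥ T, ℓ s ≤ 2 * ℓ (y * s)) (ht : T ≤ t) (hx : 1 ≤ x) :
    f t - f (x * t) ≤ 2 * (f (y * t) - f (y * (x * t))) := by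
  have hderiv : ∀ s ≥ T, HasDerivAt (fun s => 2 * f (y * s) - f s)
      (2 * (-(ℓ (y * s) / (y * s)) * y) - -(ℓ s / s)) s := fun s hs =>
    ((hf _ (mul_pos hy (by linarith))).comp s
      ((hasDerivAt_id s).const_mul y |>.congr_deriv (mul_one y)) |>.const_mul 2).sub
      (hf s (by linarith))
  have hnonpos : ∀ s ≥ T, 2 * (-(ℓ (y * s) / (y * s)) * y) - -(ℓ s / s) ≤ 0 := by
    intro s hs
    have hs₀ : 0 < s := by linarith
    have hrewrite : 2 * (-(ℓ (y * s) / (y * s)) * y) - -(ℓ s / s) = (ℓ s - 2 * ℓ (y * s)) / s := by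
      field_simp
      ring
    rw [hrewrite]
    exact div_nonpos_of_nonpos_of_nonneg (by linarith [hℓ s hs]) hs₀.le
  have hxt : t ≤ x * t := le_mul_of_one_le_left (by linarith) hx
  have := antitoneOn_Ici_of_hasDerivAt_nonpos hderiv hnonpos ht (ht.trans hxt) hxt
  simp only at this
  linarith

theorem eventually_sub_le_two_mul_sub (hℓpos : ∀ t > (0:ℝ), 0 < ℓ t) (hℓ : SlowlyVarying ℓ)
    {x y : ℝ} (hx : 1 ≤ x) (hy : 0 < y) :
    ∀ᶠ t in atTop, f t - f (x * t) ≤ 2 * (f (y * t) - f (y * (x * t))) := by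
  obtain ⟨T, hT⟩ := eventually_atTop.1 (hℓ.eventually_le_two_mul hℓpos hy)
  filter_upwards [eventually_ge_atTop (max T 1)] with t ht
  exact sub_le_two_mul_sub_of_le_two_mul hf (by positivity) hy
    (fun s hs => hT s ((le_max_left T 1).trans hs)) ht hx

theorem eventually_nat_mul_sub_le (hℓpos : ∀ t > (0:ℝ), 0 < ℓ t) (hℓ : SlowlyVarying ℓ)
    {x : ℝ} (hx : 1 ≤ x) (N : ℕ) :
    ∀ᶠ t in atTop, N * (f t - f (x * t)) ≤ 2 * (f t - f (x ^ N * t)) := by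
  induction N with
  | zero => simp
  | succ N ih =>
    filter_upwards [ih, eventually_sub_le_two_mul_sub hf hℓpos hℓ hx (pow_pos (by linarith) N)]
      with t hN hstep
    rw [pow_succ, mul_assoc]
    push_cast
    linarith

theorem slowlyVarying_of_hasDerivAt_neg_div (hfpos : ∀ t > (0:ℝ), 0 < f t)
    (hℓpos : ∀ t > (0:ℝ), 0 < ℓ t) (hℓ : SlowlyVarying ℓ) : SlowlyVarying f := by
  refine SlowlyVarying.of_one_lt hfpos fun x hx => ?_
  have hanti : AntitoneOn f (Ici 1) := antitoneOn_Ici_of_hasDerivAt_nonpos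
    (fun s hs => hf s (by linarith))
    (fun s hs => neg_nonpos.2 (div_pos (hℓpos s (by linarith)) (by linarith)).le)
  have hdecay : Tendsto (fun t => (f t - f (x * t)) / f t) atTop (nhds 0) := by
    refine tendsto_order.2 ⟨fun a ha => ?_, fun b hb => ?_⟩
    · filter_upwards [eventually_ge_atTop 1] with t ht
      have hxt : t ≤ x * t := le_mul_of_one_le_left (by linarith) hx.le
      exact ha.trans_le (div_nonneg (by linarith [hanti ht (ht.trans hxt) hxt])
        (hfpos t (by linarith)).le)
    · obtain ⟨N, hN⟩ := exists_nat_gt (2 / b)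
      have hN₀ : (0:ℝ) < N := lt_trans (by positivity) hN
      filter_upwards [eventually_nat_mul_sub_le hf hℓpos hℓ hx.le N, eventually_gt_atTop 0]
        with t hbound ht
      have hft := hfpos t ht
      have hfxt := hfpos (x ^ N * t) (by positivity)
      rw [div_lt_iff₀ hb] at hN
      rw [div_lt_iff₀ hft]
      refine lt_of_mul_lt_mul_left ?_ hN₀.le
      nlinarith
  have hlim := (tendsto_const_nhds (x := (1:ℝ))).sub hdecay
  rw [sub_zero] at hlim
  refine hlim.congr' ?_
  filter_upwards [eventually_gt_atTop 0] with t ht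
  field_simp [(hfpos t ht).ne']
  ring

end NegDerivRegularlyVarying

theorem integrableOn_Ioi_of_hasDerivAt_neg {f φ : ℝ → ℝ} {a : ℝ}
    (hf : ∀ t ∈ Ici a, HasDerivAt f (-φ t) t) (hφ : ∀ t ∈ Ioi a, 0 ≤ φ t)
    (hlim : Tendsto f atTop (nhds 0)) : IntegrableOn φ (Ioi a) := by
  simpa using (integrableOn_Ioi_deriv_of_nonpos' hf (fun t ht => neg_nonpos.2 (hφ t ht)) hlim).neg

theorem integral_Ioi_of_hasDerivAt_neg {f φ : ℝ → ℝ} {a : ℝ}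
    (hf : ∀ t ∈ Ici a, HasDerivAt f (-φ t) t) (hφ : ∀ t ∈ Ioi a, 0 ≤ φ t)
    (hlim : Tendsto f atTop (nhds 0)) : ∫ t in Ioi a, φ t = f a := by
  have := integral_Ioi_of_hasDerivAt_of_nonpos' hf (fun t ht => neg_nonpos.2 (hφ t ht)) hlim
  rw [integral_neg] at this
  linarith

theorem blackScholesLongMemory_arbitrary_decay_general
    (f f' : ℝ → ℝ)
    (hfpos : ∀ t > (0:ℝ), 0 < f t)
    (hderiv : ∀ t > (0:ℝ), HasDerivAt f (f' t) t)
    (hflim : Tendsto f atTop (nhds 0))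
    (ℓ : ℝ → ℝ) (hℓpos : ∀ t > (0:ℝ), 0 < ℓ t) (hℓ : SlowlyVarying ℓ)
    (hRV : ∀ t > (0:ℝ), -f' t = t ^ (-1:ℝ) * ℓ t) :
    SlowlyVarying f ∧
      ∃ L : ℝ → ℝ, (∀ t > (0:ℝ), 0 < L t) ∧ SlowlyVarying L ∧
        IntegrableOn (fun t => L t ^ 2 / t) (Ioi 1) ∧
        Tendsto (fun Δ => (∫ s in Ioi Δ, L s ^ 2 / s) / f Δ) atTop (nhds 1) := by
  have hf : ∀ t > (0:ℝ), HasDerivAt f (-(ℓ t / t)) t := fun t ht =>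
    (hderiv t ht).congr_deriv (by
      rw [div_eq_inv_mul, ← Real.rpow_neg_one, ← hRV t ht, neg_neg])
  have hφ : ∀ t > (0:ℝ), 0 ≤ ℓ t / t := fun t ht => (div_pos (hℓpos t ht) ht).le
  have hLsq : ∀ t > (0:ℝ), √(ℓ t) ^ 2 / t = ℓ t / t := fun t ht => by
    rw [Real.sq_sqrt (hℓpos t ht).le]
  refine ⟨slowlyVarying_of_hasDerivAt_neg_div hf hfpos hℓpos hℓ, fun t => √(ℓ t),
    fun t ht => Real.sqrt_pos.2 (hℓpos t ht), hℓ.sqrt fun t ht => (hℓpos t ht).le, ?_, ?_⟩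
  · exact (integrableOn_Ioi_of_hasDerivAt_neg (fun t ht => hf t (zero_lt_one.trans_le ht))
      (fun t ht => hφ t (zero_lt_one.trans ht)) hflim).congr_fun
      (fun t ht => (hLsq t (zero_lt_one.trans ht)).symm) measurableSet_Ioi
  · refine tendsto_const_nhds.congr' ?_
    filter_upwards [eventually_gt_atTop 0] with Δ hΔ
    rw [setIntegral_congr_fun measurableSet_Ioi fun t ht => hLsq t (hΔ.trans ht),
      integral_Ioi_of_hasDerivAt_neg (fun t ht => hf t (hΔ.trans_le ht))
        (fun t ht => hφ t (hΔ.trans ht)) hflim, div_self (hfpos Δ hΔ).ne']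

/-- Corollary 6.4, part 2: if `f : (0,∞) → (0,∞)` is continuously differentiable, `f(t) → 0`
as `t → ∞`, and `−f′ ∈ RV_∞(−1)` (i.e. `−f′(t) = t⁻¹ ℓ(t)` with `ℓ` slowly varying), then
`f` is slowly varying, and there is a slowly varying `L : (0,∞) → (0,∞)` with
`∫₁^∞ L(t)²/t dt < ∞` and `∫_Δ^∞ L(s)²/s ds ~ f(Δ)` as `Δ → ∞`. -/
theorem blackScholesLongMemory_arbitrary_decay
    (f f' : ℝ → ℝ)
    (hfpos : ∀ t > (0:ℝ), 0 < f t)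
    (hderiv : ∀ t > (0:ℝ), HasDerivAt f (f' t) t)
    (hf'cont : ContinuousOn f' (Ioi 0))
    (hflim : Tendsto f atTop (nhds 0))
    (ℓ : ℝ → ℝ) (hℓpos : ∀ t > (0:ℝ), 0 < ℓ t) (hℓ : SlowlyVarying ℓ)
    (hRV : ∀ t > (0:ℝ), -f' t = t ^ (-1:ℝ) * ℓ t) :
    SlowlyVarying f ∧
      ∃ L : ℝ → ℝ, (∀ t > (0:ℝ), 0 < L t) ∧ SlowlyVarying L ∧
        IntegrableOn (fun t => L t ^ 2 / t) (Ioi 1) ∧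
        Tendsto (fun Δ => (∫ s in Ioi Δ, L s ^ 2 / s) / f Δ) atTop (nhds 1) :=
  blackScholesLongMemory_arbitrary_decay_general f f' hfpos hderiv hflim ℓ hℓpos hℓ hRV
end

section
/- Let V be defined by the recursion V₁ = σ and V_{n+1} = σ + β Σ_{j=1}^{n} K_{n−j} V_j ξ_j for n ≥ 1, with β ≠ 0. Then the following are equivalent: (A) Σ_{n=0}^∞ K_n² < ∞ and β² Σ_{n=0}^∞ K_n² < 1; (B) V is asymptotically weakly stationary, i.e. E[V_n] converges as n → ∞ and for every Δ ≥ 0 the covariance Cov(V_n, V_{n+Δ}) converges to a finite limit as n → ∞. Moreover, both imply E[V_n] = σ for all n, lim_{n→∞} E[V_n²] = σ²/(1 − β² Σ_{n=0}^∞ K_n²), and for every Δ ≥ 0, lim_{n→∞} Cov(V_n, V_{n+Δ}) = β² · (σ²/(1 − β² Σ_{n=0}^∞ K_n²)) · Σ_{j=0}^∞ K_j K_{j+Δ}. -/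
/-!
`V (n+1)` is a function of `ξ 1, …, ξ n`, hence independent of `ξ (n+1)`. So the innovations
`V j * ξ j` are centred and orthogonal in `L²`, with `E[(V j ξ j)²] = E[V j ²]`. This gives
`E[V n] = σ` and `Cov(V (n+1), V (n+1+Δ)) = β² ∑_{i<n} K i K (i+Δ) E[V (n-i) ²]`; for `Δ = 0`
the second moments `m n = E[V n ²]` solve the renewal equation
`m (n+1) = σ² + ∑_{i<n} a i m (n-i)` with `a i = β² K i ²`.

For nonnegative weights, `m (n+1)` is nondecreasing. If `∑ a < 1` it stays below
`σ² / (1 - ∑ a)` and its limit `M` solves `M = σ² + (∑ a) M`. Conversely, a finite limit bounds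
`σ² ∑_{i<n} a i` and then `M = σ² + (∑ a) M ≥ σ² > 0` forces `∑ a < 1`. The covariances are
convolutions of the absolutely summable weights `β² K i K (i+Δ)` with the convergent `m`, and
converge by dominated convergence.
-/

open MeasureTheory ProbabilityTheory Filter Finset Topology

theorem tendsto_sum_range_mul_sub {a x : ℕ → ℝ} {L : ℝ} (ha : Summable fun i => ‖a i‖)
    (hx : Tendsto x atTop (𝓝 L)) :
    Tendsto (fun n => ∑ i ∈ range n, a i * x (n - i)) atTop (𝓝 ((∑' i, a i) * L)) := by
  obtain ⟨C, hC⟩ := hx.norm.bddAbove_range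
  have hdom := tendsto_tsum_of_dominated_convergence (ha.mul_right C)
    (f := fun n i => if i < n then a i * x (n - i) else 0) (g := fun i => a i * L)
    (fun i => by
      refine ((hx.comp (tendsto_sub_atTop_nat i)).const_mul (a i)).congr' ?_
      filter_upwards [eventually_gt_atTop i] with n hn
      simp [hn])
    (Eventually.of_forall fun n i => by
      split_ifs
      · rw [norm_mul]; gcongr; exact hC ⟨_, rfl⟩
      · simpa using mul_nonneg (norm_nonneg (a i)) ((norm_nonneg _).trans (hC ⟨0, rfl⟩)))
  rw [tsum_mul_right] at hdom
  refine hdom.congr fun n => ?_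
  rw [tsum_eq_sum (s := range n) fun i hi => by simp_all]
  exact sum_congr rfl fun i hi => by simp [mem_range.mp hi]

section Renewal

-- The case `n = 0` reads `m 1 = c`; the value `m 0` never enters.
variable {a m : ℕ → ℝ} {c : ℝ}
  (hrec : ∀ n, m (n + 1) = c + ∑ i ∈ range n, a i * m (n - i))
include hrec

theorem renewal_limit_eq (ha : Summable fun i => ‖a i‖) {M : ℝ} (hm : Tendsto m atTop (𝓝 M)) :
    M = c + (∑' i, a i) * M := by
  refine tendsto_nhds_unique ((tendsto_add_atTop_iff_nat 1).mpr hm) ?_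
  simpa only [hrec] using tendsto_const_nhds.add (tendsto_sum_range_mul_sub ha hm)

theorem renewal_monotone (hc : 0 ≤ c) (ha : ∀ i, 0 ≤ a i) : Monotone fun n => m (n + 1) := by
  refine monotone_nat_of_le_succ fun n => ?_
  induction n using Nat.strong_induction_on with
  | _ n ih =>
    rw [hrec, hrec (n + 1), sum_range_succ, Nat.add_sub_cancel_left, hrec 0, sum_range_zero,
      add_zero]
    have hstep : ∑ i ∈ range n, a i * m (n - i) ≤ ∑ i ∈ range n, a i * m (n + 1 - i) := by
      refine sum_le_sum fun i hi => mul_le_mul_of_nonneg_left ?_ (ha i)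
      obtain ⟨k, rfl⟩ : ∃ k, n = i + k + 1 := ⟨n - i - 1, by have := mem_range.mp hi; omega⟩
      simpa [show i + k + 1 - i = k + 1 by omega, show i + k + 1 + 1 - i = k + 1 + 1 by omega]
        using ih k (by omega)
    nlinarith [ha n]

theorem renewal_le (hc : 0 ≤ c) (ha : ∀ i, 0 ≤ a i) (hs : Summable a) (hs1 : ∑' i, a i < 1)
    (n : ℕ) :
    m (n + 1) ≤ c / (1 - ∑' i, a i) := by
  set B := c / (1 - ∑' i, a i)
  have hB : c + (∑' i, a i) * B = B := by
    have : 1 - ∑' i, a i ≠ 0 := by linarith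
    unfold B; field_simp; ring
  have hB0 : 0 ≤ B := div_nonneg hc (by linarith)
  induction n using Nat.strong_induction_on with
  | _ n ih =>
    calc m (n + 1) = c + ∑ i ∈ range n, a i * m (n - i) := hrec n
      _ ≤ c + ∑ i ∈ range n, a i * B := by
        gcongr with i hi
        · exact ha i
        · obtain ⟨k, rfl⟩ : ∃ k, n = i + k + 1 := ⟨n - i - 1, by have := mem_range.mp hi; omega⟩
          simpa [show i + k + 1 - i = k + 1 by omega] using ih k (by omega)
      _ ≤ c + (∑' i, a i) * B := by
        rw [← sum_mul]; gcongr; exact hs.sum_le_tsum _ fun i _ => ha i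
      _ = B := hB

theorem renewal_tendsto (hc : 0 ≤ c) (ha : ∀ i, 0 ≤ a i) (hs : Summable a) (hs1 : ∑' i, a i < 1) :
    Tendsto m atTop (𝓝 (c / (1 - ∑' i, a i))) := by
  have hbdd : BddAbove (Set.range fun n => m (n + 1)) :=
    ⟨_, Set.forall_mem_range.mpr (renewal_le hrec hc ha hs hs1)⟩
  have hlim := (tendsto_add_atTop_iff_nat 1).mp
    (tendsto_atTop_ciSup (renewal_monotone hrec hc ha) hbdd)
  have hM := renewal_limit_eq hrec (summable_norm_iff.mpr hs) hlim
  have : 1 - ∑' i, a i ≠ 0 := by linarith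
  convert hlim using 2
  field_simp
  linarith

theorem summable_and_tsum_lt_one_of_renewal_tendsto
    (hc : 0 < c) (ha : ∀ i, 0 ≤ a i) {M : ℝ} (hm : Tendsto m atTop (𝓝 M)) :
    Summable a ∧ ∑' i, a i < 1 := by
  obtain ⟨C, hC⟩ := hm.bddAbove_range
  have hmono := renewal_monotone hrec hc.le ha
  have hpartial (n : ℕ) : ∑ i ∈ range n, a i ≤ C / c := by
    rw [le_div_iff₀ hc]
    calc (∑ i ∈ range n, a i) * c ≤ ∑ i ∈ range n, a i * m (n - i) := by
          rw [sum_mul]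
          refine sum_le_sum fun i hi => mul_le_mul_of_nonneg_left ?_ (ha i)
          obtain ⟨k, rfl⟩ : ∃ k, n = i + k + 1 := ⟨n - i - 1, by have := mem_range.mp hi; omega⟩
          simpa [show i + k + 1 - i = k + 1 by omega, hrec 0] using hmono (Nat.zero_le k)
      _ ≤ m (n + 1) := by
          rw [hrec n]; linarith
      _ ≤ C := hC ⟨_, rfl⟩
  have hs : Summable a := summable_of_sum_range_le ha hpartial
  refine ⟨hs, ?_⟩
  have hM := renewal_limit_eq hrec (summable_norm_iff.mpr hs) hm
  have hcM : c ≤ M := ge_of_tendsto ((tendsto_add_atTop_iff_nat 1).mpr hm)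
    (Eventually.of_forall fun n => by simpa [hrec 0] using hmono (Nat.zero_le n))
  nlinarith

end Renewal

theorem summable_norm_mul_of_summable_sq {f g : ℕ → ℝ} (hf : Summable fun i => f i ^ 2)
    (hg : Summable fun i => g i ^ 2) : Summable fun i => ‖f i * g i‖ :=
  (hf.add hg).of_nonneg_of_le (fun i => norm_nonneg _) fun i => by
    rw [norm_mul, Real.norm_eq_abs, Real.norm_eq_abs, ← sq_abs (f i), ← sq_abs (g i)]
    nlinarith [two_mul_le_add_sq |f i| |g i|, abs_nonneg (f i), abs_nonneg (g i)]

theorem ProbabilityTheory.iIndepFun.indepFun_of_measurable_natural {Ω ι β γ : Type*}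
    {mΩ : MeasurableSpace Ω} {μ : Measure Ω} [LinearOrder ι] [MeasurableSpace β]
    [NormedAddCommGroup β] [BorelSpace β] [MeasurableSpace γ] {ξ : ι → Ω → β}
    (hξ : ∀ i, StronglyMeasurable (ξ i)) (hind : iIndepFun ξ μ) {i j : ι} (hij : i < j)
    {f : Ω → γ} (hf : Measurable[Filtration.natural ξ hξ i] f) : IndepFun f (ξ j) μ := by
  rw [IndepFun_iff_Indep]
  exact indep_of_indep_of_le_left (hind.indep_comap_natural_of_lt hξ hij).symm
    (measurable_iff_comap_le.mp hf)

theorem ProbabilityTheory.IndepFun.memLp_two_mul {Ω : Type*} {mΩ : MeasurableSpace Ω}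
    {μ : Measure Ω} {X Y : Ω → ℝ} (h : IndepFun X Y μ) (hX : MemLp X 2 μ) (hY : MemLp Y 2 μ) :
    MemLp (fun ω => X ω * Y ω) 2 μ := by
  rw [memLp_two_iff_integrable_sq (hX.1.fun_mul hY.1)]
  convert (h.comp (measurable_id.pow_const 2) (measurable_id.pow_const 2)).integrable_mul
    hX.integrable_sq hY.integrable_sq using 1
  ext ω
  simp [mul_pow]

theorem Finset.sum_Icc_one_eq_sum_range_sub {M : Type*} [AddCommMonoid M] (f : ℕ → M) (n : ℕ) :
    ∑ j ∈ Icc 1 n, f j = ∑ i ∈ range n, f (n - i) := by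
  rw [← Nat.Ico_zero_eq_range, sum_Ico_reflect f 0 le_self_add, ← Ico_add_one_right_eq_Icc]
  simp

namespace LongMemoryVolatility

-- The products `V j * ξ j` are the innovations of the recursion.
variable {Ω : Type*} {mΩ : MeasurableSpace Ω} {μ : Measure Ω} {ξ : ℕ → Ω → ℝ} {σ β : ℝ}
  {K : ℕ → ℝ} {V : ℕ → Ω → ℝ}
  (hrec : ∀ n ω, V (n + 1) ω = σ + β * ∑ j ∈ Icc 1 n, K (n - j) * (V j ω * ξ j ω))
include hrec

theorem measurable_succ_of_adapted {ℱ : Filtration ℕ mΩ} (hξ : Adapted ℱ ξ) (n : ℕ) :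
    Measurable[ℱ n] (V (n + 1)) := by
  induction n using Nat.strong_induction_on with
  | _ n ih =>
    rw [funext (hrec n)]
    refine measurable_const.add (Measurable.const_mul (Finset.measurable_sum _ fun j hj => ?_) β)
    obtain ⟨i, rfl⟩ := Nat.exists_eq_add_of_le' (mem_Icc.mp hj).1
    have hi : i < n := by have := mem_Icc.mp hj; omega
    exact (((ih i hi).mono (ℱ.mono hi.le) le_rfl).mul
      ((hξ (i + 1)).mono (ℱ.mono hi) le_rfl)).const_mul _

variable (hξ : ∀ n, Measurable (ξ n))
include hξ

theorem measurable_succ (n : ℕ) : Measurable (V (n + 1)) :=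
  (measurable_succ_of_adapted hrec (Filtration.stronglyAdapted_natural
    (fun i => (hξ i).stronglyMeasurable)).adapted n).mono (Filtration.le _ n) le_rfl

variable (hind : iIndepFun ξ μ)
include hind

theorem indepFun_succ (n : ℕ) : IndepFun (V (n + 1)) (ξ (n + 1)) μ :=
  hind.indepFun_of_measurable_natural (fun i => (hξ i).stronglyMeasurable) n.lt_succ_self
    (measurable_succ_of_adapted hrec (Filtration.stronglyAdapted_natural _).adapted n)

theorem integral_innovation (hξmean : ∀ n, ∫ ω, ξ n ω ∂μ = 0) {n : ℕ} (hn : 1 ≤ n) :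
    ∫ ω, V n ω * ξ n ω ∂μ = 0 := by
  obtain ⟨i, rfl⟩ := Nat.exists_eq_add_of_le' hn
  rw [(indepFun_succ hrec hξ hind i).integral_fun_mul_eq_mul_integral
    (measurable_succ hrec hξ i).aestronglyMeasurable (hξ _).aestronglyMeasurable, hξmean, mul_zero]

theorem integral_innovation_mul_innovation_of_lt (hξmean : ∀ n, ∫ ω, ξ n ω ∂μ = 0) {j k : ℕ}
    (hjk : j < k) :
    ∫ ω, V (j + 1) ω * ξ (j + 1) ω * (V (k + 1) ω * ξ (k + 1) ω) ∂μ = 0 := by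
  let ℱ := Filtration.natural ξ fun i => (hξ i).stronglyMeasurable
  have hℱ : Adapted ℱ ξ := (Filtration.stronglyAdapted_natural _).adapted
  have hpast : Measurable[ℱ k] fun ω => V (j + 1) ω * ξ (j + 1) ω * V (k + 1) ω :=
    (((measurable_succ_of_adapted hrec hℱ j).mono (ℱ.mono hjk.le) le_rfl).mul
      ((hℱ (j + 1)).mono (ℱ.mono hjk) le_rfl)).mul (measurable_succ_of_adapted hrec hℱ k)
  simp_rw [← mul_assoc]
  rw [(hind.indepFun_of_measurable_natural _ k.lt_succ_self hpast).integral_fun_mul_eq_mul_integral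
    (hpast.mono (ℱ.le k) le_rfl).aestronglyMeasurable (hξ _).aestronglyMeasurable, hξmean,
    mul_zero]

theorem integral_innovation_sq (hξvar : ∀ n, ∫ ω, ξ n ω ^ 2 ∂μ = 1) (n : ℕ) :
    ∫ ω, V (n + 1) ω * ξ (n + 1) ω * (V (n + 1) ω * ξ (n + 1) ω) ∂μ =
      ∫ ω, V (n + 1) ω ^ 2 ∂μ := by
  have hsq : IndepFun (fun ω => V (n + 1) ω ^ 2) (fun ω => ξ (n + 1) ω ^ 2) μ :=
    (indepFun_succ hrec hξ hind n).comp (measurable_id.pow_const 2) (measurable_id.pow_const 2)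
  simp_rw [← pow_two, mul_pow]
  rw [hsq.integral_fun_mul_eq_mul_integral
    ((measurable_succ hrec hξ n).pow_const 2).aestronglyMeasurable
    ((hξ _).pow_const 2).aestronglyMeasurable]
  simp [hξvar]

theorem memLp_two_succ [IsFiniteMeasure μ] (hξL2 : ∀ n, MemLp (ξ n) 2 μ) (n : ℕ) :
    MemLp (V (n + 1)) 2 μ := by
  induction n using Nat.strong_induction_on with
  | _ n ih =>
    rw [funext (hrec n)]
    have hterm (j) (hj : j ∈ Icc 1 n) : MemLp (fun ω => K (n - j) * (V j ω * ξ j ω)) 2 μ := by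
      obtain ⟨i, rfl⟩ := Nat.exists_eq_add_of_le' (mem_Icc.mp hj).1
      exact ((indepFun_succ hrec hξ hind i).memLp_two_mul
        (ih i (by have := mem_Icc.mp hj; omega)) (hξL2 _)).const_mul _
    exact (memLp_const σ).add ((memLp_finsetSum _ hterm).const_mul β)

theorem memLp_two_innovation [IsFiniteMeasure μ] (hξL2 : ∀ n, MemLp (ξ n) 2 μ) {n : ℕ}
    (hn : 1 ≤ n) : MemLp (fun ω => V n ω * ξ n ω) 2 μ := by
  obtain ⟨i, rfl⟩ := Nat.exists_eq_add_of_le' hn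
  exact (indepFun_succ hrec hξ hind i).memLp_two_mul (memLp_two_succ hrec hξ hind hξL2 i) (hξL2 _)

variable [IsProbabilityMeasure μ] (hξL2 : ∀ n, MemLp (ξ n) 2 μ)
  (hξmean : ∀ n, ∫ ω, ξ n ω ∂μ = 0)
include hξL2 hξmean

theorem integral_succ (n : ℕ) : ∫ ω, V (n + 1) ω ∂μ = σ := by
  have hint (j) (hj : j ∈ Icc 1 n) : Integrable (fun ω => K (n - j) * (V j ω * ξ j ω)) μ :=
    ((memLp_two_innovation hrec hξ hind hξL2 (mem_Icc.mp hj).1).integrable one_le_two).const_mul _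
  rw [funext (hrec n), integral_add (integrable_const σ)
    ((integrable_finsetSum _ hint).const_mul β), integral_const_mul, integral_finsetSum _ hint,
    sum_eq_zero fun j hj => by
      rw [integral_const_mul, integral_innovation hrec hξ hind hξmean (mem_Icc.mp hj).1, mul_zero]]
  simp

variable (hξvar : ∀ n, ∫ ω, ξ n ω ^ 2 ∂μ = 1)
include hξvar

theorem covariance_innovation {j k : ℕ} (hj : 1 ≤ j) (hk : 1 ≤ k) :
    cov[fun ω => V j ω * ξ j ω, fun ω => V k ω * ξ k ω; μ] =
      if j = k then ∫ ω, V j ω ^ 2 ∂μ else 0 := by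
  wlog hjk : j ≤ k generalizing j k
  · rw [covariance_comm, this hk hj (by omega), if_neg (by omega), if_neg (by omega)]
  rw [covariance_eq_sub (memLp_two_innovation hrec hξ hind hξL2 hj)
    (memLp_two_innovation hrec hξ hind hξL2 hk)]
  simp only [Pi.mul_apply, integral_innovation hrec hξ hind hξmean hj, zero_mul, sub_zero]
  obtain ⟨j, rfl⟩ := Nat.exists_eq_add_of_le' hj
  obtain ⟨k, rfl⟩ := Nat.exists_eq_add_of_le' hk
  rcases (Nat.le_of_add_le_add_right hjk).lt_or_eq with hlt | rfl
  · rw [integral_innovation_mul_innovation_of_lt hrec hξ hind hξmean hlt, if_neg (by omega)]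
  · rw [integral_innovation_sq hrec hξ hind hξvar, if_pos rfl]

theorem covariance_sum_innovations (u v : ℕ → ℝ) {n p : ℕ} (hnp : n ≤ p) :
    cov[fun ω => ∑ j ∈ Icc 1 n, u j * (V j ω * ξ j ω),
        fun ω => ∑ j ∈ Icc 1 p, v j * (V j ω * ξ j ω); μ] =
      ∑ j ∈ Icc 1 n, u j * v j * ∫ ω, V j ω ^ 2 ∂μ := by
  have hW (w : ℕ → ℝ) (j) (hj : j ∈ Icc 1 p) : MemLp (fun ω => w j * (V j ω * ξ j ω)) 2 μ :=
    (memLp_two_innovation hrec hξ hind hξL2 (mem_Icc.mp hj).1).const_mul _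
  rw [covariance_fun_sum_fun_sum' (fun j hj => hW u j (Icc_subset_Icc_right hnp hj)) (hW v)]
  refine sum_congr rfl fun j hj => ?_
  have hj' := mem_Icc.mp hj
  simp_rw [covariance_const_mul_left, covariance_const_mul_right]
  rw [← mul_sum, sum_congr rfl fun k hk => congrArg (v k * ·)
    (covariance_innovation hrec hξ hind hξL2 hξmean hξvar hj'.1 (mem_Icc.mp hk).1)]
  simp_rw [mul_ite, mul_zero]
  rw [sum_ite_eq, if_pos (mem_Icc.mpr ⟨hj'.1, hj'.2.trans hnp⟩), mul_assoc]

theorem covariance_succ_add (n Δ : ℕ) :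
    cov[V (n + 1), V (n + 1 + Δ); μ] =
      ∑ i ∈ range n, β ^ 2 * (K i * K (i + Δ)) * ∫ ω, V (n - i) ω ^ 2 ∂μ := by
  have hint (p : ℕ) :
      Integrable (fun ω => β * ∑ j ∈ Icc 1 p, K (p - j) * (V j ω * ξ j ω)) μ :=
    ((memLp_finsetSum _ fun j hj => (memLp_two_innovation hrec hξ hind hξL2
      (mem_Icc.mp hj).1).const_mul _).const_mul β).integrable one_le_two
  rw [show n + 1 + Δ = n + Δ + 1 by omega, funext (hrec n), funext (hrec (n + Δ)),
    covariance_const_add_left (hint n), covariance_const_add_right (hint (n + Δ)),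
    covariance_const_mul_left, covariance_const_mul_right,
    covariance_sum_innovations hrec hξ hind hξL2 hξmean hξvar _ _ (Nat.le_add_right n Δ),
    sum_Icc_one_eq_sum_range_sub, mul_sum, mul_sum]
  refine sum_congr rfl fun i hi => ?_
  rw [show n + Δ - (n - i) = i + Δ by have := mem_range.mp hi; omega,
    show n - (n - i) = i by have := mem_range.mp hi; omega]
  ring

theorem integral_mul_sub_succ_add (n Δ : ℕ) :
    ∫ ω, V (n + 1) ω * V (n + 1 + Δ) ω ∂μ - (∫ ω, V (n + 1) ω ∂μ) * ∫ ω, V (n + 1 + Δ) ω ∂μ =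
      ∑ i ∈ range n, β ^ 2 * (K i * K (i + Δ)) * ∫ ω, V (n - i) ω ^ 2 ∂μ := by
  have hL2 := memLp_two_succ hrec hξ hind hξL2 (n + Δ)
  rw [show n + Δ + 1 = n + 1 + Δ by omega] at hL2
  rw [← covariance_succ_add hrec hξ hind hξL2 hξmean hξvar,
    covariance_eq_sub (memLp_two_succ hrec hξ hind hξL2 n) hL2]
  rfl

theorem integral_sq_succ (n : ℕ) :
    ∫ ω, V (n + 1) ω ^ 2 ∂μ =
      σ ^ 2 + ∑ i ∈ range n, β ^ 2 * K i ^ 2 * ∫ ω, V (n - i) ω ^ 2 ∂μ := by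
  have h := integral_mul_sub_succ_add hrec hξ hind hξL2 hξmean hξvar n 0
  simp only [add_zero, integral_succ hrec hξ hind hξL2 hξmean, ← pow_two] at h
  linarith

theorem tendsto_integral_sq (hK : Summable fun n => K n ^ 2) (hlt : β ^ 2 * ∑' n, K n ^ 2 < 1) :
    Tendsto (fun n => ∫ ω, V n ω ^ 2 ∂μ) atTop (𝓝 (σ ^ 2 / (1 - β ^ 2 * ∑' n, K n ^ 2))) := by
  rw [← tsum_mul_left] at hlt ⊢
  exact renewal_tendsto (integral_sq_succ hrec hξ hind hξL2 hξmean hξvar) (sq_nonneg σ)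
    (fun i => by positivity) (hK.mul_left _) hlt

theorem tendsto_covariance (hK : Summable fun n => K n ^ 2) (hlt : β ^ 2 * ∑' n, K n ^ 2 < 1)
    (Δ : ℕ) :
    Tendsto (fun n => ∫ ω, V n ω * V (n + Δ) ω ∂μ - (∫ ω, V n ω ∂μ) * ∫ ω, V (n + Δ) ω ∂μ)
      atTop (𝓝 (β ^ 2 * (σ ^ 2 / (1 - β ^ 2 * ∑' n, K n ^ 2)) * ∑' j, K j * K (j + Δ))) := by
  have hb : Summable fun i => ‖β ^ 2 * (K i * K (i + Δ))‖ := by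
    simpa only [norm_mul, norm_pow, Real.norm_eq_abs, sq_abs] using
      (summable_norm_mul_of_summable_sq hK ((summable_nat_add_iff Δ).mpr hK)).mul_left (β ^ 2)
  rw [← tendsto_add_atTop_iff_nat 1]
  simp_rw [integral_mul_sub_succ_add hrec hξ hind hξL2 hξmean hξvar]
  convert tendsto_sum_range_mul_sub hb
    (tendsto_integral_sq hrec hξ hind hξL2 hξmean hξvar hK hlt) using 2
  rw [tsum_mul_left]
  ring

theorem summable_sq_of_tendsto_variance (hσ : σ ≠ 0) (hβ : β ≠ 0) {v : ℝ}
    (hv : Tendsto (fun n => ∫ ω, V n ω * V n ω ∂μ - (∫ ω, V n ω ∂μ) * ∫ ω, V n ω ∂μ) atTop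
      (𝓝 v)) :
    Summable (fun n => K n ^ 2) ∧ β ^ 2 * ∑' n, K n ^ 2 < 1 := by
  have hm : Tendsto (fun n => ∫ ω, V n ω ^ 2 ∂μ) atTop (𝓝 (v + σ ^ 2)) := by
    refine (tendsto_add_atTop_iff_nat 1).mp
      ((((tendsto_add_atTop_iff_nat 1).mpr hv).add_const (σ ^ 2)).congr fun n => ?_)
    simp only [integral_succ hrec hξ hind hξL2 hξmean, ← pow_two]
    ring
  obtain ⟨hs, hlt⟩ := summable_and_tsum_lt_one_of_renewal_tendsto
    (integral_sq_succ hrec hξ hind hξL2 hξmean hξvar) (pow_two_pos_of_ne_zero hσ)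
    (fun i => mul_nonneg (sq_nonneg β) (sq_nonneg (K i))) hm
  rw [tsum_mul_left] at hlt
  exact ⟨(summable_mul_left_iff (pow_ne_zero 2 hβ)).mp hs, hlt⟩

end LongMemoryVolatility

theorem blackScholesLongMemory_discrete_stationarity_general
    {Ω : Type*} [MeasurableSpace Ω] (μ : Measure Ω) [IsProbabilityMeasure μ]
    (ξ : ℕ → Ω → ℝ) (hξmeas : ∀ n, Measurable (ξ n))
    (hindep : iIndepFun ξ μ)
    (hξL2 : ∀ n, MemLp (ξ n) 2 μ)
    (hξmean : ∀ n, ∫ ω, ξ n ω ∂μ = 0)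
    (hξvar : ∀ n, ∫ ω, (ξ n ω) ^ 2 ∂μ = 1)
    (σ β : ℝ) (hσ : 0 < σ) (hβ : β ≠ 0)
    (K : ℕ → ℝ)
    (V : ℕ → Ω → ℝ)
    (hV1 : ∀ ω, V 1 ω = σ)
    (hVrec : ∀ n ≥ 1, ∀ ω,
      V (n + 1) ω = σ + β * ∑ j ∈ Finset.Icc 1 n, K (n - j) * (V j ω * ξ j ω)) :
    ((Summable (fun n => K n ^ 2) ∧ β ^ 2 * ∑' n : ℕ, K n ^ 2 < 1) ↔
      ((∃ θ : ℝ, Tendsto (fun n => ∫ ω, V n ω ∂μ) atTop (nhds θ)) ∧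
        ∀ Δ : ℕ, ∃ g : ℝ, Tendsto
          (fun n => (∫ ω, V n ω * V (n + Δ) ω ∂μ) -
            (∫ ω, V n ω ∂μ) * ∫ ω, V (n + Δ) ω ∂μ) atTop (nhds g))) ∧
    ((Summable (fun n => K n ^ 2) ∧ β ^ 2 * ∑' n : ℕ, K n ^ 2 < 1) →
      (∀ n ≥ 1, ∫ ω, V n ω ∂μ = σ) ∧
      Tendsto (fun n => ∫ ω, (V n ω) ^ 2 ∂μ) atTop
        (nhds (σ ^ 2 / (1 - β ^ 2 * ∑' n : ℕ, K n ^ 2))) ∧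
      ∀ Δ : ℕ, Tendsto
        (fun n => (∫ ω, V n ω * V (n + Δ) ω ∂μ) -
          (∫ ω, V n ω ∂μ) * ∫ ω, V (n + Δ) ω ∂μ) atTop
        (nhds (β ^ 2 * (σ ^ 2 / (1 - β ^ 2 * ∑' n : ℕ, K n ^ 2)) *
          ∑' j : ℕ, K j * K (j + Δ)))) := by
  have hrec : ∀ n ω, V (n + 1) ω = σ + β * ∑ j ∈ Icc 1 n, K (n - j) * (V j ω * ξ j ω) := by
    rintro (_ | n) ω
    · simp [hV1]
    · exact hVrec (n + 1) n.succ_pos ω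
  have hmean (n : ℕ) (hn : 1 ≤ n) : ∫ ω, V n ω ∂μ = σ := by
    obtain ⟨k, rfl⟩ := Nat.exists_eq_add_of_le' hn
    exact LongMemoryVolatility.integral_succ hrec hξmeas hindep hξL2 hξmean k
  have hcov (hK : Summable fun n => K n ^ 2) (hlt : β ^ 2 * ∑' n, K n ^ 2 < 1) :=
    LongMemoryVolatility.tendsto_covariance hrec hξmeas hindep hξL2 hξmean hξvar hK hlt
  refine ⟨⟨fun ⟨hK, hlt⟩ => ⟨⟨σ, ?_⟩, fun Δ => ⟨_, hcov hK hlt Δ⟩⟩, fun ⟨_, hstat⟩ => ?_⟩,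
    fun ⟨hK, hlt⟩ => ⟨hmean, ?_, hcov hK hlt⟩⟩
  · exact tendsto_const_nhds.congr' <| (eventually_ge_atTop 1).mono fun n hn => (hmean n hn).symm
  · obtain ⟨v, hv⟩ := hstat 0
    exact LongMemoryVolatility.summable_sq_of_tendsto_variance hrec hξmeas hindep hξL2 hξmean
      hξvar hσ.ne' hβ hv
  · exact LongMemoryVolatility.tendsto_integral_sq hrec hξmeas hindep hξL2 hξmean hξvar hK hlt

/-- Discrete-time analogue of Theorem 5.3 (end of Section 7): for the volatility recursion
`V₁ = σ`, `V_{n+1} = σ + β ∑_{j=1}^n K_{n−j} V_j ξ_j` with `β ≠ 0`, the conditions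
`∑ K_n² < ∞` and `β² ∑ K_n² < 1` together are equivalent to asymptotic weak stationarity
of `V`; moreover they imply `E[V_n] = σ`,
`E[V_n²] → σ²/(1 − β² ∑ K_n²)` and
`Cov(V_n, V_{n+Δ}) → β² (σ²/(1 − β² ∑ K_n²)) ∑_j K_j K_{j+Δ}`. -/
theorem blackScholesLongMemory_discrete_stationarity
    {Ω : Type*} [MeasurableSpace Ω] (μ : Measure Ω) [IsProbabilityMeasure μ]
    (ξ : ℕ → Ω → ℝ) (hξmeas : ∀ n, Measurable (ξ n))
    (hindep : iIndepFun ξ μ)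
    (hid : ∀ n m, IdentDistrib (ξ n) (ξ m) μ μ)
    (hξL2 : ∀ n, MemLp (ξ n) 2 μ)
    (hξmean : ∀ n, ∫ ω, ξ n ω ∂μ = 0)
    (hξvar : ∀ n, ∫ ω, (ξ n ω) ^ 2 ∂μ = 1)
    (σ β : ℝ) (hσ : 0 < σ) (hβ : β ≠ 0)
    (K : ℕ → ℝ) (hK : ∀ n, 0 ≤ K n)
    (V : ℕ → Ω → ℝ)
    (hV1 : ∀ ω, V 1 ω = σ)
    (hVrec : ∀ n ≥ 1, ∀ ω,
      V (n + 1) ω = σ + β * ∑ j ∈ Finset.Icc 1 n, K (n - j) * (V j ω * ξ j ω)) :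
    ((Summable (fun n => K n ^ 2) ∧ β ^ 2 * ∑' n : ℕ, K n ^ 2 < 1) ↔
      ((∃ θ : ℝ, Tendsto (fun n => ∫ ω, V n ω ∂μ) atTop (nhds θ)) ∧
        ∀ Δ : ℕ, ∃ g : ℝ, Tendsto
          (fun n => (∫ ω, V n ω * V (n + Δ) ω ∂μ) -
            (∫ ω, V n ω ∂μ) * ∫ ω, V (n + Δ) ω ∂μ) atTop (nhds g))) ∧
    ((Summable (fun n => K n ^ 2) ∧ β ^ 2 * ∑' n : ℕ, K n ^ 2 < 1) →
      (∀ n ≥ 1, ∫ ω, V n ω ∂μ = σ) ∧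
      Tendsto (fun n => ∫ ω, (V n ω) ^ 2 ∂μ) atTop
        (nhds (σ ^ 2 / (1 - β ^ 2 * ∑' n : ℕ, K n ^ 2))) ∧
      ∀ Δ : ℕ, Tendsto
        (fun n => (∫ ω, V n ω * V (n + Δ) ω ∂μ) -
          (∫ ω, V n ω ∂μ) * ∫ ω, V (n + Δ) ω ∂μ) atTop
        (nhds (β ^ 2 * (σ ^ 2 / (1 - β ^ 2 * ∑' n : ℕ, K n ^ 2)) *
          ∑' j : ℕ, K j * K (j + Δ)))) :=
  blackScholesLongMemory_discrete_stationarity_general μ ξ hξmeas hindep hξL2 hξmean hξvar σ β hσ hβ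
    K V hV1 hVrec
end

section
/- Let (a_n)_{n≥0} be a nonnegative summable sequence and set K_n := Σ_{j=n+1}^∞ a_j for n ≥ 0. Suppose Σ_{n=0}^∞ K_n² < ∞ and β² Σ_{n=0}^∞ K_n² < 1 with β ≠ 0, σ ≠ 0, and define γ(Δ) := β² · (σ²/(1 − β² Σ_{n=0}^∞ K_n²)) · Σ_{j=0}^∞ K_j K_{j+Δ} for Δ ∈ ℕ. Then Σ_{Δ=0}^∞ γ(Δ) = +∞ (γ is not summable) if and only if Σ_{j=0}^∞ j a_j = +∞. -/
open Filter

private lemma aux_shift_summable {a : ℕ → ℝ} (hsum : Summable a) (n : ℕ) :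
    Summable (fun j => a (n + 1 + j)) :=
  hsum.comp_injective (fun x y h => by omega)

/-- K as tsum of an indicator. -/
private lemma aux_K_ind {a : ℕ → ℝ} (_hsum : Summable a)
    {K : ℕ → ℝ} (hK : ∀ n, K n = ∑' j : ℕ, a (n + 1 + j)) (n : ℕ) :
    K n = ∑' m : ℕ, Set.indicator {m | n < m} a m := by
  rw [hK n]
  have hinj : Function.Injective (fun j : ℕ => n + 1 + j) := fun x y h => by
    simpa using h
  have := hinj.tsum_eq (f := Set.indicator {m | n < m} a) (by
    intro x hx
    rcases lt_or_ge n x with h | h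
    · exact Set.mem_range.mpr ⟨x - (n+1), by omega⟩
    · exact absurd (Set.indicator_of_notMem (by simpa using not_lt.mpr h) a)
        (Function.mem_support.mp hx))
  rw [← this]
  refine tsum_congr fun j => ?_
  rw [Set.indicator_of_mem]
  exact Nat.lt_of_lt_of_le (Nat.lt_succ_self n) (by omega)

private lemma aux_sum_ind (a : ℕ → ℝ) {m N : ℕ} (h : m ≤ N) :
    ∑ n ∈ Finset.range N, Set.indicator {m' | n < m'} a m = (m : ℝ) * a m := by
  have : ∀ n : ℕ, Set.indicator {m' | n < m'} a m = if n < m then a m else 0 := by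
    intro n
    simp [Set.indicator_apply, Set.mem_setOf_eq]
  simp_rw [this, ← Finset.sum_filter]
  have : Finset.filter (fun n => n < m) (Finset.range N) = Finset.range m := by
    ext x; simp; omega
  rw [this]
  simp [mul_comm]

/-- Discrete long-memory characterisation (end of Section 7): with `K_n = ∑_{j=n+1}^∞ a_j`
for a nonnegative summable sequence `(a_n)`, `∑ K_n² < ∞` and `β² ∑ K_n² < 1`, the limiting
autocovariance function `γ(Δ) = β² (σ²/(1 − β² ∑ K_n²)) ∑_j K_j K_{j+Δ}` is not summable
(i.e. `∑_Δ γ(Δ) = +∞`) if and only if `∑_j j a_j = +∞`. -/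
theorem blackScholesLongMemory_discrete_long_memory
    (σ β : ℝ) (hσ : σ ≠ 0) (hβ : β ≠ 0)
    (a : ℕ → ℝ) (ha : ∀ n, 0 ≤ a n) (hsum : Summable a)
    (K : ℕ → ℝ) (hK : ∀ n, K n = ∑' j : ℕ, a (n + 1 + j))
    (hK2 : Summable (fun n => K n ^ 2))
    (hsmall : β ^ 2 * ∑' n : ℕ, K n ^ 2 < 1) :
    ¬ Summable (fun Δ : ℕ =>
        β ^ 2 * (σ ^ 2 / (1 - β ^ 2 * ∑' n : ℕ, K n ^ 2)) * ∑' j : ℕ, K j * K (j + Δ)) ↔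
      ¬ Summable (fun j : ℕ => (j : ℝ) * a j) := by
  -- basic facts about K
  have hK0 : ∀ n, 0 ≤ K n := by
    intro n; rw [hK n]; exact tsum_nonneg fun j => ha _
  have hKanti : Antitone K := by
    refine antitone_nat_of_succ_le fun n => ?_
    have hs := aux_shift_summable hsum n
    have : K n = a (n + 1) + ∑' j : ℕ, a (n + 1 + (j + 1)) := by
      rw [hK n, Summable.tsum_eq_zero_add hs]
    rw [this]
    have : (∑' j : ℕ, a (n + 1 + (j + 1))) = K (n + 1) := by
      rw [hK (n + 1)]
      exact tsum_congr fun j => by ring_nf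
    rw [this]
    nlinarith [ha (n + 1)]
  -- the constant is nonzero
  set S := ∑' n : ℕ, K n ^ 2 with hS
  have hS0 : 0 ≤ S := by rw [hS]; exact tsum_nonneg fun n => sq_nonneg _
  have hSpos : 0 ≤ β ^ 2 * S := mul_nonneg (sq_nonneg β) hS0
  have hc : β ^ 2 * (σ ^ 2 / (1 - β ^ 2 * S)) ≠ 0 := by
    have h1 : 0 < 1 - β ^ 2 * S := by linarith
    have hb2 : (0:ℝ) < β ^ 2 := by positivity
    have hs2 : (0:ℝ) < σ ^ 2 := by positivity
    exact ne_of_gt (mul_pos hb2 (div_pos hs2 h1))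
  -- per-Δ summability
  have hTsumm : ∀ Δ : ℕ, Summable (fun j => K j * K (j + Δ)) := by
    intro Δ
    refine Summable.of_nonneg_of_le (fun j => mul_nonneg (hK0 j) (hK0 _)) (fun j => ?_) hK2
    have := hKanti (Nat.le_add_right j Δ)
    calc K j * K (j + Δ) ≤ K j * K j := mul_le_mul_of_nonneg_left this (hK0 j)
    _ = K j ^ 2 := (sq (K j)).symm
  have hTnonneg : ∀ Δ : ℕ, 0 ≤ ∑' j : ℕ, K j * K (j + Δ) :=
    fun Δ => tsum_nonneg fun j => mul_nonneg (hK0 j) (hK0 _)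
  rw [summable_mul_left_iff hc]
  -- key equivalence 1 : Summable T ↔ Summable K
  have hTK : Summable (fun Δ : ℕ => ∑' j : ℕ, K j * K (j + Δ)) ↔ Summable K := by
    constructor
    · intro hT
      by_cases h0 : K 0 = 0
      · have : ∀ n, K n = 0 := fun n =>
          le_antisymm (h0 ▸ hKanti (Nat.zero_le n)) (hK0 n)
        exact (summable_congr fun n => (this n).symm).mp summable_zero
      · have h0' : 0 < K 0 := lt_of_le_of_ne (hK0 0) (Ne.symm h0)
        have hle : ∀ Δ, K Δ ≤ (K 0)⁻¹ * ∑' j : ℕ, K j * K (j + Δ) := by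
          intro Δ
          have h1 : K 0 * K (0 + Δ) ≤ ∑' j : ℕ, K j * K (j + Δ) :=
            Summable.le_tsum (hTsumm Δ) 0 fun j _ => mul_nonneg (hK0 j) (hK0 _)
          rw [zero_add] at h1
          exact (le_inv_mul_iff₀ h0').mpr h1
        exact Summable.of_nonneg_of_le hK0 hle (hT.mul_left _)
    · intro hKs
      refine Summable.of_nonneg_of_le hTnonneg (fun Δ => ?_) (hKs.mul_left (∑' n, K n))
      have hle : ∀ j, K j * K (j + Δ) ≤ K j * K Δ := fun j =>
        mul_le_mul_of_nonneg_left (hKanti (Nat.le_add_left Δ j)) (hK0 j)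
      calc (∑' j : ℕ, K j * K (j + Δ)) ≤ ∑' j : ℕ, K j * K Δ :=
            Summable.tsum_le_tsum hle (hTsumm Δ) (hKs.mul_right _)
      _ = (∑' n, K n) * K Δ := tsum_mul_right
  rw [hTK]
  -- key equivalence 2 : Summable K ↔ Summable (j * a j)
  have hind : ∀ n : ℕ, Summable (fun m => Set.indicator {m' | n < m'} a m) :=
    fun n => hsum.indicator _
  have hKeq : ∀ n, K n = ∑' m : ℕ, Set.indicator {m' | n < m'} a m :=
    aux_K_ind hsum hK
  -- bound on sums of indicators
  have haux_le : ∀ (N m : ℕ),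
      ∑ n ∈ Finset.range N, Set.indicator {m' | n < m'} a m ≤ (m : ℝ) * a m := by
    intro N m
    have : ∀ n : ℕ, Set.indicator {m' | n < m'} a m = if n < m then a m else 0 := by
      intro n
      simp [Set.indicator_apply, Set.mem_setOf_eq]
    simp_rw [this, ← Finset.sum_filter]
    have hcard : (Finset.filter (fun n => n < m) (Finset.range N)).card ≤ m := by
      calc (Finset.filter (fun n => n < m) (Finset.range N)).card
          ≤ (Finset.range m).card := Finset.card_le_card
            (fun x hx => Finset.mem_range.mpr (Finset.mem_filter.mp hx).2)
      _ = m := Finset.card_range m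
    rw [Finset.sum_const, nsmul_eq_mul]
    exact mul_le_mul_of_nonneg_right (by exact_mod_cast hcard) (ha m)
  refine not_congr ⟨fun hKs => ?_, fun hjas => ?_⟩
  · -- Summable K → Summable (j * a j)
    refine summable_of_sum_range_le (c := ∑' n, K n)
      (fun m => mul_nonneg (Nat.cast_nonneg m) (ha m)) (fun N => ?_)
    have h1 : ∑ m ∈ Finset.range N, (m : ℝ) * a m
        = ∑ n ∈ Finset.range N, ∑ m ∈ Finset.range N, Set.indicator {m' | n < m'} a m := by
      rw [Finset.sum_comm]
      exact Finset.sum_congr rfl fun m hm =>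
        (aux_sum_ind a (le_of_lt (Finset.mem_range.mp hm))).symm
    rw [h1]
    calc ∑ n ∈ Finset.range N, ∑ m ∈ Finset.range N, Set.indicator {m' | n < m'} a m
        ≤ ∑ n ∈ Finset.range N, K n := by
          refine Finset.sum_le_sum fun n _ => ?_
          rw [hKeq n]
          exact Summable.sum_le_tsum _ (fun m _ => Set.indicator_nonneg (fun m' _ => ha m') m) (hind n)
    _ ≤ ∑' n, K n := Summable.sum_le_tsum _ (fun n _ => hK0 n) hKs
  · -- Summable (j * a j) → Summable K
    refine summable_of_sum_range_le (c := ∑' m : ℕ, (m : ℝ) * a m) hK0 (fun N => ?_)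
    have h1 : ∑ n ∈ Finset.range N, K n
        = ∑' m : ℕ, ∑ n ∈ Finset.range N, Set.indicator {m' | n < m'} a m := by
      rw [Summable.tsum_finsetSum (fun n _ => hind n)]
      exact Finset.sum_congr rfl fun n _ => hKeq n
    rw [h1]
    refine Summable.tsum_le_tsum (fun m => haux_le N m) (summable_sum fun n _ => hind n) hjas
end
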